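/- arXiv:2402.10335 — 10 statements merged into one kernel-verified Lean document; each statement's English description precedes it below -/
import Mathlib

section
/- Let G = (V, E) be a simple graph and k ≥ 1 an integer. Let H be the simple graph on vertex set V ∪ {a} (a a new vertex) whose edge set is exactly {av : v ∈ V}, and let the terminal pair set be S = E. Then G admits a proper k-coloring if and only if the Multicut with Vertex Splitting instance (H, S, k − 1) admits a sequence of at most k − 1 exclusive vertex splits separating every surviving terminal pair. -/
structure SG where
  verts : Finset ℕ
  edges : Finset (Sym2 ℕ)
  edges_mem : ∀ e ∈ edges, ∀ x ∈ e, x ∈ verts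
  edges_nd : ∀ e ∈ edges, ¬ e.IsDiag

/-- One exclusive vertex split, on a state consisting of the current graph together
with the set of vertex names used so far (to guarantee freshness of new vertices). -/
def ExclStep (p q : SG × Finset ℕ) : Prop :=
  ∃ v v1 v2 : ℕ, v ∈ p.1.verts ∧ v1 ∉ p.2 ∧ v2 ∉ p.2 ∧ v1 ∉ p.1.verts ∧ v2 ∉ p.1.verts ∧
    v1 ≠ v2 ∧
    q.2 = insert v1 (insert v2 p.2) ∧
    q.1.verts = insert v1 (insert v2 (p.1.verts.erase v)) ∧
    (∀ u w : ℕ, u ≠ v → w ≠ v → u ≠ v1 → u ≠ v2 → w ≠ v1 → w ≠ v2 →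
      (s(u,w) ∈ p.1.edges ↔ s(u,w) ∈ q.1.edges)) ∧
    (∀ u : ℕ, s(u,v) ∈ p.1.edges ↔ (s(u,v1) ∈ q.1.edges ∨ s(u,v2) ∈ q.1.edges)) ∧
    (∀ u : ℕ, ¬ (s(u,v1) ∈ q.1.edges ∧ s(u,v2) ∈ q.1.edges))

def Reach (H : SG) (x y : ℕ) : Prop :=
  Relation.ReflTransGen (fun a b => s(a,b) ∈ H.edges) x y

/-- A solution of the Multicut with Vertex Splitting instance `(H, S, k)`:
a sequence of at most `k` exclusive vertex splits after which every terminal pair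
both of whose endpoints are unsplit (i.e., still present) lies in different
connected components. -/
def MCSolution (H : SG) (S : Finset (Sym2 ℕ)) (k : ℕ) : Prop :=
  ∃ (n : ℕ) (f : ℕ → SG × Finset ℕ), n ≤ k ∧ f 0 = (H, H.verts) ∧
    (∀ i < n, ExclStep (f i) (f (i+1))) ∧
    ∀ e ∈ S, ∀ x y : ℕ, e = s(x,y) →
      x ∈ (f n).1.verts → y ∈ (f n).1.verts → ¬ Reach (f n).1 x y

lemma edge_left {P : SG} {u w : ℕ} (h : s(u,w) ∈ P.edges) : u ∈ P.verts :=
  P.edges_mem _ h u (Sym2.mem_iff.mpr (Or.inl rfl))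

lemma edge_right {P : SG} {u w : ℕ} (h : s(u,w) ∈ P.edges) : w ∈ P.verts :=
  P.edges_mem _ h w (Sym2.mem_iff.mpr (Or.inr rfl))

lemma edge_swap {P : SG} {u w : ℕ} (h : s(u,w) ∈ P.edges) : s(w,u) ∈ P.edges := by
  rwa [Sym2.eq_swap]

lemma edge_ne {P : SG} {u w : ℕ} (h : s(u,w) ∈ P.edges) : u ≠ w := by
  intro he; exact P.edges_nd _ h (Sym2.mk_isDiag_iff.mpr he)

lemma reach_symm {P : SG} {x y : ℕ} (h : Reach P x y) : Reach P y x := by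
  induction h with
  | refl => exact .refl
  | tail _ hbc ih => exact Relation.ReflTransGen.head (edge_swap hbc) ih

lemma reach_mem_right {P : SG} {x y : ℕ} (h : Reach P x y) : x = y ∨ y ∈ P.verts := by
  induction h with
  | refl => exact Or.inl rfl
  | tail _ hbc _ => exact Or.inr (edge_right hbc)

open Classical in
lemma step_colors (G : SG) (p q : SG × Finset ℕ) (hstep : ExclStep p q)
    (hGp : G.verts ⊆ p.2) (hVp : p.1.verts ⊆ p.2) (c : ℕ → ℕ)
    (h1 : ∀ u w : ℕ, s(u,w) ∈ p.1.edges → c u = c w)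
    (h2 : ∀ u ∈ G.verts, ∀ w ∈ G.verts, c u = c w → u ≠ w →
       u ∈ p.1.verts ∧ w ∈ p.1.verts ∧ Reach p.1 u w)
    (h4 : ∀ z ∈ G.verts, ∀ y y' : ℕ, s(y,z) ∈ p.1.edges → s(y',z) ∈ p.1.edges → y = y') :
    ∃ (c' : ℕ → ℕ) (t : ℕ),
      (∀ z ∈ G.verts, c' z = c z ∨ c' z = t) ∧
      (∀ u w : ℕ, s(u,w) ∈ q.1.edges → c' u = c' w) ∧
      (∀ u ∈ G.verts, ∀ w ∈ G.verts, c' u = c' w → u ≠ w →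
        u ∈ q.1.verts ∧ w ∈ q.1.verts ∧ Reach q.1 u w) ∧
      (∀ z ∈ G.verts, ∀ y y' : ℕ, s(y,z) ∈ q.1.edges → s(y',z) ∈ q.1.edges → y = y') := by
  classical
  obtain ⟨v, v1, v2, hv, hv1u, hv2u, hv1p, hv2p, h12, hq2, hqv, e1, e2, e3⟩ := hstep
  have hv1G : v1 ∉ G.verts := fun h => hv1u (hGp h)
  have hv2G : v2 ∉ G.verts := fun h => hv2u (hGp h)
  have hvv1 : v ≠ v1 := fun h => hv1p (h ▸ hv)
  have hvv2 : v ≠ v2 := fun h => hv2p (h ▸ hv)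
  have hvq : v ∉ q.1.verts := by
    rw [hqv]; simp [Finset.mem_insert, Finset.mem_erase, hvv1, hvv2]
  have memq : ∀ {u w : ℕ}, s(u,w) ∈ q.1.edges → u ≠ v := fun h hu => hvq (hu ▸ edge_left h)
  have pne1 : ∀ {u w : ℕ}, s(u,w) ∈ p.1.edges → u ≠ v1 := fun h hu => hv1p (hu ▸ edge_left h)
  have pne2 : ∀ {u w : ℕ}, s(u,w) ∈ p.1.edges → u ≠ v2 := fun h hu => hv2p (hu ▸ edge_left h)
  have qP : ∀ {u w : ℕ}, s(u,w) ∈ q.1.edges → u ≠ v1 → u ≠ v2 → w ≠ v1 → w ≠ v2 →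
      s(u,w) ∈ p.1.edges := fun h a b d e =>
    (e1 _ _ (memq h) (memq (edge_swap h)) a b d e).mpr h
  have pQ : ∀ {u w : ℕ}, s(u,w) ∈ p.1.edges → u ≠ v → w ≠ v → s(u,w) ∈ q.1.edges :=
    fun h a b => (e1 _ _ a b (pne1 h) (pne2 h) (pne1 (edge_swap h)) (pne2 (edge_swap h))).mp h
  have q1p : ∀ {u : ℕ}, s(u,v1) ∈ q.1.edges → s(u,v) ∈ p.1.edges := fun h => (e2 _).mpr (Or.inl h)
  have q2p : ∀ {u : ℕ}, s(u,v2) ∈ q.1.edges → s(u,v) ∈ p.1.edges := fun h => (e2 _).mpr (Or.inr h)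
  set R : ℕ → Prop := fun z => Reach q.1 v2 z with hR
  have Rv2 : R v2 := Relation.ReflTransGen.refl
  have Redge : ∀ {u w : ℕ}, R u → s(u,w) ∈ q.1.edges → R w := fun hr h =>
    Relation.ReflTransGen.tail hr h
  have hRv : ¬ R v := by
    intro h; rcases reach_mem_right h with h' | h'
    · exact hvv2 h'.symm
    · exact hvq h'
  set cond : Prop := ∃ y, s(y, v2) ∈ q.1.edges with hcond
  set t : ℕ := (insert v G.verts).sup c + 1 with ht
  have htlt : ∀ z ∈ insert v G.verts, c z ≠ t := fun z hz =>
    Nat.ne_of_lt (Nat.lt_succ_of_le (Finset.le_sup hz))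
  set c' : ℕ → ℕ := fun z =>
    if R z then t else if z = v1 then c v else if z = v ∧ ¬cond then t else c z with hc'
  have cGn : ∀ z, z ≠ v1 → z ≠ v → ¬ R z → c' z = c z := by
    intro z h1' h2' h3'; simp only [hc', if_neg h3', if_neg h1']
    rw [if_neg]; simp [h2']
  have cR : ∀ z, R z → c' z = t := fun z h => by simp only [hc', if_pos h]
  -- Lemma C (degree-1 sweep from the unique neighbour of an original v)
  have lemC : ∀ (x : ℕ), v ∈ G.verts → s(x,v) ∈ p.1.edges → s(x,v2) ∈ q.1.edges →
      ∀ w, Reach p.1 x w → w = v ∨ R w := by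
    intro x hvG hxp hx2 w hw
    induction hw with
    | refl => exact Or.inr (Relation.ReflTransGen.single (edge_swap hx2))
    | tail hyp hedge ih =>
      rename_i b w'
      rcases ih with rfl | hRb
      · have hwx : w' = x := h4 _ hvG w' x (edge_swap hedge) hxp
        subst hwx
        exact Or.inr (Relation.ReflTransGen.single (edge_swap hx2))
      · have hbv : b ≠ v := fun h => hRv (h ▸ hRb)
        by_cases hw'v : w' = v
        · exact Or.inl hw'v
        · exact Or.inr (Redge hRb (pQ hedge hbv hw'v))
  -- Lemma B (connectivity transfer for vertices not on the v2-side)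
  have lemB : ∀ u, u ≠ v → ¬ R u → ∀ w, Reach p.1 u w →
      (w = v ∧ (Reach q.1 u v1 ∨ R v1)) ∨
      (w ≠ v ∧ (Reach q.1 u w ∨ (R w ∧ (Reach q.1 u v1 ∨ R v1)))) := by
    intro u huv hRu w hw
    induction hw with
    | refl => exact Or.inr ⟨huv, Or.inl Relation.ReflTransGen.refl⟩
    | tail hyp hedge ih =>
      rename_i b w'
      rcases ih with ⟨hb, hK⟩ | ⟨hbv, hB⟩
      · -- b = v
        rw [hb] at hedge
        have hw'v : w' ≠ v := (edge_ne hedge).symm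
        have hsplit := (e2 w').mp (edge_swap hedge)
        rcases hK with hK1 | hK1 <;> rcases hsplit with h' | h'
        · exact Or.inr ⟨hw'v, Or.inl (hK1.tail (edge_swap h'))⟩
        · exact Or.inr ⟨hw'v, Or.inr ⟨Relation.ReflTransGen.single (edge_swap h'), Or.inl hK1⟩⟩
        · exact Or.inr ⟨hw'v, Or.inr ⟨Redge hK1 (edge_swap h'), Or.inr hK1⟩⟩
        · exact Or.inr ⟨hw'v, Or.inr ⟨Relation.ReflTransGen.single (edge_swap h'), Or.inr hK1⟩⟩
      · rcases hB with hquB | ⟨hRb, hK⟩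
        · by_cases hw'v : w' = v
          · subst hw'v
            rcases (e2 b).mp hedge with h' | h'
            · exact Or.inl ⟨rfl, Or.inl (hquB.tail h')⟩
            · exact absurd ((Relation.ReflTransGen.single (edge_swap h')).trans
                (reach_symm hquB)) hRu
          · exact Or.inr ⟨hw'v, Or.inl (hquB.tail (pQ hedge hbv hw'v))⟩
        · by_cases hw'v : w' = v
          · exact Or.inl ⟨hw'v, hK⟩
          · exact Or.inr ⟨hw'v, Or.inr ⟨Redge hRb (pQ hedge hbv hw'v), hK⟩⟩
  have lemB' : ∀ u w, u ≠ v → ¬ R u → w ≠ v → ¬ R w → Reach p.1 u w → Reach q.1 u w := by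
    intro u w huv hRu hwv hRw hr
    rcases lemB u huv hRu w hr with ⟨h', _⟩ | ⟨_, h' | ⟨h', _⟩⟩
    · exact absurd h' hwv
    · exact h'
    · exact absurd h' hRw
  have hncond : ¬ cond → ∀ z, R z → z = v2 := by
    intro hc z hz
    rcases hz.cases_head with h' | ⟨y, hy, _⟩
    · exact h'.symm
    · exact absurd ⟨y, edge_swap hy⟩ hc
  have hRlive : ∀ z, R z → z ∈ q.1.verts := by
    intro z h
    rcases reach_mem_right h with h' | h'
    · rw [← h', hqv]; simp
    · exact h'
  have hliveq : ∀ z, z ∈ p.1.verts → z ≠ v → z ≠ v1 → z ≠ v2 → z ∈ q.1.verts := by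
    intro z hz h0 h1' h2'
    rw [hqv]
    simp only [Finset.mem_insert, Finset.mem_erase]
    exact Or.inr (Or.inr ⟨h0, hz⟩)
  have cGn2 : ∀ z, z ≠ v1 → ¬ R z → ¬ (z = v ∧ ¬ cond) → c' z = c z := by
    intro z h1' h3' h4'
    simp only [hc', if_neg h3', if_neg h1', if_neg h4']
  have cVt : ∀ z, ¬ R z → z ≠ v1 → (z = v ∧ ¬ cond) → c' z = t := by
    intro z h3' h1' h4'
    simp only [hc', if_neg h3', if_neg h1', if_pos h4']
  -- now the four conclusions
  refine ⟨c', t, ?_, ?_, ?_, ?_⟩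
  · intro z hz
    have hz1 : z ≠ v1 := fun e => hv1G (e ▸ hz)
    by_cases h' : R z
    · exact Or.inr (cR z h')
    by_cases h2' : z = v ∧ ¬ cond
    · exact Or.inr (cVt z h' hz1 h2')
    · exact Or.inl (cGn2 z hz1 h' h2')
  · -- edges of q are monochromatic
    intro u w hq
    by_cases hRu : R u
    · by_cases hRw : R w
      · rw [cR u hRu, cR w hRw]
      · exact absurd (Redge hRu hq) hRw
    by_cases hRw : R w
    · exact absurd (Redge hRw (edge_swap hq)) hRu
    have hu2 : u ≠ v2 := fun e => hRu (e ▸ Rv2)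
    have hw2 : w ≠ v2 := fun e => hRw (e ▸ Rv2)
    have huv : u ≠ v := memq hq
    have hwv : w ≠ v := memq (edge_swap hq)
    by_cases hu1 : u = v1
    · by_cases hw1 : w = v1
      · exact absurd (hu1.trans hw1.symm) (edge_ne hq)
      · subst hu1
        have hp : s(w,v) ∈ p.1.edges := q1p (edge_swap hq)
        have : c w = c v := h1 _ _ hp
        rw [cGn2 w hw1 hRw (fun hh => hwv hh.1), this]
        simp [hc', hRu]
    by_cases hw1 : w = v1
    · subst hw1
      have hp : s(u,v) ∈ p.1.edges := q1p hq
      have : c u = c v := h1 _ _ hp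
      rw [cGn2 u hu1 hRu (fun hh => huv hh.1), this]
      simp [hc', hRw]
    · rw [cGn2 u hu1 hRu (fun hh => huv hh.1), cGn2 w hw1 hRw (fun hh => hwv hh.1)]
      exact h1 _ _ (qP hq hu1 hu2 hw1 hw2)
  · -- the H2' invariant
    intro u hu w hw hcc hne
    have hu1 : u ≠ v1 := fun e => hv1G (e ▸ hu)
    have hu2 : u ≠ v2 := fun e => hv2G (e ▸ hu)
    have hw1 : w ≠ v1 := fun e => hv1G (e ▸ hw)
    have hw2 : w ≠ v2 := fun e => hv2G (e ▸ hw)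
    have main : ∀ u' w', u' ∈ G.verts → w' ∈ G.verts → c u' = c w' → u' ≠ w' →
        u' = v → ¬ R w' → cond → False := by
      intro u' w' hu' hw' hcc' hne' huv' hRw' hnc
      rw [huv'] at hu' hcc' hne'
      obtain ⟨x, hx2⟩ := hnc
      have hxp : s(x,v) ∈ p.1.edges := q2p hx2
      obtain ⟨_, _, hreach⟩ := h2 _ hu' _ hw' hcc' hne'
      rcases hreach.cases_head with h' | ⟨y, hy, hyw⟩
      · exact hne' h'
      · have hyx : y = x := h4 _ hu' y x (edge_swap hy) hxp
        subst hyx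
        rcases lemC y hu' (edge_swap hy) hx2 w' hyw with h' | h'
        · exact hne' h'.symm
        · exact hRw' h'
    by_cases hRu : R u
    · by_cases hRw : R w
      · exact ⟨hRlive u hRu, hRlive w hRw, (reach_symm hRu).trans hRw⟩
      · exfalso
        rw [cR u hRu] at hcc
        by_cases hwv : w = v ∧ ¬ cond
        · exact hv2G ((hncond hwv.2 u hRu) ▸ hu)
        · rw [cGn2 w hw1 hRw hwv] at hcc
          exact htlt w (Finset.mem_insert_of_mem hw) hcc.symm
    by_cases hRw : R w
    · exfalso
      rw [cR w hRw] at hcc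
      by_cases huvt : u = v ∧ ¬ cond
      · exact hv2G ((hncond huvt.2 w hRw) ▸ hw)
      · rw [cGn2 u hu1 hRu huvt] at hcc
        exact htlt u (Finset.mem_insert_of_mem hu) hcc
    -- neither u nor w is on the v2-component
    by_cases huvt : u = v ∧ ¬ cond
    · exfalso
      rw [cVt u hRu hu1 huvt] at hcc
      have hwv : ¬ (w = v ∧ ¬ cond) := fun hh => hne (huvt.1.trans hh.1.symm)
      rw [cGn2 w hw1 hRw hwv] at hcc
      exact htlt w (Finset.mem_insert_of_mem hw) hcc.symm
    by_cases hwvt : w = v ∧ ¬ cond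
    · exfalso
      rw [cVt w hRw hw1 hwvt] at hcc
      rw [cGn2 u hu1 hRu huvt] at hcc
      exact htlt u (Finset.mem_insert_of_mem hu) hcc
    rw [cGn2 u hu1 hRu huvt, cGn2 w hw1 hRw hwvt] at hcc
    by_cases huv : u = v
    · exact absurd (main u w hu hw hcc hne huv hRw
        (by_contra fun hcnd => huvt ⟨huv, hcnd⟩)) not_false
    by_cases hwv : w = v
    · exact absurd (main w u hw hu hcc.symm hne.symm hwv hRu
        (by_contra fun hcnd => hwvt ⟨hwv, hcnd⟩)) not_false
    obtain ⟨hup, hwp, hreach⟩ := h2 u hu w hw hcc hne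
    exact ⟨hliveq u hup huv hu1 hu2, hliveq w hwp hwv hw1 hw2,
      lemB' u w huv hRu hwv hRw hreach⟩
  · -- degree-one invariant for the originals
    intro z hz y y' hy hy'
    have hz1 : z ≠ v1 := fun e => hv1G (e ▸ hz)
    have hz2 : z ≠ v2 := fun e => hv2G (e ▸ hz)
    have key : ∀ y0, s(y0,z) ∈ q.1.edges → ¬ (y0 = v1 ∨ y0 = v2) → s(y0,z) ∈ p.1.edges := by
      intro y0 h0 hn
      exact qP h0 (fun e => hn (Or.inl e)) (fun e => hn (Or.inr e)) hz1 hz2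
    have keyv : ∀ y0, s(y0,z) ∈ q.1.edges → (y0 = v1 ∨ y0 = v2) → s(v,z) ∈ p.1.edges := by
      intro y0 h0 hn
      rcases hn with rfl | rfl
      · exact edge_swap (q1p (edge_swap h0))
      · exact edge_swap (q2p (edge_swap h0))
    by_cases hy1 : y = v1 ∨ y = v2
    · by_cases hy'1 : y' = v1 ∨ y' = v2
      · rcases hy1 with rfl | rfl <;> rcases hy'1 with rfl | rfl
        · rfl
        · exact absurd ⟨edge_swap hy, edge_swap hy'⟩ (e3 z)
        · exact absurd ⟨edge_swap hy', edge_swap hy⟩ (e3 z)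
        · rfl
      · exfalso
        have := h4 _ hz v y' (keyv y hy hy1) (key y' hy' hy'1)
        exact memq hy' this.symm
    · by_cases hy'1 : y' = v1 ∨ y' = v2
      · exfalso
        have := h4 _ hz v y (keyv y' hy' hy'1) (key y hy hy1)
        exact memq hy this.symm
      · exact h4 _ hz y y' (key y hy hy1) (key y' hy' hy'1)


lemma backward (G : SG) (k : ℕ) (hk : 1 ≤ k) (a : ℕ) (ha : a ∉ G.verts)
    (H : SG) (hv : H.verts = insert a G.verts)
    (he : ∀ e : Sym2 ℕ, e ∈ H.edges ↔ ∃ v ∈ G.verts, e = s(a, v))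
    (hmc : MCSolution H G.edges (k-1)) :
    ∃ c : ℕ → Fin k, ∀ u w : ℕ, s(u,w) ∈ G.edges → c u ≠ c w := by
  obtain ⟨n, f, hn, h0, hsteps, hsep⟩ := hmc
  have hGH : G.verts ⊆ H.verts := by rw [hv]; exact Finset.subset_insert _ _
  have h1e : ∀ z ∈ G.verts, s(a,z) ∈ H.edges := fun z hz => (he _).mpr ⟨z, hz, rfl⟩
  have inv : ∀ i, i ≤ n → ((f i).1.verts ⊆ (f i).2 ∧ G.verts ⊆ (f i).2) ∧
      ∃ c : ℕ → ℕ,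
        (∀ u w : ℕ, s(u,w) ∈ (f i).1.edges → c u = c w) ∧
        (∀ u ∈ G.verts, ∀ w ∈ G.verts, c u = c w → u ≠ w →
          u ∈ (f i).1.verts ∧ w ∈ (f i).1.verts ∧ Reach (f i).1 u w) ∧
        (∀ z ∈ G.verts, ∀ y y' : ℕ, s(y,z) ∈ (f i).1.edges → s(y',z) ∈ (f i).1.edges → y = y') ∧
        (G.verts.image c).card ≤ i + 1 := by
    intro i
    induction i with
    | zero =>
      intro _
      rw [h0]
      refine ⟨⟨le_refl _, hGH⟩, fun _ => 0, fun _ _ _ => rfl, ?_, ?_, ?_⟩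
      · intro u hu w hw _ _
        refine ⟨hGH hu, hGH hw, ?_⟩
        exact Relation.ReflTransGen.tail
          (Relation.ReflTransGen.single (edge_swap (h1e u hu))) (h1e w hw)
      · intro z hz y y' hyz hy'z
        obtain ⟨x, hx, hsx⟩ := (he _).mp hyz
        obtain ⟨x', hx', hsx'⟩ := (he _).mp hy'z
        have hy : y = a := by
          rcases Sym2.eq_iff.mp hsx with ⟨h', _⟩ | ⟨_, h'⟩
          · exact h'
          · exact absurd (h' ▸ hz) ha
        have hy' : y' = a := by
          rcases Sym2.eq_iff.mp hsx' with ⟨h', _⟩ | ⟨_, h'⟩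
          · exact h'
          · exact absurd (h' ▸ hz) ha
        rw [hy, hy']
      · have hsub : (G.verts.image fun _ : ℕ => (0:ℕ)) ⊆ {0} := by
          intro x hx
          rcases Finset.mem_image.mp hx with ⟨_, _, rfl⟩
          simp
        simpa using Finset.card_le_card hsub
    | succ i ih =>
      intro hle
      have hi : i ≤ n := Nat.le_of_succ_le hle
      obtain ⟨⟨hVp, hGp⟩, c, h1, h2, h4, hcard⟩ := ih hi
      have hstep := hsteps i (Nat.lt_of_succ_le hle)
      obtain ⟨v, v1, v2, -, -, -, -, -, -, hq2, hqv, -, -, -⟩ := hstep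
      have hsub1 : (f (i+1)).1.verts ⊆ (f (i+1)).2 := by
        rw [hq2, hqv]
        exact Finset.insert_subset_insert _ (Finset.insert_subset_insert _
          ((Finset.erase_subset _ _).trans hVp))
      have hsub2 : G.verts ⊆ (f (i+1)).2 := by
        rw [hq2]
        exact fun x hx => Finset.mem_insert_of_mem (Finset.mem_insert_of_mem (hGp hx))
      obtain ⟨c', t, hsel, h1', h2', h4'⟩ :=
        step_colors G (f i) (f (i+1)) (hsteps i (Nat.lt_of_succ_le hle)) hGp hVp c h1 h2 h4
      refine ⟨⟨hsub1, hsub2⟩, c', h1', h2', h4', ?_⟩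
      have himg : G.verts.image c' ⊆ insert t (G.verts.image c) := by
        intro x hx
        rcases Finset.mem_image.mp hx with ⟨z, hz, rfl⟩
        rcases hsel z hz with h | h
        · rw [h]; exact Finset.mem_insert_of_mem (Finset.mem_image_of_mem _ hz)
        · rw [h]; exact Finset.mem_insert_self _ _
      calc (G.verts.image c').card ≤ (insert t (G.verts.image c)).card :=
            Finset.card_le_card himg
        _ ≤ (G.verts.image c).card + 1 := Finset.card_insert_le _ _
        _ ≤ i + 1 + 1 := by omega
  obtain ⟨-, c, h1, h2, -, hcard⟩ := inv n le_rfl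
  have hcol : ∀ u w : ℕ, s(u,w) ∈ G.edges → u ∈ G.verts ∧ w ∈ G.verts ∧ c u ≠ c w := by
    intro u w hedge
    have hu : u ∈ G.verts := edge_left hedge
    have hw : w ∈ G.verts := edge_right hedge
    refine ⟨hu, hw, fun hcc => ?_⟩
    obtain ⟨hup, hwp, hreach⟩ := h2 u hu w hw hcc (edge_ne hedge)
    exact hsep _ hedge u w rfl hup hwp hreach
  have hcard' : (G.verts.image c).card ≤ k := hcard.trans (by omega)
  let e := (G.verts.image c).orderIsoOfFin rfl
  refine ⟨fun z => if h : z ∈ G.verts then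
      Fin.castLE hcard' (e.symm ⟨c z, Finset.mem_image_of_mem c h⟩) else ⟨0, hk⟩, ?_⟩
  intro u w hedge
  obtain ⟨hu, hw, hne⟩ := hcol u w hedge
  simp only [dif_pos hu, dif_pos hw]
  intro hEq
  apply hne
  have hEq2 := Fin.castLE_injective hcard' hEq
  have hEq3 := e.symm.injective hEq2
  exact congrArg Subtype.val hEq3

def NB (H : SG) : ℕ := H.verts.sup id + 1

lemma lt_NB {H : SG} {x : ℕ} (h : x ∈ H.verts) : x < NB H :=
  Nat.lt_succ_of_le (Finset.le_sup (f := id) h)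

def bb (H : SG) (j : ℕ) : ℕ := NB H + 2*j

def rr (H : SG) (a : ℕ) (j : ℕ) : ℕ := if j = 0 then a else NB H + 2*j + 1

def ctr (H : SG) (a : ℕ) {k : ℕ} (c : ℕ → Fin k) (i : ℕ) (v : ℕ) : ℕ :=
  if (c v : ℕ) < i then bb H (c v) else rr H a i

def fvs (H : SG) (a : ℕ) (G : SG) (i : ℕ) : Finset ℕ :=
  (Finset.range i).image (bb H) ∪ {rr H a i} ∪ G.verts

def fes (H : SG) (a : ℕ) (G : SG) {k : ℕ} (c : ℕ → Fin k) (i : ℕ) : Finset (Sym2 ℕ) :=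
  G.verts.image (fun v => s(ctr H a c i v, v))

def fus (H : SG) (a : ℕ) (i : ℕ) : Finset ℕ :=
  H.verts ∪ (Finset.range i).image (bb H) ∪ (Finset.range i).image (fun j => rr H a (j+1))

section names
variable {G H : SG} {a : ℕ}

lemma bb_not_memH (j : ℕ) : bb H j ∉ H.verts := fun h => by
  have := lt_NB h; unfold bb at this; omega

lemma rr_not_memH (j : ℕ) : rr H a (j+1) ∉ H.verts := fun h => by
  have := lt_NB h; simp only [rr, Nat.succ_ne_zero, if_false] at this; omega

lemma bb_inj {j j' : ℕ} (h : bb H j = bb H j') : j = j' := by unfold bb at h; omega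

lemma bb_ne_rr (hGH : a ∈ H.verts) (j j' : ℕ) : bb H j ≠ rr H a j' := by
  have := lt_NB hGH
  unfold bb rr
  split
  · omega
  · omega

lemma rr_inj (hGH : a ∈ H.verts) {j j' : ℕ} (h : rr H a j = rr H a j') : j = j' := by
  have := lt_NB hGH
  unfold rr at h
  split at h <;> split at h <;> omega

lemma rr_pos_not_memH (hGH : a ∈ H.verts) {j : ℕ} (hj : 1 ≤ j) : rr H a j ∉ H.verts := by
  intro h
  have h1 := lt_NB h
  have h2 := lt_NB hGH
  unfold rr at h1
  split at h1 <;> omega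

end names

section st
variable (G H : SG) (a : ℕ) {k : ℕ} (c : ℕ → Fin k)

lemma GsubH (hv : H.verts = insert a G.verts) : G.verts ⊆ H.verts := by
  rw [hv]; exact Finset.subset_insert _ _

lemma aH (hv : H.verts = insert a G.verts) : a ∈ H.verts := by
  rw [hv]; exact Finset.mem_insert_self _ _

lemma ctr_not_mem (ha : a ∉ G.verts) (hv : H.verts = insert a G.verts) (i v : ℕ) :
    ctr H a c i v ∉ G.verts := by
  unfold ctr
  split
  · exact fun h => bb_not_memH _ (GsubH G H a hv h)
  · unfold rr
    split
    · exact ha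
    · exact fun h => by have := lt_NB (GsubH G H a hv h); omega

lemma ctr_mem_fvs (i : ℕ) {v : ℕ} (hvG : v ∈ G.verts) (hik : i ≤ k) :
    ctr H a c i v ∈ fvs H a G i := by
  unfold ctr fvs
  split
  · rename_i h
    exact Finset.mem_union_left _ (Finset.mem_union_left _
      (Finset.mem_image_of_mem _ (Finset.mem_range.mpr h)))
  · exact Finset.mem_union_left _ (Finset.mem_union_right _ (Finset.mem_singleton_self _))

def SGst (ha : a ∉ G.verts) (hv : H.verts = insert a G.verts) (i : ℕ) : SG where
  verts := fvs H a G i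
  edges := fes H a G c i
  edges_mem := by
    intro e heq x hx
    obtain ⟨v, hvG, him⟩ := Finset.mem_image.mp heq
    rw [← him] at hx
    rcases Sym2.mem_iff.mp hx with rfl | rfl
    · unfold ctr fvs
      split
      · rename_i h
        exact Finset.mem_union_left _ (Finset.mem_union_left _
          (Finset.mem_image_of_mem _ (Finset.mem_range.mpr h)))
      · exact Finset.mem_union_left _ (Finset.mem_union_right _ (Finset.mem_singleton_self _))
    · exact Finset.mem_union_right _ hvG
  edges_nd := by
    intro e heq hd
    obtain ⟨v, hvG, him⟩ := Finset.mem_image.mp heq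
    rw [← him] at hd
    have hd' : ctr H a c i v = v := Sym2.mk_isDiag_iff.mp hd
    rw [← hd'] at hvG
    exact ctr_not_mem G H a c ha hv i v hvG
end st

section step
variable (G H : SG) (a : ℕ) {k : ℕ} (c : ℕ → Fin k)

lemma rrG (ha : a ∉ G.verts) (hv : H.verts = insert a G.verts) (i : ℕ) :
    rr H a i ∉ G.verts := by
  cases i with
  | zero => simpa [rr] using ha
  | succ j =>
      exact fun h =>
        rr_pos_not_memH (aH G H a hv) (Nat.succ_le_succ (Nat.zero_le j)) (GsubH G H a hv h)

lemma bbG (hv : H.verts = insert a G.verts) (j : ℕ) : bb H j ∉ G.verts :=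
  fun h => bb_not_memH j (GsubH G H a hv h)

lemma mem_fes_iff {i u w : ℕ} : s(u,w) ∈ fes H a G c i ↔
    (w ∈ G.verts ∧ u = ctr H a c i w) ∨ (u ∈ G.verts ∧ w = ctr H a c i u) := by
  constructor
  · intro h
    obtain ⟨x, hx, hEq⟩ := Finset.mem_image.mp h
    rcases Sym2.eq_iff.mp hEq with ⟨h1, h2⟩ | ⟨h1, h2⟩
    · subst h2; exact Or.inl ⟨hx, h1.symm⟩
    · subst h2; exact Or.inr ⟨hx, h1.symm⟩
  · rintro (⟨hw, rfl⟩ | ⟨hu, rfl⟩)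
    · exact Finset.mem_image.mpr ⟨w, hw, rfl⟩
    · exact Finset.mem_image.mpr ⟨u, hu, Sym2.eq_swap⟩

lemma fvs_sub_fus (ha : a ∉ G.verts) (hv : H.verts = insert a G.verts) (i : ℕ) :
    fvs H a G i ⊆ fus H a i := by
  intro x hx
  simp only [fvs, Finset.mem_union, Finset.mem_singleton] at hx
  simp only [fus, Finset.mem_union]
  rcases hx with (h | h) | h
  · exact Or.inl (Or.inr h)
  · subst h
    cases i with
    | zero => exact Or.inl (Or.inl (by simpa [rr] using aH G H a hv))
    | succ j => exact Or.inr (Finset.mem_image.mpr ⟨j, Finset.mem_range.mpr (Nat.lt_succ_self j), rfl⟩)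
  · exact Or.inl (Or.inl (GsubH G H a hv h))

lemma stepF (ha : a ∉ G.verts) (hv : H.verts = insert a G.verts)
    (i : ℕ) (p q : SG × Finset ℕ)
    (hpv : p.1.verts = fvs H a G i) (hpe : p.1.edges = fes H a G c i) (hpu : p.2 = fus H a i)
    (hqv : q.1.verts = fvs H a G (i+1)) (hqe : q.1.edges = fes H a G c (i+1))
    (hqu : q.2 = fus H a (i+1)) : ExclStep p q := by
  have haH := aH G H a hv
  have hNa := lt_NB haH
  have hbu : bb H i ∉ p.2 := by
    rw [hpu]
    intro h
    simp only [fus, Finset.mem_union, Finset.mem_image, Finset.mem_range] at h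
    rcases h with (h | ⟨j, hj, hjeq⟩) | ⟨j, hj, hjeq⟩
    · exact bb_not_memH i h
    · have := bb_inj hjeq; omega
    · exact bb_ne_rr haH i (j+1) hjeq.symm
  have hru : rr H a (i+1) ∉ p.2 := by
    rw [hpu]
    intro h
    simp only [fus, Finset.mem_union, Finset.mem_image, Finset.mem_range] at h
    rcases h with (h | ⟨j, hj, hjeq⟩) | ⟨j, hj, hjeq⟩
    · exact rr_pos_not_memH haH (Nat.succ_le_succ (Nat.zero_le i)) h
    · exact bb_ne_rr haH j (i+1) hjeq
    · have := rr_inj haH hjeq; omega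
  have hsub := fvs_sub_fus G H a ha hv i
  have hrbni : ∀ j, bb H j ≠ rr H a i := fun j => bb_ne_rr haH j i
  have hrGi : rr H a i ∉ G.verts := rrG G H a ha hv i
  have hbGi : ∀ j, bb H j ∉ G.verts := bbG G H a hv
  have hrr1 : rr H a i ≠ rr H a (i+1) := fun h => by have := rr_inj haH h; omega
  refine ⟨rr H a i, bb H i, rr H a (i+1), ?_, hbu, hru, ?_, ?_, ?_, ?_, ?_, ?_, ?_, ?_⟩
  · rw [hpv]
    exact Finset.mem_union_left _ (Finset.mem_union_right _ (Finset.mem_singleton_self _))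
  · rw [hpv]; exact fun h => hbu (hpu ▸ hsub h)
  · rw [hpv]; exact fun h => hru (hpu ▸ hsub h)
  · exact (bb_ne_rr haH i (i+1))
  · -- used set equation
    rw [hqu, hpu]
    ext x
    simp only [fus, Finset.range_add_one, Finset.image_insert, Finset.mem_insert,
      Finset.mem_union]
    tauto
  · -- verts equation
    rw [hqv, hpv]
    ext x
    have hf1 : x ∈ G.verts → x ≠ rr H a i := fun h e => hrGi (e ▸ h)
    have hf2 : x ∈ (Finset.range i).image (bb H) → x ≠ rr H a i := by
      intro hx e
      obtain ⟨j, _, hj⟩ := Finset.mem_image.mp hx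
      exact hrbni j (hj.trans e)
    simp only [fvs, Finset.range_add_one, Finset.image_insert, Finset.mem_insert,
      Finset.mem_union, Finset.mem_singleton, Finset.mem_erase]
    constructor
    · rintro (((rfl | h) | rfl) | h)
      · exact Or.inl rfl
      · exact Or.inr (Or.inr ⟨hf2 h, Or.inl (Or.inl h)⟩)
      · exact Or.inr (Or.inl rfl)
      · exact Or.inr (Or.inr ⟨hf1 h, Or.inr h⟩)
    · rintro (rfl | rfl | ⟨hne, (h | rfl) | h⟩)
      · exact Or.inl (Or.inl (Or.inl rfl))
      · exact Or.inl (Or.inr rfl)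
      · exact Or.inl (Or.inl (Or.inr h))
      · exact absurd rfl hne
      · exact Or.inr h
  · -- untouched edges
    intro u w huv hwv hu1 hu2 hw1 hw2
    rw [hpe, hqe]
    constructor
    · intro h
      rcases (mem_fes_iff G H a c).mp h with ⟨hw, rfl⟩ | ⟨hu, rfl⟩
      · by_cases hc : (c w : ℕ) < i
        · refine (mem_fes_iff G H a c).mpr (Or.inl ⟨hw, ?_⟩)
          unfold ctr at *
          rw [if_pos hc] at *
          rw [if_pos (Nat.lt_succ_of_lt hc)]
        · exact absurd (by unfold ctr; rw [if_neg hc]) huv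
      · by_cases hc : (c u : ℕ) < i
        · refine (mem_fes_iff G H a c).mpr (Or.inr ⟨hu, ?_⟩)
          unfold ctr at *
          rw [if_pos hc] at *
          rw [if_pos (Nat.lt_succ_of_lt hc)]
        · exact absurd (by unfold ctr; rw [if_neg hc]) hwv
    · intro h
      rcases (mem_fes_iff G H a c).mp h with ⟨hw, rfl⟩ | ⟨hu, rfl⟩
      · by_cases hc : (c w : ℕ) < i + 1
        · have hci : (c w : ℕ) ≠ i := by
            intro hEq
            exact hu1 (by unfold ctr; rw [if_pos hc, hEq])
          refine (mem_fes_iff G H a c).mpr (Or.inl ⟨hw, ?_⟩)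
          unfold ctr at *
          rw [if_pos hc] at *
          rw [if_pos (by omega)]
        · exact absurd (by unfold ctr; rw [if_neg hc]) hu2
      · by_cases hc : (c u : ℕ) < i + 1
        · have hci : (c u : ℕ) ≠ i := by
            intro hEq
            exact hw1 (by unfold ctr; rw [if_pos hc, hEq])
          refine (mem_fes_iff G H a c).mpr (Or.inr ⟨hu, ?_⟩)
          unfold ctr at *
          rw [if_pos hc] at *
          rw [if_pos (by omega)]
        · exact absurd (by unfold ctr; rw [if_neg hc]) hw2
  · -- the split of the neighbourhood of rr i
    intro u
    rw [hpe, hqe]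
    have lhs : s(u, rr H a i) ∈ fes H a G c i ↔ (u ∈ G.verts ∧ ¬ (c u : ℕ) < i) := by
      rw [mem_fes_iff]
      constructor
      · rintro (⟨hw, rfl⟩ | ⟨hu, hEq⟩)
        · exact absurd hw hrGi
        · refine ⟨hu, fun hlt => ?_⟩
          unfold ctr at hEq
          rw [if_pos hlt] at hEq
          exact hrbni _ hEq.symm
      · rintro ⟨hu, hge⟩
        exact Or.inr ⟨hu, by unfold ctr; rw [if_neg hge]⟩
    have rhs1 : s(u, bb H i) ∈ fes H a G c (i+1) ↔ (u ∈ G.verts ∧ (c u : ℕ) = i) := by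
      rw [mem_fes_iff]
      constructor
      · rintro (⟨hw, rfl⟩ | ⟨hu, hEq⟩)
        · exact absurd hw (hbGi i)
        · refine ⟨hu, ?_⟩
          unfold ctr at hEq
          by_cases hc : (c u : ℕ) < i + 1
          · rw [if_pos hc] at hEq
            have := bb_inj hEq; omega
          · rw [if_neg hc] at hEq
            exact absurd hEq (bb_ne_rr haH i (i+1))
      · rintro ⟨hu, hEq⟩
        refine Or.inr ⟨hu, ?_⟩
        unfold ctr
        rw [if_pos (by omega), hEq]
    have rhs2 : s(u, rr H a (i+1)) ∈ fes H a G c (i+1) ↔ (u ∈ G.verts ∧ ¬ (c u : ℕ) < i + 1) := by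
      rw [mem_fes_iff]
      constructor
      · rintro (⟨hw, rfl⟩ | ⟨hu, hEq⟩)
        · exact absurd hw (rrG G H a ha hv (i+1))
        · refine ⟨hu, fun hlt => ?_⟩
          unfold ctr at hEq
          rw [if_pos hlt] at hEq
          exact bb_ne_rr haH _ _ hEq.symm
      · rintro ⟨hu, hge⟩
        exact Or.inr ⟨hu, by unfold ctr; rw [if_neg hge]⟩
    rw [lhs, rhs1, rhs2]
    constructor
    · rintro ⟨hu, hge⟩
      by_cases hci : (c u : ℕ) = i
      · exact Or.inl ⟨hu, hci⟩
      · exact Or.inr ⟨hu, by omega⟩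
    · rintro (⟨hu, hEq⟩ | ⟨hu, hge⟩)
      · exact ⟨hu, by omega⟩
      · exact ⟨hu, by omega⟩
  · -- exclusivity
    intro u
    rw [hqe]
    rintro ⟨h1, h2⟩
    rcases (mem_fes_iff G H a c).mp h1 with ⟨hw, _⟩ | ⟨hu, hEq1⟩
    · exact hbGi i hw
    rcases (mem_fes_iff G H a c).mp h2 with ⟨hw, _⟩ | ⟨-, hEq2⟩
    · exact rrG G H a ha hv (i+1) hw
    unfold ctr at hEq1 hEq2
    by_cases hc : (c u : ℕ) < i + 1
    · rw [if_pos hc] at hEq2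
      exact bb_ne_rr haH _ _ hEq2.symm
    · rw [if_neg hc] at hEq1
      exact bb_ne_rr haH i (i+1) hEq1
end step


lemma forward (G : SG) (k : ℕ) (hk : 1 ≤ k) (a : ℕ) (ha : a ∉ G.verts)
    (H : SG) (hv : H.verts = insert a G.verts)
    (he : ∀ e : Sym2 ℕ, e ∈ H.edges ↔ ∃ v ∈ G.verts, e = s(a, v))
    (c : ℕ → Fin k) (hc : ∀ u w : ℕ, s(u,w) ∈ G.edges → c u ≠ c w) :
    MCSolution H G.edges (k-1) := by
  classical
  have hv0 : H.verts = fvs H a G 0 := by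
    ext x; simp [fvs, rr, hv]
  have he0 : H.edges = fes H a G c 0 := by
    ext e
    rw [he e]
    simp only [fes, Finset.mem_image, ctr, rr, Nat.not_lt_zero, if_false, if_pos rfl]
    constructor
    · rintro ⟨v, hvG, rfl⟩; exact ⟨v, hvG, rfl⟩
    · rintro ⟨v, hvG, rfl⟩; exact ⟨v, hvG, rfl⟩
  have hu0 : H.verts = fus H a 0 := by
    ext x; simp [fus]
  refine ⟨k - 1,
    fun i => match i with
      | 0 => (H, H.verts)
      | (j+1) => (SGst G H a c ha hv (j+1), fus H a (j+1)),
    le_refl _, rfl, ?_, ?_⟩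
  · intro i hi
    match i with
    | 0 => exact stepF G H a c ha hv 0 _ _ hv0 he0 hu0 rfl rfl rfl
    | (j+1) => exact stepF G H a c ha hv (j+1) _ _ rfl rfl rfl rfl rfl rfl
  · intro e heG x y hxy hx hy
    subst hxy
    have hxG : x ∈ G.verts := G.edges_mem _ heG x (Sym2.mem_iff.mpr (Or.inl rfl))
    have hyG : y ∈ G.verts := G.edges_mem _ heG y (Sym2.mem_iff.mpr (Or.inr rfl))
    have hcc := hc x y heG
    by_cases hk1 : k = 1
    · subst hk1
      exact absurd (Subsingleton.elim (c x) (c y)) hcc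
    obtain ⟨m, hm⟩ : ∃ m, k - 1 = m + 1 := ⟨k - 2, by omega⟩
    rw [hm]
    have hn1 : 1 ≤ k - 1 := by omega
    set n := m + 1 with hnm
    have hnk : n = k - 1 := hm.symm
    set ℓ : ℕ → Fin k := fun z =>
      if z ∈ G.verts then c z
      else if z = rr H a n then ⟨k-1, by omega⟩
      else ⟨min (k-1) ((z - NB H)/2), Nat.lt_of_le_of_lt (Nat.min_le_left _ _) (by omega)⟩
      with hℓ
    have key : ∀ v ∈ G.verts, ℓ (ctr H a c n v) = c v := by
      intro v hvG
      unfold ctr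
      by_cases hcv : (c v : ℕ) < n
      · rw [if_pos hcv]
        have h1 : bb H (c v) ∉ G.verts := bbG G H a hv _
        have h2 : bb H (c v) ≠ rr H a n := bb_ne_rr (aH G H a hv) _ _
        rw [hℓ]
        simp only [if_neg h1, if_neg h2]
        apply Fin.ext
        show min (k-1) ((bb H (c v) - NB H)/2) = (c v : ℕ)
        have hsub : bb H (c v) - NB H = 2 * (c v : ℕ) := by unfold bb; omega
        rw [hsub, Nat.mul_div_cancel_left _ (by norm_num : (0:ℕ) < 2)]
        have := (c v).isLt
        exact Nat.min_eq_right (by omega)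
      · rw [if_neg hcv]
        have h1 : rr H a n ∉ G.verts := rrG G H a ha hv n
        rw [hℓ]
        simp only [if_neg h1, if_pos rfl]
        apply Fin.ext
        show k - 1 = (c v : ℕ)
        have := (c v).isLt
        omega
    have mono : ∀ u w : ℕ, s(u,w) ∈ fes H a G c n → ℓ u = ℓ w := by
      intro u w hmem
      rcases (mem_fes_iff G H a c).mp hmem with ⟨hw, rfl⟩ | ⟨hu, rfl⟩
      · rw [key w hw, hℓ]
        simp only [if_pos hw]
      · rw [key u hu, hℓ]
        simp only [if_pos hu]
    intro hr
    have hlab : ℓ x = ℓ y := by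
      have : ∀ z, Reach (SGst G H a c ha hv n) x z → ℓ x = ℓ z := by
        intro z hz
        induction hz with
        | refl => rfl
        | tail _ hbc ih => exact ih.trans (mono _ _ hbc)
      exact this y hr
    rw [hℓ] at hlab
    simp only [if_pos hxG, if_pos hyG] at hlab
    exact hcc hlab

/-- `G` admits a proper `k`-coloring: a partition of its vertices into at most `k`
independent sets, given here by a coloring function with no monochromatic edge. -/
theorem stmt4 (G : SG) (k : ℕ) (hk : 1 ≤ k) (a : ℕ) (ha : a ∉ G.verts)
    (H : SG) (hv : H.verts = insert a G.verts)
    (he : ∀ e : Sym2 ℕ, e ∈ H.edges ↔ ∃ v ∈ G.verts, e = s(a, v)) :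
    (∃ c : ℕ → Fin k, ∀ u w : ℕ, s(u,w) ∈ G.edges → c u ≠ c w) ↔
    MCSolution H G.edges (k - 1) := by
  constructor
  · rintro ⟨c, hc⟩
    exact forward G k hk a ha H hv he c hc
  · intro h
    exact backward G k hk a ha H hv he h
end

section
/- Let G = (V, E) be a simple graph, let H be the simple graph on vertex set V ∪ {a} (a a new vertex) whose edge set is exactly {av : v ∈ V}, and let the terminal pair set be S = E. If the Multicut with Vertex Splitting instance (H, S, t) admits a solution with at most t exclusive vertex splits, then it admits a solution with at most t exclusive vertex splits in which every split is applied to a or to a descendant of a. -/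
/-- A state of the splitting process: the current graph, the set of vertex names used
so far (to guarantee freshness of new vertices), and the map sending each current
vertex to its original ancestor. -/
structure MCState where
  g : SG
  used : Finset ℕ
  anc : ℕ → ℕ

/-- One exclusive vertex split applied to the vertex `v`. -/
def ExclStepAt (v : ℕ) (p q : MCState) : Prop :=
  ∃ v1 v2 : ℕ, v ∈ p.g.verts ∧ v1 ∉ p.used ∧ v2 ∉ p.used ∧ v1 ∉ p.g.verts ∧
    v2 ∉ p.g.verts ∧ v1 ≠ v2 ∧
    q.used = insert v1 (insert v2 p.used) ∧
    (q.anc = fun u => if u = v1 ∨ u = v2 then p.anc v else p.anc u) ∧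
    q.g.verts = insert v1 (insert v2 (p.g.verts.erase v)) ∧
    (∀ u w : ℕ, u ≠ v → w ≠ v → u ≠ v1 → u ≠ v2 → w ≠ v1 → w ≠ v2 →
      (s(u,w) ∈ p.g.edges ↔ s(u,w) ∈ q.g.edges)) ∧
    (∀ u : ℕ, s(u,v) ∈ p.g.edges ↔ (s(u,v1) ∈ q.g.edges ∨ s(u,v2) ∈ q.g.edges)) ∧
    (∀ u : ℕ, ¬ (s(u,v1) ∈ q.g.edges ∧ s(u,v2) ∈ q.g.edges))

/-- A solution of the Multicut with Vertex Splitting instance `(H, S, t)` in which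
every performed split is applied to a vertex satisfying the predicate `P` in the
current state: a sequence of at most `t` exclusive vertex splits after which every
terminal pair both of whose endpoints are unsplit lies in different connected
components. -/
def MCSolutionVia (H : SG) (S : Finset (Sym2 ℕ)) (t : ℕ) (P : MCState → ℕ → Prop) : Prop :=
  ∃ (n : ℕ) (f : ℕ → MCState), n ≤ t ∧ f 0 = ⟨H, H.verts, id⟩ ∧
    (∀ i < n, ∃ v : ℕ, ExclStepAt v (f i) (f (i+1)) ∧ P (f i) v) ∧
    ∀ e ∈ S, ∀ x y : ℕ, e = s(x,y) →
      x ∈ (f n).g.verts → y ∈ (f n).g.verts → ¬ Reach (f n).g x y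

open Finset

def RunVia (P : MCState → ℕ → Prop) (n : ℕ) (p q : MCState) : Prop :=
  ∃ f : ℕ → MCState, f 0 = p ∧ f n = q ∧
    ∀ i < n, ∃ v : ℕ, ExclStepAt v (f i) (f (i + 1)) ∧ P (f i) v

namespace RunVia

variable {P : MCState → ℕ → Prop} {n v : ℕ} {p q r : MCState}

theorem refl (P : MCState → ℕ → Prop) (p : MCState) : RunVia P 0 p p :=
  ⟨fun _ => p, rfl, rfl, fun _ hi => absurd hi (Nat.not_lt_zero _)⟩

theorem cons (hstep : ExclStepAt v p q) (hP : P p v) (hrun : RunVia P n q r) :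
    RunVia P (n + 1) p r := by
  obtain ⟨f, hf0, hfn, hf⟩ := hrun
  refine ⟨fun | 0 => p | i + 1 => f i, rfl, hfn, ?_⟩
  rintro (_ | i) hi
  · exact ⟨v, show ExclStepAt v p (f 0) from hf0 ▸ hstep, hP⟩
  · exact hf i (by omega)

end RunVia

def centers (a : ℕ) (p : MCState) : Finset ℕ :=
  p.g.verts.filter fun u => p.anc u = a

namespace ExclStepAt

variable {v : ℕ} {p q : MCState}

theorem used_subset (h : ExclStepAt v p q) : p.used ⊆ q.used := by
  obtain ⟨v1, v2, -, -, -, -, -, -, hused, -⟩ := h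
  rw [hused]
  exact (subset_insert _ _).trans (subset_insert _ _)

theorem anc_of_mem_used (h : ExclStepAt v p q) {x : ℕ} (hx : x ∈ p.used) :
    q.anc x = p.anc x := by
  obtain ⟨v1, v2, -, h1, h2, -, -, -, -, hanc, -⟩ := h
  simp only [hanc]
  rw [if_neg]
  rintro (rfl | rfl) <;> contradiction

theorem anc_of_mem_verts (h : ExclStepAt v p q) {x : ℕ} (hx : x ∈ p.g.verts) :
    q.anc x = p.anc x := by
  obtain ⟨v1, v2, -, -, -, h1, h2, -, -, hanc, -⟩ := h
  simp only [hanc]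
  rw [if_neg]
  rintro (rfl | rfl) <;> contradiction

theorem mem_verts_iff_of_mem_used (h : ExclStepAt v p q) {x : ℕ} (hx : x ∈ p.used) :
    x ∈ q.g.verts ↔ x ∈ p.g.verts ∧ x ≠ v := by
  obtain ⟨v1, v2, -, h1, h2, -, -, -, -, -, hverts, -⟩ := h
  have hx1 : x ≠ v1 := by rintro rfl; exact h1 hx
  have hx2 : x ≠ v2 := by rintro rfl; exact h2 hx
  rw [hverts]
  simp [hx1, hx2, and_comm]

theorem exists_edge_anc_eq (h : ExclStepAt v p q) {w u : ℕ} (hwv : w ≠ v)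
    (hwu : s(w, u) ∈ p.g.edges) : ∃ u', s(w, u') ∈ q.g.edges ∧ q.anc u' = p.anc u := by
  have hw : w ∈ p.g.verts := p.g.edges_mem _ hwu w (Sym2.mem_mk_left w u)
  have hu : u ∈ p.g.verts := p.g.edges_mem _ hwu u (Sym2.mem_mk_right w u)
  have hanc := h.anc_of_mem_verts hu
  obtain ⟨v1, v2, -, -, -, h1, h2, -, -, hanc', -, hpin, hsplit, -⟩ := h
  by_cases huv : u = v
  · subst huv
    have hv12 : q.anc v1 = p.anc u ∧ q.anc v2 = p.anc u := by simp [hanc']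
    rcases (hsplit w).1 (Sym2.eq_swap ▸ hwu) with hw1 | hw2
    · exact ⟨v1, Sym2.eq_swap ▸ hw1, hv12.1⟩
    · exact ⟨v2, Sym2.eq_swap ▸ hw2, hv12.2⟩
  · refine ⟨u, (hpin w u hwv huv ?_ ?_ ?_ ?_).1 hwu, hanc⟩ <;> rintro rfl <;> contradiction

theorem card_centers_le (a : ℕ) (h : ExclStepAt v p q) :
    #(centers a q) ≤ #(centers a p) + if p.anc v = a then 1 else 0 := by
  obtain ⟨v1, v2, hv, -, -, h1, h2, -, -, hanc, hverts, -⟩ := h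
  have hold : ∀ x ∈ centers a q, x ≠ v1 → x ≠ v2 → x ∈ (centers a p).erase v := by
    intro x hx hx1 hx2
    simp_all [centers]
  split_ifs with hva
  · have hsub : centers a q ⊆ insert v1 (insert v2 ((centers a p).erase v)) := by
      intro x hx
      by_cases hx1 : x = v1
      · exact hx1 ▸ mem_insert_self _ _
      by_cases hx2 : x = v2
      · exact hx2 ▸ mem_insert_of_mem (mem_insert_self _ _)
      exact mem_insert_of_mem (mem_insert_of_mem (hold x hx hx1 hx2))
    have hvc : v ∈ centers a p := mem_filter.2 ⟨hv, hva⟩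
    calc #(centers a q) ≤ #((centers a p).erase v) + 1 + 1 :=
          (card_le_card hsub).trans <|
            (card_insert_le _ _).trans (Nat.add_le_add_right (card_insert_le _ _) 1)
      _ = #(centers a p) + 1 := by
          rw [card_erase_add_one hvc]
  · have hnew : ∀ x ∈ centers a q, x ≠ v1 ∧ x ≠ v2 := by
      intro x hx
      have := (mem_filter.1 hx).2
      constructor <;> rintro rfl <;> simp [hanc] at this <;> exact hva this
    refine (card_le_card fun x hx => ?_).trans (Nat.le_add_right _ _)
    exact mem_of_mem_erase (hold x hx (hnew x hx).1 (hnew x hx).2)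

theorem card_sdiff_verts_le (h : ExclStepAt v p q) {V : Finset ℕ} (hV : V ⊆ p.used) :
    #(V \ q.g.verts) ≤ #(V \ p.g.verts) + if v ∈ V then 1 else 0 := by
  have hsub : V \ q.g.verts ⊆ insert v (V \ p.g.verts) := by
    intro x hx
    rw [mem_sdiff] at hx
    rw [h.mem_verts_iff_of_mem_used (hV hx.1), not_and_not_right] at hx
    by_cases hxv : x = v
    · exact hxv ▸ mem_insert_self _ _
    · exact mem_insert_of_mem (mem_sdiff.2 ⟨hx.1, fun hxp => hxv (hx.2 hxp)⟩)
  split_ifs with hvV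
  · exact (card_le_card hsub).trans (card_insert_le _ _)
  · refine card_le_card fun x hx => ?_
    rcases mem_insert.1 (hsub hx) with rfl | hx'
    · exact absurd (mem_sdiff.1 hx).1 hvV
    · exact hx'

end ExclStepAt

structure StarInvariant (G : SG) (a i : ℕ) (p : MCState) : Prop where
  subset_used : G.verts ⊆ p.used
  anc_eq_self : ∀ u ∈ G.verts, p.anc u = u
  exists_edge : ∀ w ∈ G.verts, w ∈ p.g.verts → ∃ u, s(w, u) ∈ p.g.edges ∧ p.anc u = a
  card_le : #(centers a p) + #(G.verts \ p.g.verts) ≤ i + 1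

namespace StarInvariant

variable {G : SG} {a i v : ℕ} {p q : MCState}

theorem init {H : SG} (hv : H.verts = insert a G.verts)
    (he : ∀ e : Sym2 ℕ, e ∈ H.edges ↔ ∃ v ∈ G.verts, e = s(a, v)) :
    StarInvariant G a 0 ⟨H, H.verts, id⟩ where
  subset_used := hv ▸ subset_insert a G.verts
  anc_eq_self _ _ := rfl
  exists_edge w hw _ := ⟨a, (he _).2 ⟨w, hw, Sym2.eq_swap⟩, rfl⟩
  card_le := by
    have hc : #(centers a ⟨H, H.verts, id⟩) ≤ 1 :=
      card_le_one.2 fun x hx y hy => (mem_filter.1 hx).2.trans (mem_filter.1 hy).2.symm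
    have hd : G.verts \ H.verts = ∅ := sdiff_eq_empty_iff_subset.2 (hv ▸ subset_insert a G.verts)
    simpa [hd] using hc

theorem step (ha : a ∉ G.verts) (hI : StarInvariant G a i p) (h : ExclStepAt v p q) :
    StarInvariant G a (i + 1) q where
  subset_used := hI.subset_used.trans h.used_subset
  anc_eq_self u hu := (h.anc_of_mem_used (hI.subset_used hu)).trans (hI.anc_eq_self u hu)
  exists_edge w hw hwq := by
    obtain ⟨hwp, hwv⟩ := (h.mem_verts_iff_of_mem_used (hI.subset_used hw)).1 hwq
    obtain ⟨u, hwu, hua⟩ := hI.exists_edge w hw hwp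
    obtain ⟨u', hwu', hu'⟩ := h.exists_edge_anc_eq hwv hwu
    exact ⟨u', hwu', hu'.trans hua⟩
  card_le := by
    have hc := h.card_centers_le a
    have hd := h.card_sdiff_verts_le hI.subset_used
    have := hI.card_le
    by_cases hva : p.anc v = a
    · have hvG : v ∉ G.verts := fun hvG => ha (hva ▸ (hI.anc_eq_self v hvG).symm ▸ hvG)
      simp only [hva, hvG, if_true, if_false] at hc hd
      omega
    · simp only [hva, if_false] at hc
      split_ifs at hd <;> omega

/-- Colour an unsplit original vertex by its neighbour and a split one by itself. -/
theorem exists_coloring (hI : StarInvariant G a i p) :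
    ∃ κ : ℕ → ℕ ⊕ ℕ, #(G.verts.image κ) ≤ i + 1 ∧
      ∀ x ∈ G.verts, ∀ y ∈ G.verts, x ≠ y →
        (x ∈ p.g.verts → y ∈ p.g.verts → ¬ Reach p.g x y) → κ x ≠ κ y := by
  classical
  choose! ν hν using hI.exists_edge
  refine ⟨fun x => if x ∈ p.g.verts then .inl (ν x) else .inr x, ?_, ?_⟩
  · have hsub : G.verts.image (fun x => if x ∈ p.g.verts then .inl (ν x) else .inr x) ⊆
        (centers a p).image Sum.inl ∪ (G.verts \ p.g.verts).image Sum.inr := by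
      intro c hc
      obtain ⟨x, hx, rfl⟩ := mem_image.1 hc
      by_cases hxp : x ∈ p.g.verts
      · have hν' := hν x hx hxp
        have hνx : ν x ∈ p.g.verts := p.g.edges_mem _ hν'.1 _ (Sym2.mem_mk_right x _)
        simp [hxp, centers, hνx, hν'.2]
      · simp [hxp, hx]
    calc _ ≤ _ := card_le_card hsub
      _ ≤ #(centers a p) + #(G.verts \ p.g.verts) :=
          (card_union_le _ _).trans (add_le_add card_image_le card_image_le)
      _ ≤ i + 1 := hI.card_le
  · intro x hx y hy hxy hsep heq
    by_cases hxp : x ∈ p.g.verts <;> by_cases hyp : y ∈ p.g.verts <;>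
      simp only [hxp, hyp, if_true, if_false, reduceCtorEq, Sum.inl.injEq, Sum.inr.injEq] at heq
    · refine hsep hxp hyp (Relation.ReflTransGen.tail (.single (hν x hx hxp).1) ?_)
      rw [heq, Sym2.eq_swap]
      exact (hν y hy hyp).1
    · exact hxy heq

end StarInvariant

theorem SG.ext {G H : SG} (hv : G.verts = H.verts) (he : G.edges = H.edges) : G = H := by
  cases G
  cases H
  congr

/-- The forest of stars with centres `C` and leaves `V`, the leaf `x` hanging from `μ x`. The
filter only makes the definition total: it is vacuous under the invariants of `IsStarForest`. -/
def starSG (V C : Finset ℕ) (μ : ℕ → ℕ) : SG where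
  verts := V ∪ C
  edges := (V.filter fun x => μ x ∈ C ∧ x ∉ C).image fun x => s(x, μ x)
  edges_mem := by
    simp only [mem_image, mem_filter]
    rintro _ ⟨x, ⟨hx, hμx, -⟩, rfl⟩ y hy
    rcases Sym2.mem_iff.1 hy with rfl | rfl
    exacts [mem_union_left _ hx, mem_union_right _ hμx]
  edges_nd := by
    simp only [mem_image, mem_filter]
    rintro _ ⟨x, ⟨-, hμx, hxC⟩, rfl⟩ hdiag
    exact hxC (Sym2.mk_isDiag_iff.1 hdiag ▸ hμx)

section StarForest

variable {V C : Finset ℕ} {μ : ℕ → ℕ}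

theorem mem_starSG_edges (hμ : ∀ x ∈ V, μ x ∈ C) (hVC : Disjoint V C) {x y : ℕ} :
    s(x, y) ∈ (starSG V C μ).edges ↔ (x ∈ V ∧ μ x = y) ∨ (y ∈ V ∧ μ y = x) := by
  simp only [starSG, mem_image, mem_filter, Sym2.eq_iff]
  constructor
  · rintro ⟨z, ⟨hz, -, -⟩, ⟨rfl, rfl⟩ | ⟨rfl, rfl⟩⟩
    exacts [Or.inl ⟨hz, rfl⟩, Or.inr ⟨hz, rfl⟩]
  · rintro (⟨hx, rfl⟩ | ⟨hy, rfl⟩)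
    · exact ⟨x, ⟨hx, hμ x hx, disjoint_left.1 hVC hx⟩, Or.inl ⟨rfl, rfl⟩⟩
    · exact ⟨y, ⟨hy, hμ y hy, disjoint_left.1 hVC hy⟩, Or.inr ⟨rfl, rfl⟩⟩

theorem mem_starSG_edges_of_notMem (hμ : ∀ x ∈ V, μ x ∈ C) (hVC : Disjoint V C) {u d : ℕ}
    (hd : d ∉ V) : s(u, d) ∈ (starSG V C μ).edges ↔ u ∈ V ∧ μ u = d := by
  rw [mem_starSG_edges hμ hVC]
  exact or_iff_left fun h => hd h.1

theorem not_reach_starSG (hμ : ∀ x ∈ V, μ x ∈ C) (hVC : Disjoint V C) {x y : ℕ}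
    (hx : x ∈ V) (hy : y ∈ V) (hne : μ x ≠ μ y) : ¬ Reach (starSG V C μ) x y := by
  have hleaf : ∀ z ∈ V, z ∉ C := fun z hz => disjoint_left.1 hVC hz
  suffices h : ∀ z, Reach (starSG V C μ) x z → (z ∈ V ∧ μ z = μ x) ∨ z = μ x by
    intro hxy
    rcases h y hxy with ⟨-, h⟩ | rfl
    exacts [hne h.symm, hleaf _ hy (hμ x hx)]
  intro z hz
  induction hz with
  | refl => exact Or.inl ⟨hx, rfl⟩
  | tail _ hbc ih =>
    rw [mem_starSG_edges hμ hVC] at hbc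
    rcases ih with ⟨hb, hbx⟩ | rfl <;> rcases hbc with ⟨hb', hbc⟩ | ⟨hc, hcb⟩
    · exact Or.inr (hbc ▸ hbx)
    · exact absurd (hcb ▸ hμ _ hc) (hleaf _ hb)
    · exact absurd (hμ x hx) (hleaf _ hb')
    · exact Or.inl ⟨hc, hcb⟩

theorem exclStepAt_starSG (hμ : ∀ x ∈ V, μ x ∈ C) (hVC : Disjoint V C) {U : Finset ℕ}
    {c c1 c2 : ℕ} {μ' : ℕ → ℕ} (hμ'C : ∀ x ∈ V, μ' x ∈ insert c1 (insert c2 (C.erase c)))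
    (hVC' : Disjoint V (insert c1 (insert c2 (C.erase c)))) (hU : V ∪ C ⊆ U) (hc : c ∈ C)
    (hc1 : c1 ∉ U) (hc2 : c2 ∉ U) (h12 : c1 ≠ c2)
    (hμ'c : ∀ x ∈ V, μ x = c → μ' x = c1 ∨ μ' x = c2)
    (hμ' : ∀ x ∈ V, μ x ≠ c → μ' x = μ x) (anc : ℕ → ℕ) :
    ExclStepAt c ⟨starSG V C μ, U, anc⟩
      ⟨starSG V (insert c1 (insert c2 (C.erase c))) μ', insert c1 (insert c2 U),
        fun u => if u = c1 ∨ u = c2 then anc c else anc u⟩ := by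
  have hc1VC : c1 ∉ V ∧ c1 ∉ C := not_or.1 fun h => hc1 (hU (mem_union.2 h))
  have hc2VC : c2 ∉ V ∧ c2 ∉ C := not_or.1 fun h => hc2 (hU (mem_union.2 h))
  have hcV : c ∉ V := disjoint_right.1 hVC hc
  have hrest : ∀ z ∈ V, ∀ w, w ≠ c → w ≠ c1 → w ≠ c2 → (μ z = w ↔ μ' z = w) := by
    intro z hz w hwc hw1 hw2
    by_cases hzc : μ z = c
    · rcases hμ'c z hz hzc with h | h <;> simp only [h, hzc] <;> grind
    · rw [hμ' z hz hzc]
  have hleaves : ∀ u, u ∈ V ∧ μ u = c ↔ u ∈ V ∧ μ' u = c1 ∨ u ∈ V ∧ μ' u = c2 := by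
    intro u
    constructor
    · rintro ⟨hu, huc⟩
      exact (hμ'c u hu huc).imp (⟨hu, ·⟩) (⟨hu, ·⟩)
    · rintro (⟨hu, hu'⟩ | ⟨hu, hu'⟩) <;> refine ⟨hu, by_contra fun huc => ?_⟩
      · exact hc1VC.2 (hu' ▸ hμ' u hu huc ▸ hμ u hu)
      · exact hc2VC.2 (hu' ▸ hμ' u hu huc ▸ hμ u hu)
  refine ⟨c1, c2, mem_union_right _ hc, hc1, hc2, by simpa [starSG] using hc1VC,
    by simpa [starSG] using hc2VC, h12, rfl, rfl, ?_, ?_, ?_, ?_⟩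
  · ext x
    simp only [starSG, mem_union, mem_insert, mem_erase]
    grind
  · intro u w huc hwc hu1 hu2 hw1 hw2
    simp only [mem_starSG_edges hμ hVC, mem_starSG_edges hμ'C hVC']
    exact or_congr (and_congr_right fun hu => hrest u hu w hwc hw1 hw2)
      (and_congr_right fun hw => hrest w hw u huc hu1 hu2)
  · intro u
    rw [mem_starSG_edges_of_notMem hμ hVC hcV, mem_starSG_edges_of_notMem hμ'C hVC' hc1VC.1,
      mem_starSG_edges_of_notMem hμ'C hVC' hc2VC.1]
    exact hleaves u
  · rintro u ⟨hu1, hu2⟩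
    rw [mem_starSG_edges_of_notMem hμ'C hVC' hc1VC.1] at hu1
    rw [mem_starSG_edges_of_notMem hμ'C hVC' hc2VC.1] at hu2
    exact h12 (hu1.2.symm.trans hu2.2)

end StarForest

structure IsStarForest (a : ℕ) (V C : Finset ℕ) (μ : ℕ → ℕ) (p : MCState) : Prop where
  graph_eq : p.g = starSG V C μ
  mapsTo : ∀ x ∈ V, μ x ∈ C
  disjoint : Disjoint V C
  subset_used : V ∪ C ⊆ p.used
  anc_eq : ∀ c ∈ C, p.anc c = a

namespace IsStarForest

variable {a : ℕ} {V C : Finset ℕ} {μ : ℕ → ℕ} {p : MCState}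

theorem exists_exclStepAt (hp : IsStarForest a V C μ p) {c c1 c2 : ℕ} (hc : c ∈ C)
    (hc1 : c1 ∉ p.used) (hc2 : c2 ∉ p.used) (h12 : c1 ≠ c2) {μ' : ℕ → ℕ}
    (hμ'c : ∀ x ∈ V, μ x = c → μ' x = c1 ∨ μ' x = c2)
    (hμ' : ∀ x ∈ V, μ x ≠ c → μ' x = μ x) :
    ∃ q, ExclStepAt c p q ∧ IsStarForest a V (insert c1 (insert c2 (C.erase c))) μ' q := by
  obtain ⟨g, U, anc⟩ := p
  obtain ⟨hg, hμ, hVC, hU, hanc⟩ := hp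
  dsimp only at hg hU hanc hc1 hc2
  subst hg
  have hc1VC : c1 ∉ V ∧ c1 ∉ C := not_or.1 fun h => hc1 (hU (mem_union.2 h))
  have hc2VC : c2 ∉ V ∧ c2 ∉ C := not_or.1 fun h => hc2 (hU (mem_union.2 h))
  have hμ'C : ∀ x ∈ V, μ' x ∈ insert c1 (insert c2 (C.erase c)) := by
    intro x hx
    by_cases hxc : μ x = c
    · rcases hμ'c x hx hxc with h | h <;> simp [h]
    · simp [hμ' x hx hxc, hxc, hμ x hx]
  have hVC' : Disjoint V (insert c1 (insert c2 (C.erase c))) := by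
    simp only [disjoint_insert_right]
    exact ⟨hc1VC.1, hc2VC.1, hVC.mono_right (erase_subset _ _)⟩
  refine ⟨_, exclStepAt_starSG hμ hVC hμ'C hVC' hU hc hc1 hc2 h12 hμ'c hμ' anc,
    rfl, hμ'C, hVC', ?_, ?_⟩
  · intro x hx
    simp only [mem_union, mem_insert, mem_erase] at hx ⊢
    rcases hx with hx | rfl | rfl | ⟨-, hx⟩
    exacts [Or.inr (Or.inr (hU (mem_union_left _ hx))), Or.inl rfl, Or.inr (Or.inl rfl),
      Or.inr (Or.inr (hU (mem_union_right _ hx)))]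
  · intro d hd
    simp only [mem_insert, mem_erase] at hd
    rcases hd with rfl | rfl | ⟨-, hd⟩
    · simp [hanc c hc]
    · simp [hanc c hc]
    · have hd1 : d ≠ c1 := by rintro rfl; exact hc1VC.2 hd
      have hd2 : d ≠ c2 := by rintro rfl; exact hc2VC.2 hd
      simp [hd1, hd2, hanc d hd]

variable {β : Type*} [DecidableEq β]

theorem exists_splitOff (hp : IsStarForest a V C μ p) {c : ℕ} (hc : c ∈ C) (κ : ℕ → β) (k : β) :
    ∃ q C₁ μ₁ c₂, ExclStepAt c p q ∧ IsStarForest a V C₁ μ₁ q ∧ c₂ ∈ C₁ ∧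
      (∀ x ∈ V, ∀ y ∈ V, μ x ≠ μ y → μ₁ x ≠ μ₁ y) ∧
      (∀ x ∈ V, μ₁ x = c₂ ↔ μ x = c ∧ κ x ≠ k) ∧
      (∀ x ∈ V, ∀ y ∈ V, μ x = c → μ y = c → κ x = k → κ y ≠ k → μ₁ x ≠ μ₁ y) := by
  obtain ⟨c1, hc1⟩ := Infinite.exists_notMem_finset p.used
  obtain ⟨c2, hc2⟩ := Infinite.exists_notMem_finset (insert c1 p.used)
  rw [mem_insert, not_or] at hc2
  have hC1 : c1 ∉ C := fun h => hc1 (hp.subset_used (mem_union_right _ h))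
  have hC2 : c2 ∉ C := fun h => hc2.2 (hp.subset_used (mem_union_right _ h))
  set μ₁ : ℕ → ℕ := fun x => if μ x = c then if κ x = k then c1 else c2 else μ x
  obtain ⟨q, hstep, hq⟩ := hp.exists_exclStepAt (μ' := μ₁) hc hc1 hc2.2 (Ne.symm hc2.1)
    (fun x _ hxc => by by_cases hxk : κ x = k <;> simp [μ₁, hxc, hxk])
    (fun x _ hxc => by simp [μ₁, hxc])
  refine ⟨q, _, μ₁, c2, hstep, hq, by simp, ?_, ?_, ?_⟩
  · intro x hx y hy hxy
    have := hp.mapsTo x hx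
    have := hp.mapsTo y hy
    simp only [μ₁]
    split_ifs <;> grind
  · intro x hx
    have := hp.mapsTo x hx
    simp only [μ₁]
    split_ifs <;> grind
  · intro x _ y _ hxc hyc hxk hyk
    simp [μ₁, hxc, hyc, hxk, hyk, Ne.symm hc2.1]

theorem exists_runVia_separating (κ : ℕ → β) (K : Finset β) :
    ∀ {C : Finset ℕ} {μ : ℕ → ℕ} {p : MCState} {c : ℕ}, IsStarForest a V C μ p → c ∈ C →
      (∀ x ∈ V, μ x = c → κ x ∈ K) →
      ∃ n q C' μ', n ≤ #K - 1 ∧ RunVia (fun p v => p.anc v = a) n p q ∧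
        IsStarForest a V C' μ' q ∧ (∀ x ∈ V, ∀ y ∈ V, μ x ≠ μ y → μ' x ≠ μ' y) ∧
        ∀ x ∈ V, ∀ y ∈ V, μ x = c → μ y = c → κ x ≠ κ y → μ' x ≠ μ' y := by
  induction K using Finset.induction_on with
  | empty =>
    intro C μ p c hp _ hK
    exact ⟨0, p, C, μ, le_rfl, .refl _ p, hp, fun _ _ _ _ => id,
      fun x hx _ _ hxc => absurd (hK x hx hxc) (notMem_empty _)⟩
  | insert k K hk ih =>
    intro C μ p c hp hc hK
    rcases K.eq_empty_or_nonempty with rfl | hKne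
    · refine ⟨0, p, C, μ, le_rfl, .refl _ p, hp, fun _ _ _ _ => id, ?_⟩
      intro x hx y hy hxc hyc hxy
      have hx' := hK x hx hxc
      have hy' := hK y hy hyc
      simp only [insert_empty, mem_singleton] at hx' hy'
      exact absurd (hx'.trans hy'.symm) hxy
    obtain ⟨q, C₁, μ₁, c₂, hstep, hq, hc₂, hsep₁, hμ₁c₂, hsplit⟩ := hp.exists_splitOff hc κ k
    have hK' : ∀ x ∈ V, μ₁ x = c₂ → κ x ∈ K := fun x hx hxc₂ => by
      obtain ⟨hxc, hxk⟩ := (hμ₁c₂ x hx).1 hxc₂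
      exact (mem_insert.1 (hK x hx hxc)).resolve_left hxk
    obtain ⟨n, r, C', μ', hn, hrun, hr, hsep', hsepc⟩ := ih hq hc₂ hK'
    refine ⟨n + 1, r, C', μ', ?_, hrun.cons hstep (hp.anc_eq c hc), hr,
      fun x hx y hy h => hsep' x hx y hy (hsep₁ x hx y hy h), ?_⟩
    · rw [card_insert_of_notMem hk]
      have := hKne.card_pos
      omega
    · intro x hx y hy hxc hyc hxy
      by_cases hxk : κ x = k
      · exact hsep' x hx y hy (hsplit x hx y hy hxc hyc hxk (hxk ▸ hxy.symm))
      by_cases hyk : κ y = k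
      · exact (hsep' y hy x hx (hsplit y hy x hx hyc hxc hyk (hyk ▸ hxy))).symm
      exact hsepc x hx y hy ((hμ₁c₂ x hx).2 ⟨hxc, hxk⟩) ((hμ₁c₂ y hy).2 ⟨hyc, hyk⟩) hxy

theorem init {G H : SG} (ha : a ∉ G.verts) (hv : H.verts = insert a G.verts)
    (he : ∀ e : Sym2 ℕ, e ∈ H.edges ↔ ∃ v ∈ G.verts, e = s(a, v)) :
    IsStarForest a G.verts {a} (fun _ => a) ⟨H, H.verts, id⟩ := by
  have hVC : Disjoint G.verts {a} := disjoint_singleton_right.2 ha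
  have hμ : ∀ x ∈ G.verts, a ∈ ({a} : Finset ℕ) := fun _ _ => mem_singleton_self a
  refine ⟨SG.ext ?_ ?_, hμ, hVC, by simp [hv], fun c hc => mem_singleton.1 hc⟩
  · exact hv.trans (union_singleton a G.verts).symm
  · ext e
    induction e using Sym2.ind with
    | _ x y =>
      rw [he, mem_starSG_edges hμ hVC]
      constructor
      · rintro ⟨z, hz, hxy⟩
        rcases Sym2.eq_iff.1 hxy with ⟨rfl, rfl⟩ | ⟨rfl, rfl⟩
        exacts [Or.inr ⟨hz, rfl⟩, Or.inl ⟨hz, rfl⟩]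
      · rintro (⟨hx, rfl⟩ | ⟨hy, rfl⟩)
        exacts [⟨x, hx, Sym2.eq_swap⟩, ⟨y, hy, rfl⟩]

end IsStarForest

/-- If the star instance admits a solution with at most `t` exclusive splits, it admits
one in which every split is applied to `a` or to a descendant of `a` (i.e., to a vertex
whose ancestor is `a`). -/
theorem stmt5 (G : SG) (a : ℕ) (ha : a ∉ G.verts)
    (H : SG) (hv : H.verts = insert a G.verts)
    (he : ∀ e : Sym2 ℕ, e ∈ H.edges ↔ ∃ v ∈ G.verts, e = s(a, v))
    (t : ℕ)
    (h : MCSolutionVia H G.edges t fun _ _ => True) :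
    MCSolutionVia H G.edges t fun p v => p.anc v = a := by
  obtain ⟨n, f, hn, hf0, hstep, hsep⟩ := h
  have hI : ∀ i ≤ n, StarInvariant G a i (f i) := by
    intro i
    induction i with
    | zero => exact fun _ => hf0 ▸ StarInvariant.init hv he
    | succ i ih =>
      intro hi
      obtain ⟨v, hv', -⟩ := hstep i hi
      exact (ih (by omega)).step ha hv'
  obtain ⟨κ, hκcard, hκ⟩ := (hI n le_rfl).exists_coloring
  obtain ⟨m, q, C, μ, hm, ⟨g, hg0, hgm, hg⟩, hq, -, hsepq⟩ :=
    (IsStarForest.init ha hv he).exists_runVia_separating κ (G.verts.image κ)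
      (mem_singleton_self a) fun x hx _ => mem_image_of_mem κ hx
  refine ⟨m, g, by omega, hg0, hg, ?_⟩
  rintro e hxy x y rfl - -
  have hx : x ∈ G.verts := G.edges_mem _ hxy x (Sym2.mem_mk_left x y)
  have hy : y ∈ G.verts := G.edges_mem _ hxy y (Sym2.mem_mk_right x y)
  have hne : x ≠ y := fun h => G.edges_nd _ hxy (h ▸ Sym2.mk_isDiag_iff.2 rfl)
  rw [hgm, hq.graph_eq]
  exact not_reach_starSG hq.mapsTo hq.disjoint hx hy
    (hsepq x hx y hy rfl rfl (hκ x hx y hy hne (hsep _ hxy x y rfl)))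
end

section
/- Let G = (V, E) be a simple graph and k ≥ 0 an integer. Let U be a set of k + 1 new vertices disjoint from V, and let H be the correlation graph on vertex set U ∪ V in which the red edges are exactly the pairs {u, v} with uv ∈ E, and all other pairs of distinct vertices are blue. Then G has a vertex cover of size at most k if and only if H admits an overlapping clustering of cost at most k. -/
/-- `F` is an overlapping clustering of the correlation graph on vertex type `V`
with blue edges `blue` and red edges `red`: it covers every vertex, covers every
blue edge, and resolves every red edge. -/
def OC {V : Type*} (blue red : Finset (Sym2 V)) (F : Finset (Finset V)) : Prop :=
  (∀ v : V, ∃ X ∈ F, v ∈ X) ∧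
  (∀ u v : V, s(u,v) ∈ blue → ∃ X ∈ F, u ∈ X ∧ v ∈ X) ∧
  (∀ u v : V, s(u,v) ∈ red → ∃ X ∈ F, ∃ Y ∈ F, X ≠ Y ∧ u ∈ X ∧ v ∈ Y)

/-- The cost of a covering: for each vertex, the number of clusters containing it,
minus one. -/
def clCost {V : Type*} [Fintype V] [DecidableEq V] (F : Finset (Finset V)) : ℕ :=
  ∑ v : V, ((F.filter fun X => v ∈ X).card - 1)

theorem stmt6 (V : Type) [Fintype V] [DecidableEq V]
    (E : Finset (Sym2 V)) (hE : ∀ e ∈ E, ¬ e.IsDiag) (k : ℕ)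
    (blue red : Finset (Sym2 (Fin (k+1) ⊕ V)))
    (hred : ∀ e, e ∈ red ↔ ∃ u v : V, s(u,v) ∈ E ∧ e = s(Sum.inr u, Sum.inr v))
    (hblue : ∀ e, e ∈ blue ↔ (¬ e.IsDiag ∧ e ∉ red)) :
    (∃ S : Finset V, S.card ≤ k ∧ ∀ e ∈ E, ∃ x ∈ S, x ∈ e) ↔
    (∃ F, OC blue red F ∧ clCost F ≤ k) := by
  constructor
  · rintro ⟨S, hScard, hScov⟩
    set f : V → Finset (Fin (k+1) ⊕ V) := fun v => {Sum.inr v} with hf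
    have hne : ∀ x : V, f x ≠ Finset.univ := by
      intro x h
      have h0 := Finset.mem_univ (Sum.inl 0 : Fin (k+1) ⊕ V)
      rw [← h] at h0
      simp [f] at h0
    refine ⟨insert Finset.univ (S.image f), ⟨?_, ?_, ?_⟩, ?_⟩
    · intro v
      exact ⟨Finset.univ, Finset.mem_insert_self _ _, Finset.mem_univ v⟩
    · intro u v _
      exact ⟨Finset.univ, Finset.mem_insert_self _ _, Finset.mem_univ _, Finset.mem_univ _⟩
    · intro u v hmem
      rw [hred] at hmem
      obtain ⟨a, b, hab, heq⟩ := hmem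
      rw [Sym2.eq_iff] at heq
      obtain ⟨x, hxS, hxe⟩ := hScov _ hab
      have hxmem : x = a ∨ x = b := by
        rw [Sym2.mem_iff] at hxe; exact hxe
      have hfx : f x ∈ insert Finset.univ (S.image f) :=
        Finset.mem_insert_of_mem (Finset.mem_image_of_mem f hxS)
      have huniv : (Finset.univ : Finset (Fin (k+1) ⊕ V)) ∈ insert Finset.univ (S.image f) :=
        Finset.mem_insert_self _ _
      rcases heq with ⟨hu, hv⟩ | ⟨hu, hv⟩ <;> rcases hxmem with rfl | rfl
      · exact ⟨f x, hfx, Finset.univ, huniv, hne x, by simp [f, hu], Finset.mem_univ _⟩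
      · exact ⟨Finset.univ, huniv, f x, hfx, Ne.symm (hne x), Finset.mem_univ _, by simp [f, hv]⟩
      · exact ⟨Finset.univ, huniv, f x, hfx, Ne.symm (hne x), Finset.mem_univ _, by simp [f, hv]⟩
      · exact ⟨f x, hfx, Finset.univ, huniv, hne x, by simp [f, hu], Finset.mem_univ _⟩
    · -- cost bound
      have hsub : ∀ w : Fin (k+1) ⊕ V,
          ((insert Finset.univ (S.image f)).filter fun X => w ∈ X) ⊆
            insert Finset.univ ((S.filter fun v => w = Sum.inr v).image f) := by
        intro w Z hZ
        rw [Finset.mem_filter] at hZ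
        obtain ⟨hZF, hwZ⟩ := hZ
        rcases Finset.mem_insert.1 hZF with rfl | hZim
        · exact Finset.mem_insert_self _ _
        · obtain ⟨v, hvS, rfl⟩ := Finset.mem_image.1 hZim
          have : w = Sum.inr v := by simpa [f] using hwZ
          exact Finset.mem_insert_of_mem
            (Finset.mem_image_of_mem f (Finset.mem_filter.2 ⟨hvS, this⟩))
      have hterm : ∀ w : Fin (k+1) ⊕ V,
          ((insert Finset.univ (S.image f)).filter fun X => w ∈ X).card - 1 ≤
            (S.filter fun v => w = Sum.inr v).card := by
        intro w
        have h1 := Finset.card_le_card (hsub w)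
        have h2 := Finset.card_insert_le (Finset.univ : Finset (Fin (k+1) ⊕ V))
          ((S.filter fun v => w = Sum.inr v).image f)
        have h3 := Finset.card_image_le (s := S.filter fun v => w = Sum.inr v) (f := f)
        omega
      calc clCost (insert Finset.univ (S.image f))
          ≤ ∑ w : Fin (k+1) ⊕ V, (S.filter fun v => w = Sum.inr v).card :=
            Finset.sum_le_sum fun w _ => hterm w
        _ = ∑ w : Fin (k+1) ⊕ V, ∑ v ∈ S, (if w = Sum.inr v then 1 else 0) := by
            simp only [Finset.card_filter]
        _ = ∑ v ∈ S, ∑ w : Fin (k+1) ⊕ V, (if w = Sum.inr v then 1 else 0) :=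
            Finset.sum_comm
        _ = ∑ v ∈ S, 1 := by
            refine Finset.sum_congr rfl fun v _ => ?_
            simp
        _ = S.card := by simp
        _ ≤ k := hScard
  · rintro ⟨F, ⟨hcov, hblueC, hredC⟩, hcost⟩
    refine ⟨Finset.univ.filter fun v : V => 2 ≤ (F.filter fun X => Sum.inr v ∈ X).card, ?_, ?_⟩
    · -- card bound
      have h1 : (Finset.univ.filter fun v : V =>
            2 ≤ (F.filter fun X => Sum.inr v ∈ X).card).card ≤
          ∑ v : V, ((F.filter fun X => Sum.inr v ∈ X).card - 1) := by
        rw [Finset.card_eq_sum_ones]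
        refine le_trans (Finset.sum_le_sum fun v hv => ?_)
          (Finset.sum_le_sum_of_subset (Finset.filter_subset _ _))
        have := (Finset.mem_filter.1 hv).2
        omega
      have h2 : ∑ v : V, ((F.filter fun X => Sum.inr v ∈ X).card - 1) ≤ clCost F := by
        unfold clCost
        rw [Fintype.sum_sum_type]
        exact Nat.le_add_left _ _
      omega
    · intro e he
      induction e using Sym2.ind with
      | _ u v =>
      have hr : s(Sum.inr u, Sum.inr v) ∈ red := (hred _).2 ⟨u, v, he, rfl⟩
      obtain ⟨X, hX, Y, hY, hXY, huX, hvY⟩ := hredC _ _ hr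
      by_contra hno
      push_neg at hno
      have hu : ¬ 2 ≤ (F.filter fun X => Sum.inr u ∈ X).card := by
        intro h2
        exact hno u (Finset.mem_filter.2 ⟨Finset.mem_univ _, h2⟩) (Sym2.mem_mk_left u v)
      have hv : ¬ 2 ≤ (F.filter fun X => Sum.inr v ∈ X).card := by
        intro h2
        exact hno v (Finset.mem_filter.2 ⟨Finset.mem_univ _, h2⟩) (Sym2.mem_mk_right u v)
      have hXonly : ∀ Z ∈ F, Sum.inr u ∈ Z → Z = X := by
        intro Z hZ huZ
        by_contra hne
        exact hu (Finset.one_lt_card.2 ⟨Z, Finset.mem_filter.2 ⟨hZ, huZ⟩,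
          X, Finset.mem_filter.2 ⟨hX, huX⟩, hne⟩)
      have hYonly : ∀ Z ∈ F, Sum.inr v ∈ Z → Z = Y := by
        intro Z hZ hvZ
        by_contra hne
        exact hv (Finset.one_lt_card.2 ⟨Z, Finset.mem_filter.2 ⟨hZ, hvZ⟩,
          Y, Finset.mem_filter.2 ⟨hY, hvY⟩, hne⟩)
      have hnotred : ∀ (i : Fin (k+1)) (w : V), s(Sum.inl i, Sum.inr w) ∉ red := by
        intro i w hmem
        rw [hred] at hmem
        obtain ⟨a, b, _, heq⟩ := hmem
        rw [Sym2.eq_iff] at heq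
        rcases heq with ⟨h1, _⟩ | ⟨h1, _⟩ <;> simp at h1
      have hinl : ∀ i : Fin (k+1), Sum.inl i ∈ X ∧ Sum.inl i ∈ Y := by
        intro i
        constructor
        · have hb : s(Sum.inl i, Sum.inr u) ∈ blue := by
            rw [hblue]
            exact ⟨by simp, hnotred i u⟩
          obtain ⟨Z, hZ, hiZ, huZ⟩ := hblueC _ _ hb
          rw [hXonly Z hZ huZ] at hiZ
          exact hiZ
        · have hb : s(Sum.inl i, Sum.inr v) ∈ blue := by
            rw [hblue]
            exact ⟨by simp, hnotred i v⟩
          obtain ⟨Z, hZ, hiZ, hvZ⟩ := hblueC _ _ hb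
          rw [hYonly Z hZ hvZ] at hiZ
          exact hiZ
      have hbig : ∀ i : Fin (k+1), 2 ≤ (F.filter fun Z => Sum.inl i ∈ Z).card := by
        intro i
        exact Finset.one_lt_card.2 ⟨X, Finset.mem_filter.2 ⟨hX, (hinl i).1⟩,
          Y, Finset.mem_filter.2 ⟨hY, (hinl i).2⟩, hXY⟩
      have : k + 1 ≤ clCost F := by
        unfold clCost
        rw [Fintype.sum_sum_type]
        calc k + 1 = ∑ _i : Fin (k+1), 1 := by simp
          _ ≤ ∑ i : Fin (k+1), ((F.filter fun Z => Sum.inl i ∈ Z).card - 1) :=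
            Finset.sum_le_sum fun i _ => by have := hbig i; omega
          _ ≤ _ := Nat.le_add_right _ _
      omega
end

section
/- Let S be a bad star with center x and ℓ ≥ 2 leaves, viewed as a correlation graph on its ℓ + 1 vertices (all edges from x to the leaves are blue, all edges between distinct leaves are red). Then every overlapping clustering of S has cost at least ℓ − 1. -/
/-- A bad star with center `0` and leaves `1, …, ℓ` (`ℓ ≥ 2`), viewed as a
correlation graph on `Fin (ℓ+1)`: every overlapping clustering has cost at
least `ℓ - 1`. -/
theorem stmt8 (ℓ : ℕ) (hℓ : 2 ≤ ℓ)
    (blue red : Finset (Sym2 (Fin (ℓ+1))))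
    (hblue : ∀ e, e ∈ blue ↔ ∃ i : Fin (ℓ+1), i ≠ 0 ∧ e = s(0, i))
    (hred : ∀ e, e ∈ red ↔ ∃ i j : Fin (ℓ+1), i ≠ 0 ∧ j ≠ 0 ∧ i ≠ j ∧ e = s(i, j))
    (F : Finset (Finset (Fin (ℓ+1)))) (hF : OC blue red F) :
    ℓ - 1 ≤ clCost F := by
  classical
  obtain ⟨hcov, hblueC, hredC⟩ := hF
  have hd1 : ∀ v : Fin (ℓ+1), 1 ≤ (F.filter fun X => v ∈ X).card := by
    intro v
    obtain ⟨X, hXF, hvX⟩ := hcov v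
    exact Finset.card_pos.mpr ⟨X, Finset.mem_filter.mpr ⟨hXF, hvX⟩⟩
  have hg : ∀ i : Fin ℓ, ∃ X : Finset (Fin (ℓ+1)),
      (F.filter fun X' => i.succ ∈ X').card = 1 →
      (F.filter fun X' => i.succ ∈ X') = {X} := by
    intro i
    by_cases h : (F.filter fun X' => i.succ ∈ X').card = 1
    · obtain ⟨X, hX⟩ := Finset.card_eq_one.mp h
      exact ⟨X, fun _ => hX⟩
    · exact ⟨∅, fun h' => absurd h' h⟩
  choose g hgspec using hg
  set K : Finset (Fin ℓ) :=
    Finset.univ.filter (fun i => (F.filter fun X' => i.succ ∈ X').card = 1) with hK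
  have hmemK : ∀ i ∈ K, (F.filter fun X' => i.succ ∈ X').card = 1 := by
    intro i hi
    exact (Finset.mem_filter.mp hi).2
  have hmem : ∀ i ∈ K, g i ∈ F := by
    intro i hi
    have h2 : g i ∈ F.filter fun X' => i.succ ∈ X' := by
      rw [hgspec i (hmemK i hi)]; simp
    exact (Finset.mem_filter.mp h2).1
  have hzero : ∀ i ∈ K, (0 : Fin (ℓ+1)) ∈ g i := by
    intro i hi
    have hb : s((0:Fin (ℓ+1)), i.succ) ∈ blue :=
      (hblue _).mpr ⟨i.succ, Fin.succ_ne_zero i, rfl⟩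
    obtain ⟨X, hXF, h0X, hiX⟩ := hblueC 0 i.succ hb
    have hX : X ∈ F.filter fun X' => i.succ ∈ X' := Finset.mem_filter.mpr ⟨hXF, hiX⟩
    rw [hgspec i (hmemK i hi)] at hX
    simp only [Finset.mem_singleton] at hX
    rwa [← hX]
  have hinj : Set.InjOn g K := by
    intro i hi j hj hij
    by_contra hne
    have hijs : i.succ ≠ j.succ := fun h => hne (Fin.succ_injective _ h)
    have hr : s(i.succ, j.succ) ∈ red :=
      (hred _).mpr ⟨i.succ, j.succ, Fin.succ_ne_zero i, Fin.succ_ne_zero j, hijs, rfl⟩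
    obtain ⟨X, hXF, Y, hYF, hXY, hiX, hjY⟩ := hredC _ _ hr
    have hX : X ∈ F.filter fun X' => i.succ ∈ X' := Finset.mem_filter.mpr ⟨hXF, hiX⟩
    have hY : Y ∈ F.filter fun X' => j.succ ∈ X' := Finset.mem_filter.mpr ⟨hYF, hjY⟩
    rw [hgspec i (hmemK i hi)] at hX
    rw [hgspec j (hmemK j hj)] at hY
    simp only [Finset.mem_singleton] at hX hY
    exact hXY (by rw [hX, hY, hij])
  have hcard : K.card ≤ (F.filter fun X => (0 : Fin (ℓ+1)) ∈ X).card := by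
    apply Finset.card_le_card_of_injOn g
    · intro i hi
      exact Finset.mem_filter.mpr ⟨hmem i hi, hzero i hi⟩
    · exact hinj
  have hsum : clCost F = ((F.filter fun X => (0 : Fin (ℓ+1)) ∈ X).card - 1)
      + ∑ i : Fin ℓ, ((F.filter fun X => i.succ ∈ X).card - 1) := by
    rw [clCost, Fin.sum_univ_succ]
  have hKle : K.card ≤ ℓ := le_trans (Finset.card_le_univ K) (by simp)
  have hsum2 : ℓ - K.card ≤ ∑ i : Fin ℓ, ((F.filter fun X => i.succ ∈ X).card - 1) := by
    have hbound : ∀ i ∈ Finset.univ \ K, 1 ≤ (F.filter fun X => i.succ ∈ X).card - 1 := by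
      intro i hi
      have h1 : ¬ ((F.filter fun X' => i.succ ∈ X').card = 1) := by
        simp only [hK, Finset.mem_sdiff, Finset.mem_filter, Finset.mem_univ, true_and] at hi
        exact hi
      have h2 := hd1 i.succ
      omega
    calc ℓ - K.card = (Finset.univ \ K).card := by
          rw [Finset.card_sdiff_of_subset (Finset.subset_univ K)]; simp
      _ = ∑ _i ∈ Finset.univ \ K, 1 := by simp
      _ ≤ ∑ i ∈ Finset.univ \ K, ((F.filter fun X => i.succ ∈ X).card - 1) :=
          Finset.sum_le_sum hbound
      _ ≤ ∑ i : Fin ℓ, ((F.filter fun X => i.succ ∈ X).card - 1) :=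
          Finset.sum_le_sum_of_subset Finset.sdiff_subset
  have h0 := hd1 0
  omega
end

section
/- Let G be a correlation graph containing a blue clique C with |C| ≥ k + 1. Then every overlapping clustering F of G with cost at most k contains a set X ∈ F with C ⊆ X. -/
/-- If a correlation graph contains a blue clique `C` with at least `k+1` vertices,
then every overlapping clustering of cost at most `k` has a cluster containing all
of `C`. -/
theorem stmt10 (V : Type) [Fintype V] [DecidableEq V]
    (blue red : Finset (Sym2 V))
    (hdisj : Disjoint blue red) (hnd : ∀ e ∈ blue ∪ red, ¬ e.IsDiag)
    (hcomp : ∀ u v : V, u ≠ v → s(u,v) ∈ blue ∨ s(u,v) ∈ red)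
    (C : Finset V) (hC : ∀ u ∈ C, ∀ v ∈ C, u ≠ v → s(u,v) ∈ blue)
    (k : ℕ) (hcard : k + 1 ≤ C.card)
    (F : Finset (Finset V)) (hF : OC blue red F) (hcost : clCost F ≤ k) :
    ∃ X ∈ F, C ⊆ X := by
  obtain ⟨hcov, hblue, hred⟩ := hF
  -- some vertex of C is in exactly one cluster
  have hsum : ∑ v ∈ C, ((F.filter fun X => v ∈ X).card - 1) ≤ k := by
    refine le_trans ?_ hcost
    exact Finset.sum_le_sum_of_subset (Finset.subset_univ C)
  have hex : ∃ c ∈ C, (F.filter fun X => c ∈ X).card ≤ 1 := by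
    by_contra h
    push_neg at h
    have : C.card • 1 ≤ ∑ v ∈ C, ((F.filter fun X => v ∈ X).card - 1) :=
      Finset.card_nsmul_le_sum C _ 1 (fun v hv => by have := h v hv; omega)
    simp at this
    omega
  obtain ⟨c, hcC, hc1⟩ := hex
  obtain ⟨X0, hX0F, hcX0⟩ := hcov c
  have hX0mem : X0 ∈ F.filter fun X => c ∈ X := Finset.mem_filter.mpr ⟨hX0F, hcX0⟩
  refine ⟨X0, hX0F, fun u hu => ?_⟩
  by_cases huc : u = c
  · subst huc; exact hcX0
  · obtain ⟨Y, hYF, hcY, huY⟩ := hblue c u (hC c hcC u hu (fun h => huc h.symm))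
    have hYmem : Y ∈ F.filter fun X => c ∈ X := Finset.mem_filter.mpr ⟨hYF, hcY⟩
    have : Y = X0 := by
      by_contra hne
      have : 2 ≤ (F.filter fun X => c ∈ X).card :=
        Finset.one_lt_card.mpr ⟨Y, hYmem, X0, hX0mem, hne⟩
      omega
    exact this ▸ huY
end

section
/- Let G = (V, B, R) be a correlation graph and let C ⊆ V be a blue clique such that every edge with exactly one endpoint in C is red. Then for every non-negative integer k, G admits an overlapping clustering of cost at most k if and only if the induced correlation subgraph on V ∖ C admits an overlapping clustering of cost at most k. -/
/-- `F` is an overlapping clustering of the correlation subgraph induced on the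
vertex set `W` (with blue edges `blue` and red edges `red`): all clusters are
subsets of `W`, every vertex of `W` is covered, every blue edge inside `W` is
covered, and every red edge inside `W` is resolved. -/
def OCon {V : Type*} (W : Finset V) (blue red : Finset (Sym2 V))
    (F : Finset (Finset V)) : Prop :=
  (∀ X ∈ F, X ⊆ W) ∧ (∀ v ∈ W, ∃ X ∈ F, v ∈ X) ∧
  (∀ u v : V, u ∈ W → v ∈ W → s(u,v) ∈ blue → ∃ X ∈ F, u ∈ X ∧ v ∈ X) ∧
  (∀ u v : V, u ∈ W → v ∈ W → s(u,v) ∈ red →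
    ∃ X ∈ F, ∃ Y ∈ F, X ≠ Y ∧ u ∈ X ∧ v ∈ Y)

/-- The cost of a covering of the vertex set `W`. -/
def costOn {V : Type*} [DecidableEq V] (W : Finset V) (F : Finset (Finset V)) : ℕ :=
  ∑ v ∈ W, ((F.filter fun X => v ∈ X).card - 1)

/-- Reduction rule: if `C` is a blue clique such that every edge leaving `C` is red,
then removing `C` does not change whether an overlapping clustering of cost at most
`k` exists. -/
theorem stmt11 (V : Type) [Fintype V] [DecidableEq V]
    (blue red : Finset (Sym2 V))
    (hdisj : Disjoint blue red) (hnd : ∀ e ∈ blue ∪ red, ¬ e.IsDiag)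
    (hcomp : ∀ u v : V, u ≠ v → s(u,v) ∈ blue ∨ s(u,v) ∈ red)
    (C : Finset V) (hCblue : ∀ u ∈ C, ∀ v ∈ C, u ≠ v → s(u,v) ∈ blue)
    (hCred : ∀ u v : V, u ∈ C → v ∉ C → s(u,v) ∈ red)
    (k : ℕ) :
    (∃ F, OCon Finset.univ blue red F ∧ costOn Finset.univ F ≤ k) ↔
    (∃ F, OCon (Finset.univ \ C) blue red F ∧ costOn (Finset.univ \ C) F ≤ k) := by
  classical
  have hdiag : ∀ u v : V, s(u,v) ∈ red → u ≠ v := by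
    intro u v h rfl
    exact hnd _ (Finset.mem_union_right _ h) (Sym2.mk_isDiag_iff.2 rfl)
  constructor
  · rintro ⟨F, ⟨hsub, hcov, hblue, hred⟩, hcost⟩
    set img : Finset (Finset V) := F.image (fun X => X \ C) with himg
    set P : Finset V := (Finset.univ \ C).filter
      (fun u => (img.filter (fun Z => u ∈ Z)).card < (F.filter (fun X => u ∈ X)).card)
      with hPdef
    set F' : Finset (Finset V) := img ∪ P.image (fun u => ({u} : Finset V)) with hF'
    have himgf : ∀ v : V, v ∉ C →
        img.filter (fun Z => v ∈ Z)
          = (F.filter (fun X => v ∈ X)).image (fun X => X \ C) := by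
      intro v hv
      ext Z
      simp only [himg, Finset.mem_filter, Finset.mem_image]
      constructor
      · rintro ⟨⟨X, hX, rfl⟩, hvZ⟩
        exact ⟨X, ⟨hX, (Finset.mem_sdiff.1 hvZ).1⟩, rfl⟩
      · rintro ⟨X, ⟨hX, hvX⟩, rfl⟩
        exact ⟨⟨X, hX, rfl⟩, Finset.mem_sdiff.2 ⟨hvX, hv⟩⟩
    have hcard : ∀ v : V, v ∉ C →
        (img.filter (fun Z => v ∈ Z)).card ≤ (F.filter (fun X => v ∈ X)).card := by
      intro v hv
      rw [himgf v hv]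
      exact Finset.card_image_le
    refine ⟨F', ⟨?_, ?_, ?_, ?_⟩, ?_⟩
    · intro X hX
      rcases Finset.mem_union.1 hX with h | h
      · rcases Finset.mem_image.1 h with ⟨Y, _, rfl⟩
        intro x hx
        exact Finset.mem_sdiff.2 ⟨Finset.mem_univ x, (Finset.mem_sdiff.1 hx).2⟩
      · rcases Finset.mem_image.1 h with ⟨u, hu, rfl⟩
        intro x hx
        rw [Finset.mem_singleton] at hx
        subst hx
        exact (Finset.mem_filter.1 (hPdef ▸ hu)).1
    · intro v hv
      obtain ⟨X, hX, hvX⟩ := hcov v (Finset.mem_univ v)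
      exact ⟨X \ C, Finset.mem_union_left _ (Finset.mem_image_of_mem _ hX),
        Finset.mem_sdiff.2 ⟨hvX, (Finset.mem_sdiff.1 hv).2⟩⟩
    · intro u v hu hv hb
      obtain ⟨X, hX, huX, hvX⟩ := hblue u v (Finset.mem_univ u) (Finset.mem_univ v) hb
      exact ⟨X \ C, Finset.mem_union_left _ (Finset.mem_image_of_mem _ hX),
        Finset.mem_sdiff.2 ⟨huX, (Finset.mem_sdiff.1 hu).2⟩,
        Finset.mem_sdiff.2 ⟨hvX, (Finset.mem_sdiff.1 hv).2⟩⟩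
    · intro u v hu hv hr
      have huC := (Finset.mem_sdiff.1 hu).2
      have hvC := (Finset.mem_sdiff.1 hv).2
      have huv : u ≠ v := hdiag u v hr
      obtain ⟨X, hX, Y, hY, hXY, huX, hvY⟩ :=
        hred u v (Finset.mem_univ u) (Finset.mem_univ v) hr
      by_cases hZZ : X \ C = Y \ C
      · set Z := Y \ C with hZ
        have hZimg : Z ∈ img := Finset.mem_image_of_mem _ hY
        have huZ : u ∈ Z := hZZ ▸ (Finset.mem_sdiff.2 ⟨huX, huC⟩)
        have hvZ : v ∈ Z := Finset.mem_sdiff.2 ⟨hvY, hvC⟩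
        by_cases hex : ∃ Z' ∈ img, u ∈ Z' ∧ Z' ≠ Z
        · obtain ⟨Z', hZ', huZ', hZ'Z⟩ := hex
          exact ⟨Z', Finset.mem_union_left _ hZ', Z, Finset.mem_union_left _ hZimg,
            hZ'Z, huZ', hvZ⟩
        · push_neg at hex
          have h1 : img.filter (fun Z' => u ∈ Z') = {Z} :=
            Finset.eq_singleton_iff_unique_mem.2
              ⟨Finset.mem_filter.2 ⟨hZimg, huZ⟩, fun Z' hZ' =>
                hex Z' (Finset.mem_filter.1 hZ').1 (Finset.mem_filter.1 hZ').2⟩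
          have h2 : 2 ≤ (F.filter (fun X' => u ∈ X')).card := by
            have huY : u ∈ Y := (Finset.mem_sdiff.1 huZ).1
            have hsub2 : ({X, Y} : Finset (Finset V)) ⊆ F.filter (fun X' => u ∈ X') := by
              intro W hW
              rcases Finset.mem_insert.1 hW with rfl | hW
              · exact Finset.mem_filter.2 ⟨hX, huX⟩
              · rw [Finset.mem_singleton] at hW
                subst hW
                exact Finset.mem_filter.2 ⟨hY, huY⟩
            calc 2 = ({X, Y} : Finset (Finset V)).card := (Finset.card_pair hXY).symm
              _ ≤ _ := Finset.card_le_card hsub2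
          have huP : u ∈ P := by
            rw [hPdef, Finset.mem_filter]
            refine ⟨hu, ?_⟩
            rw [h1, Finset.card_singleton]
            omega
          refine ⟨{u}, Finset.mem_union_right _ (Finset.mem_image_of_mem _ huP), Z,
            Finset.mem_union_left _ hZimg, ?_, Finset.mem_singleton_self u, hvZ⟩
          intro h
          rw [← h, Finset.mem_singleton] at hvZ
          exact huv hvZ.symm
      · exact ⟨X \ C, Finset.mem_union_left _ (Finset.mem_image_of_mem _ hX),
          Y \ C, Finset.mem_union_left _ (Finset.mem_image_of_mem _ hY), hZZ,
          Finset.mem_sdiff.2 ⟨huX, huC⟩, Finset.mem_sdiff.2 ⟨hvY, hvC⟩⟩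
    · have step1 : costOn (Finset.univ \ C) F' ≤ costOn (Finset.univ \ C) F := by
        apply Finset.sum_le_sum
        intro v hv
        have hvC := (Finset.mem_sdiff.1 hv).2
        apply Nat.sub_le_sub_right
        have hsplit : (F'.filter (fun X => v ∈ X)).card
            ≤ (img.filter (fun Z => v ∈ Z)).card
              + (((P.image (fun u => ({u} : Finset V))).filter (fun Z => v ∈ Z)).card) := by
          rw [hF', Finset.filter_union]
          exact Finset.card_union_le _ _
        by_cases hvP : v ∈ P
        · have hle1 : ((P.image (fun u => ({u} : Finset V))).filter
              (fun Z => v ∈ Z)).card ≤ 1 := by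
            apply Finset.card_le_one.2
            intro a ha b hb
            obtain ⟨⟨x, _, rfl⟩, hva⟩ := by
              simpa only [Finset.mem_filter, Finset.mem_image] using ha
            obtain ⟨⟨y, _, rfl⟩, hvb⟩ := by
              simpa only [Finset.mem_filter, Finset.mem_image] using hb
            rw [Finset.mem_singleton] at hva hvb
            rw [← hva, ← hvb]
          have hlt : (img.filter (fun Z => v ∈ Z)).card
              < (F.filter (fun X => v ∈ X)).card :=
            (Finset.mem_filter.1 hvP).2
          omega
        · have hz : ((P.image (fun u => ({u} : Finset V))).filter
              (fun Z => v ∈ Z)) = ∅ := by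
            apply Finset.filter_eq_empty_iff.2
            intro Z hZ
            obtain ⟨x, hx, rfl⟩ := Finset.mem_image.1 hZ
            intro hvx
            rw [Finset.mem_singleton] at hvx
            exact hvP (hvx ▸ hx)
          have := hcard v hvC
          rw [hz] at hsplit
          simp only [Finset.card_empty] at hsplit
          omega
      have step2 : costOn (Finset.univ \ C) F ≤ costOn Finset.univ F :=
        Finset.sum_le_sum_of_subset (Finset.sdiff_subset)
      omega
  · rintro ⟨F, ⟨hsub, hcov, hblue, hred⟩, hcost⟩
    have hWmem : ∀ v : V, v ∉ C → v ∈ (Finset.univ \ C : Finset V) := fun v hv =>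
      Finset.mem_sdiff.2 ⟨Finset.mem_univ v, hv⟩
    refine ⟨F ∪ {C}, ⟨fun X _ => Finset.subset_univ X, ?_, ?_, ?_⟩, ?_⟩
    · intro v _
      by_cases hvC : v ∈ C
      · exact ⟨C, Finset.mem_union_right _ (Finset.mem_singleton_self C), hvC⟩
      · obtain ⟨X, hX, hvX⟩ := hcov v (hWmem v hvC)
        exact ⟨X, Finset.mem_union_left _ hX, hvX⟩
    · intro u v _ _ hb
      by_cases huC : u ∈ C <;> by_cases hvC : v ∈ C
      · exact ⟨C, Finset.mem_union_right _ (Finset.mem_singleton_self C), huC, hvC⟩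
      · exact absurd (hCred u v huC hvC) (Finset.disjoint_left.1 hdisj hb)
      · have : s(v,u) ∈ red := hCred v u hvC huC
        rw [Sym2.eq_swap] at this
        exact absurd this (Finset.disjoint_left.1 hdisj hb)
      · obtain ⟨X, hX, huX, hvX⟩ := hblue u v (hWmem u huC) (hWmem v hvC) hb
        exact ⟨X, Finset.mem_union_left _ hX, huX, hvX⟩
    · intro u v _ _ hr
      have huv : u ≠ v := hdiag u v hr
      by_cases huC : u ∈ C <;> by_cases hvC : v ∈ C
      · exact absurd hr (Finset.disjoint_left.1 hdisj (hCblue u huC v hvC huv))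
      · obtain ⟨Y, hY, hvY⟩ := hcov v (hWmem v hvC)
        refine ⟨C, Finset.mem_union_right _ (Finset.mem_singleton_self C), Y,
          Finset.mem_union_left _ hY, ?_, huC, hvY⟩
        intro h
        exact hvC (by rw [h]; exact hvY)
      · obtain ⟨X, hX, huX⟩ := hcov u (hWmem u huC)
        refine ⟨X, Finset.mem_union_left _ hX, C,
          Finset.mem_union_right _ (Finset.mem_singleton_self C), ?_, huX, hvC⟩
        intro h
        exact huC (by rw [← h]; exact huX)
      · obtain ⟨X, hX, Y, hY, hXY, huX, hvY⟩ := hred u v (hWmem u huC) (hWmem v hvC) hr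
        exact ⟨X, Finset.mem_union_left _ hX, Y, Finset.mem_union_left _ hY,
          hXY, huX, hvY⟩
    · have hFfilter : ∀ v : V, v ∉ C →
          ((F ∪ {C}).filter (fun X => v ∈ X)) = F.filter (fun X => v ∈ X) := by
        intro v hv
        rw [Finset.filter_union, Finset.filter_singleton, if_neg hv, Finset.union_empty]
      have hCterm : ∀ v ∈ C, (((F ∪ {C}).filter (fun X => v ∈ X)).card - 1) = 0 := by
        intro v hv
        have h1 : F.filter (fun X => v ∈ X) = ∅ := by
          apply Finset.filter_eq_empty_iff.2
          intro X hX hvX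
          exact (Finset.mem_sdiff.1 (hsub X hX hvX)).2 hv
        rw [Finset.filter_union, Finset.filter_singleton, if_pos hv, h1,
          Finset.empty_union, Finset.card_singleton]
      have hsplit : costOn Finset.univ (F ∪ {C})
          = costOn (Finset.univ \ C) (F ∪ {C}) + costOn C (F ∪ {C}) := by
        rw [costOn, costOn, costOn, Finset.sum_sdiff (Finset.subset_univ C)]
      have hzero : costOn C (F ∪ {C}) = 0 :=
        Finset.sum_eq_zero hCterm
      have heq : costOn (Finset.univ \ C) (F ∪ {C}) = costOn (Finset.univ \ C) F := by
        apply Finset.sum_congr rfl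
        intro v hv
        rw [hFfilter v (Finset.mem_sdiff.1 hv).2]
      rw [hsplit, hzero, heq, Nat.add_zero]
      exact hcost
end

section
/- Let G = (V, B, R) be a correlation graph, k ≥ 0, and S ⊆ V with |S| ≤ 3k. Suppose V ∖ S is partitioned into p ≥ 4k + 1 blue cliques C_1, …, C_p such that every edge between two distinct cliques C_i and C_j is red, and each clique C_i contains a vertex joined by a blue edge to some vertex of S. Then G contains a bad star forest of weight at least k + 1 (and hence admits no overlapping clustering of cost at most k). -/
/-- `(x, L)` is a bad star with center `x` and leaf set `L` (at least two leaves):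
all center-leaf edges are blue, all edges between distinct leaves are red. -/
def IsBadStar {V : Type*} [DecidableEq V] (blue red : Finset (Sym2 V))
    (x : V) (L : Finset V) : Prop :=
  2 ≤ L.card ∧ x ∉ L ∧ (∀ v ∈ L, s(x,v) ∈ blue) ∧
    ∀ u ∈ L, ∀ v ∈ L, u ≠ v → s(u,v) ∈ red

/-- A bad star forest: a collection of vertex-disjoint bad stars, each given by its
center and its leaf set. -/
def IsBadStarForest {V : Type*} [DecidableEq V] (blue red : Finset (Sym2 V))
    (T : Finset (V × Finset V)) : Prop :=
  (∀ p ∈ T, IsBadStar blue red p.1 p.2) ∧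
  ∀ p ∈ T, ∀ q ∈ T, p ≠ q → Disjoint (insert p.1 p.2) (insert q.1 q.2)

/-- The weight of a bad star forest: the sum over its stars of (number of leaves − 1). -/
def forestWeight {V : Type*} (T : Finset (V × Finset V)) : ℕ :=
  ∑ p ∈ T, (p.2.card - 1)

lemma fiber_ineq {V : Type*} [DecidableEq V] (s : Finset V) (m : V → ℕ)
    (h1 : ∀ v ∈ s, 1 ≤ m v)
    (h2 : ∀ a ∈ s, ∀ b ∈ s, a ≠ b → 2 ≤ m a ∨ 2 ≤ m b) :
    s.card ≤ (∑ v ∈ s, (m v - 1)) + 1 := by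
  classical
  set bad := s.filter (fun v => m v ≤ 1) with hbaddef
  have hb1 : bad.card ≤ 1 := by
    apply Finset.card_le_one.2
    intro a ha b hb
    rw [hbaddef, Finset.mem_filter] at ha hb
    by_contra hne
    rcases h2 a ha.1 b hb.1 hne with h | h <;> omega
  have hsub : bad ⊆ s := Finset.filter_subset _ _
  have hcard : (s \ bad).card = s.card - bad.card := Finset.card_sdiff_of_subset hsub
  have hge : (s \ bad).card ≤ ∑ v ∈ s \ bad, (m v - 1) := by
    rw [Finset.card_eq_sum_ones]
    apply Finset.sum_le_sum
    intro v hv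
    rw [Finset.mem_sdiff, hbaddef, Finset.mem_filter] at hv
    have := h1 v hv.1
    have h2' : ¬ m v ≤ 1 := fun h => hv.2 ⟨hv.1, h⟩
    omega
  have hle : ∑ v ∈ s \ bad, (m v - 1) ≤ ∑ v ∈ s, (m v - 1) :=
    Finset.sum_le_sum_of_subset (Finset.sdiff_subset)
  omega

lemma star_cost {V : Type*} [DecidableEq V] (blue red : Finset (Sym2 V))
    (F : Finset (Finset V)) (hF : OC blue red F)
    (x : V) (L : Finset V) (hstar : IsBadStar blue red x L) :
    L.card - 1 ≤ ∑ v ∈ insert x L, ((F.filter fun X => v ∈ X).card - 1) := by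
  classical
  obtain ⟨hL2, hxL, hblue, hred⟩ := hstar
  set mult : V → ℕ := fun v => (F.filter fun X => v ∈ X).card with hmult
  have hchoice : ∀ v : V, ∃ X : Finset V, v ∈ L → X ∈ F ∧ x ∈ X ∧ v ∈ X := by
    intro v
    by_cases hv : v ∈ L
    · obtain ⟨X, hX, hxX, hvX⟩ := hF.2.1 x v (hblue v hv)
      exact ⟨X, fun _ => ⟨hX, hxX, hvX⟩⟩
    · exact ⟨∅, fun h => absurd h hv⟩
  choose g hg using hchoice
  set Yx := F.filter (fun X => x ∈ X) with hYx
  set t := Yx.card with ht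
  set Im := L.image g with hIm
  have hgY : ∀ v ∈ L, g v ∈ Yx := by
    intro v hv
    obtain ⟨h1, h2, _⟩ := hg v hv
    exact Finset.mem_filter.2 ⟨h1, h2⟩
  have hImY : Im ⊆ Yx := by
    intro b hb
    obtain ⟨v, hv, rfl⟩ := Finset.mem_image.1 hb
    exact hgY v hv
  have hImt : Im.card ≤ t := Finset.card_le_card hImY
  have ht1 : 1 ≤ t := by
    obtain ⟨v, hv⟩ := Finset.card_pos.1 (by omega : 0 < L.card)
    exact Finset.card_pos.2 ⟨g v, hgY v hv⟩
  -- singleton fact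
  have hsing : ∀ v ∈ L, mult v ≤ 1 → ∀ X ∈ F, v ∈ X → X = g v := by
    intro v hv hm X hX hvX
    obtain ⟨h1, _, h3⟩ := hg v hv
    have hXf : X ∈ F.filter (fun X => v ∈ X) := Finset.mem_filter.2 ⟨hX, hvX⟩
    have hgf : g v ∈ F.filter (fun X => v ∈ X) := Finset.mem_filter.2 ⟨h1, h3⟩
    exact Finset.card_le_one.1 hm X hXf (g v) hgf
  -- per fiber
  have hper : ∀ b ∈ Im, (L.filter (fun v => g v = b)).card ≤
      (∑ v ∈ L.filter (fun v => g v = b), (mult v - 1)) + 1 := by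
    intro b _
    apply fiber_ineq
    · intro v hv
      rw [Finset.mem_filter] at hv
      obtain ⟨h1, _, h3⟩ := hg v hv.1
      exact Finset.card_pos.2 ⟨g v, Finset.mem_filter.2 ⟨h1, h3⟩⟩
    · intro a ha b' hb' hab
      rw [Finset.mem_filter] at ha hb'
      by_contra hc
      push_neg at hc
      obtain ⟨hca, hcb⟩ := hc
      obtain ⟨X, hX, Y, hY, hXY, haX, hbY⟩ := hF.2.2 a b' (hred a ha.1 b' hb'.1 hab)
      have e1 : X = g a := hsing a ha.1 (by omega) X hX haX
      have e2 : Y = g b' := hsing b' hb'.1 (by omega) Y hY hbY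
      exact hXY (by rw [e1, e2, ha.2, hb'.2])
  have hfibsum : ∑ b ∈ Im, ∑ v ∈ L.filter (fun v => g v = b), (mult v - 1)
      = ∑ v ∈ L, (mult v - 1) :=
    Finset.sum_fiberwise_of_maps_to (fun v hv => Finset.mem_image_of_mem g hv) _
  have hcardsum : L.card = ∑ b ∈ Im, (L.filter (fun v => g v = b)).card :=
    Finset.card_eq_sum_card_fiberwise (fun v hv => Finset.mem_image_of_mem g hv)
  have hA : L.card ≤ (∑ v ∈ L, (mult v - 1)) + Im.card := by
    calc L.card = ∑ b ∈ Im, (L.filter (fun v => g v = b)).card := hcardsum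
      _ ≤ ∑ b ∈ Im, ((∑ v ∈ L.filter (fun v => g v = b), (mult v - 1)) + 1) :=
          Finset.sum_le_sum hper
      _ = (∑ b ∈ Im, ∑ v ∈ L.filter (fun v => g v = b), (mult v - 1)) + Im.card := by
          rw [Finset.sum_add_distrib, Finset.sum_const, smul_eq_mul, mul_one]
      _ = (∑ v ∈ L, (mult v - 1)) + Im.card := by rw [hfibsum]
  have hins : ∑ v ∈ insert x L, (mult v - 1) = (t - 1) + ∑ v ∈ L, (mult v - 1) := by
    rw [Finset.sum_insert hxL]
  rw [show (∑ v ∈ insert x L, ((F.filter fun X => v ∈ X).card - 1))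
      = ∑ v ∈ insert x L, (mult v - 1) from rfl, hins]
  omega

lemma forest_cost {V : Type*} [Fintype V] [DecidableEq V]
    (blue red : Finset (Sym2 V)) (T : Finset (V × Finset V))
    (hT : IsBadStarForest blue red T) (F : Finset (Finset V)) (hF : OC blue red F) :
    forestWeight T ≤ clCost F := by
  classical
  set m : V → ℕ := fun v => (F.filter fun X => v ∈ X).card - 1 with hm
  have hpd : (↑T : Set (V × Finset V)).PairwiseDisjoint
      (fun p : V × Finset V => insert p.1 p.2) := by
    intro p hp q hq hne
    exact hT.2 p (Finset.mem_coe.1 hp) q (Finset.mem_coe.1 hq) hne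
  have h1 : ∑ v ∈ T.biUnion (fun p => insert p.1 p.2), m v
      = ∑ p ∈ T, ∑ v ∈ insert p.1 p.2, m v := Finset.sum_biUnion hpd
  have h2 : forestWeight T ≤ ∑ p ∈ T, ∑ v ∈ insert p.1 p.2, m v := by
    apply Finset.sum_le_sum
    intro p hp
    exact star_cost blue red F hF p.1 p.2 (hT.1 p hp)
  have h3 : ∑ v ∈ T.biUnion (fun p => insert p.1 p.2), m v ≤ ∑ v : V, m v :=
    Finset.sum_le_sum_of_subset (Finset.subset_univ _)
  calc forestWeight T ≤ ∑ p ∈ T, ∑ v ∈ insert p.1 p.2, m v := h2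
    _ = ∑ v ∈ T.biUnion (fun p => insert p.1 p.2), m v := h1.symm
    _ ≤ ∑ v : V, m v := h3
    _ = clCost F := rfl

/-- If `V ∖ S` is partitioned into at least `4k+1` blue cliques with all edges between
distinct cliques red, `|S| ≤ 3k`, and each clique sends a blue edge to `S`, then the
graph contains a bad star forest of weight at least `k+1`, and hence admits no
overlapping clustering of cost at most `k`. -/
theorem stmt12 (V : Type) [Fintype V] [DecidableEq V]
    (blue red : Finset (Sym2 V))
    (hdisj : Disjoint blue red) (hnd : ∀ e ∈ blue ∪ red, ¬ e.IsDiag)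
    (hcomp : ∀ u v : V, u ≠ v → s(u,v) ∈ blue ∨ s(u,v) ∈ red)
    (k : ℕ) (S : Finset V) (hS : S.card ≤ 3 * k)
    (𝒞 : Finset (Finset V)) (hp : 4 * k + 1 ≤ 𝒞.card)
    (hne : ∀ C ∈ 𝒞, C.Nonempty)
    (hdisjC : ∀ C ∈ 𝒞, ∀ C' ∈ 𝒞, C ≠ C' → Disjoint C C')
    (hpart : ∀ v : V, v ∉ S ↔ ∃ C ∈ 𝒞, v ∈ C)
    (hclique : ∀ C ∈ 𝒞, ∀ u ∈ C, ∀ v ∈ C, u ≠ v → s(u,v) ∈ blue)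
    (hbetween : ∀ C ∈ 𝒞, ∀ C' ∈ 𝒞, C ≠ C' → ∀ u ∈ C, ∀ v ∈ C', s(u,v) ∈ red)
    (htoS : ∀ C ∈ 𝒞, ∃ u ∈ C, ∃ w ∈ S, s(u,w) ∈ blue) :
    (∃ T : Finset (V × Finset V), IsBadStarForest blue red T ∧
      k + 1 ≤ forestWeight T) ∧
    ∀ F : Finset (Finset V), OC blue red F → ¬ clCost F ≤ k := by
  classical
  obtain ⟨C0, hC0⟩ : 𝒞.Nonempty := Finset.card_pos.1 (by omega)
  obtain ⟨v0, _⟩ := hne C0 hC0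
  have hchoice : ∀ C : Finset V, ∃ p : V × V,
      C ∈ 𝒞 → p.1 ∈ C ∧ p.2 ∈ S ∧ s(p.1, p.2) ∈ blue := by
    intro C
    by_cases hC : C ∈ 𝒞
    · obtain ⟨u, hu, w, hw, hb⟩ := htoS C hC
      exact ⟨(u, w), fun _ => ⟨hu, hw, hb⟩⟩
    · exact ⟨(v0, v0), fun h => absurd h hC⟩
  choose f hf using hchoice
  set u : Finset V → V := fun C => (f C).1 with hu
  set w : Finset V → V := fun C => (f C).2 with hw
  have huC : ∀ C ∈ 𝒞, u C ∈ C := fun C h => (hf C h).1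
  have hwS : ∀ C ∈ 𝒞, w C ∈ S := fun C h => (hf C h).2.1
  have hub : ∀ C ∈ 𝒞, s(u C, w C) ∈ blue := fun C h => (hf C h).2.2
  have hunotS : ∀ C ∈ 𝒞, u C ∉ S := fun C h => (hpart (u C)).2 ⟨C, h, huC C h⟩
  have huinj : ∀ C ∈ 𝒞, ∀ C' ∈ 𝒞, u C = u C' → C = C' := by
    intro C hC C' hC' he
    by_contra hcc
    exact (Finset.disjoint_left.1 (hdisjC C hC C' hC' hcc)) (huC C hC) (he ▸ huC C' hC')
  set W := 𝒞.image w with hW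
  have hWS : ∀ a ∈ W, a ∈ S := by
    intro a ha
    obtain ⟨C, hC, rfl⟩ := Finset.mem_image.1 ha
    exact hwS C hC
  set fib : V → Finset (Finset V) := fun a => 𝒞.filter (fun C => w C = a) with hfib
  set L : V → Finset V := fun a => (fib a).image u with hL
  -- generic facts about leaves
  have hmemL : ∀ a, ∀ x ∈ L a, ∃ C ∈ 𝒞, w C = a ∧ x = u C := by
    intro a x hx
    obtain ⟨C, hC, rfl⟩ := Finset.mem_image.1 hx
    rw [Finset.mem_filter] at hC
    exact ⟨C, hC.1, hC.2, rfl⟩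
  have hLnotS : ∀ a, ∀ x ∈ L a, x ∉ S := by
    intro a x hx
    obtain ⟨C, hC, _, rfl⟩ := hmemL a x hx
    exact hunotS C hC
  have hLcard : ∀ a, (L a).card = (fib a).card := by
    intro a
    apply Finset.card_image_of_injOn
    intro C hC C' hC' he
    rw [Finset.mem_coe, Finset.mem_filter] at hC hC'
    exact huinj C hC.1 C' hC'.1 he
  set Wf := W.filter (fun a => 2 ≤ (L a).card) with hWf
  set T := Wf.image (fun a => (a, L a)) with hT
  have hTmem : ∀ p ∈ T, p.1 ∈ Wf ∧ p.2 = L p.1 := by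
    intro p hp
    obtain ⟨a, ha, rfl⟩ := Finset.mem_image.1 hp
    exact ⟨ha, rfl⟩
  have hforest : IsBadStarForest blue red T := by
    constructor
    · intro p hp
      obtain ⟨ha, hpL⟩ := hTmem p hp
      rw [Finset.mem_filter] at ha
      refine ⟨hpL ▸ ha.2, ?_, ?_, ?_⟩
      · rw [hpL]
        intro hmem
        exact hLnotS p.1 p.1 hmem (hWS p.1 ha.1)
      · intro v hv
        rw [hpL] at hv
        obtain ⟨C, hC, hwC, rfl⟩ := hmemL p.1 v hv
        rw [Sym2.eq_swap, ← hwC]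
        exact hub C hC
      · intro x hx y hy hxy
        rw [hpL] at hx hy
        obtain ⟨C, hC, hwC, rfl⟩ := hmemL p.1 x hx
        obtain ⟨C', hC', hwC', rfl⟩ := hmemL p.1 y hy
        have hCC' : C ≠ C' := fun h => hxy (by rw [h])
        exact hbetween C hC C' hC' hCC' (u C) (huC C hC) (u C') (huC C' hC')
    · intro p hp q hq hpq
      obtain ⟨hap, hpL⟩ := hTmem p hp
      obtain ⟨haq, hqL⟩ := hTmem q hq
      have hab : p.1 ≠ q.1 := by
        intro h
        exact hpq (Prod.ext h (by rw [hpL, hqL, h]))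
      rw [Finset.disjoint_left]
      intro x hx hx'
      rw [Finset.mem_insert] at hx hx'
      rw [Finset.mem_filter] at hap haq
      rcases hx with h1 | hx
      · rcases hx' with h2 | h2
        · exact hab (h1.symm.trans h2)
        · rw [hqL] at h2
          exact hLnotS q.1 x h2 (by rw [h1]; exact hWS p.1 hap.1)
      · rw [hpL] at hx
        rcases hx' with h2 | h2
        · exact hLnotS p.1 x hx (by rw [h2]; exact hWS q.1 haq.1)
        · rw [hqL] at h2
          obtain ⟨C, hC, hwC, he0⟩ := hmemL p.1 x hx
          obtain ⟨C', hC', hwC', he⟩ := hmemL q.1 x h2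
          exact hab (by rw [← hwC, ← hwC', huinj C hC C' hC' (he0.symm.trans he)])
  -- weight bound
  have hinj : Set.InjOn (fun a => (a, L a)) ↑Wf := by
    intro a _ b _ h
    exact (Prod.ext_iff.1 h).1
  have hweight1 : forestWeight T = ∑ a ∈ Wf, ((L a).card - 1) := by
    rw [hT, forestWeight, Finset.sum_image (fun a ha b hb h => hinj ha hb h)]
  have hweight2 : ∑ a ∈ Wf, ((L a).card - 1) = ∑ a ∈ W, ((L a).card - 1) := by
    apply Finset.sum_subset (Finset.filter_subset _ _)
    intro a haW ha
    simp only [Finset.mem_filter] at ha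
    push_neg at ha
    have := ha haW
    omega
  have hcardsum : 𝒞.card = ∑ a ∈ W, (fib a).card :=
    Finset.card_eq_sum_card_fiberwise (fun C hC => Finset.mem_image_of_mem w hC)
  have hWcard : W.card ≤ 3 * k :=
    le_trans (Finset.card_le_card fun a ha => hWS a ha) hS
  have hsum : ∑ a ∈ W, (fib a).card ≤ (∑ a ∈ W, ((L a).card - 1)) + W.card := by
    calc ∑ a ∈ W, (fib a).card ≤ ∑ a ∈ W, (((L a).card - 1) + 1) := by
          apply Finset.sum_le_sum
          intro a _
          rw [← hLcard a]
          omega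
      _ = (∑ a ∈ W, ((L a).card - 1)) + W.card := by
          rw [Finset.sum_add_distrib, Finset.sum_const, smul_eq_mul, mul_one]
  have hwbig : k + 1 ≤ forestWeight T := by
    rw [hweight1, hweight2]
    omega
  refine ⟨⟨T, hforest, hwbig⟩, ?_⟩
  intro F hF hle
  have := forest_cost blue red T hforest F hF
  omega
end

section
/- Let G be a correlation graph, let F be an overlapping clustering of G with cost at most k, let X ∈ F, and let N ⊆ X be a set of k + 1 vertices. If v is a vertex joined by a red edge to every vertex of N, then v is contained in some set Y ∈ F with Y ≠ X. -/
/-- If `F` is an overlapping clustering of cost at most `k`, `X ∈ F`, `N ⊆ X` has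
`k+1` vertices, and `v` is joined by a red edge to every vertex of `N`, then `v` lies
in some cluster other than `X`. -/
theorem stmt13 (V : Type) [Fintype V] [DecidableEq V]
    (blue red : Finset (Sym2 V))
    (hdisj : Disjoint blue red) (hnd : ∀ e ∈ blue ∪ red, ¬ e.IsDiag)
    (hcomp : ∀ u v : V, u ≠ v → s(u,v) ∈ blue ∨ s(u,v) ∈ red)
    (k : ℕ) (F : Finset (Finset V)) (hF : OC blue red F) (hcost : clCost F ≤ k)
    (X : Finset V) (hX : X ∈ F) (N : Finset V) (hN : N ⊆ X) (hNcard : N.card = k + 1)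
    (v : V) (hv : ∀ u ∈ N, s(v,u) ∈ red) :
    ∃ Y ∈ F, Y ≠ X ∧ v ∈ Y := by
  by_contra h
  push_neg at h
  have key : ∀ u ∈ N, 2 ≤ (F.filter fun Y => u ∈ Y).card := by
    intro u hu
    obtain ⟨A, hA, B, hB, hAB, hvA, huB⟩ := hF.2.2 v u (hv u hu)
    have hAX : A = X := by
      by_contra h'
      exact (h A hA h') hvA
    have hBX : B ≠ X := fun e => hAB (hAX.trans e.symm)
    have hsub : ({X, B} : Finset (Finset V)) ⊆ F.filter fun Y => u ∈ Y := by
      intro Y hY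
      simp only [Finset.mem_insert, Finset.mem_singleton] at hY
      rcases hY with rfl | rfl
      · exact Finset.mem_filter.2 ⟨hX, hN hu⟩
      · exact Finset.mem_filter.2 ⟨hB, huB⟩
    calc 2 = ({X, B} : Finset (Finset V)).card := by
            rw [Finset.card_insert_of_notMem (by simpa using hBX.symm),
              Finset.card_singleton]
      _ ≤ _ := Finset.card_le_card hsub
  have hge : k + 1 ≤ clCost F := by
    calc k + 1 = ∑ _u ∈ N, 1 := by simp [hNcard]
      _ ≤ ∑ u ∈ N, ((F.filter fun Y => u ∈ Y).card - 1) := by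
          apply Finset.sum_le_sum
          intro u hu
          have := key u hu; omega
      _ ≤ ∑ u : V, ((F.filter fun Y => u ∈ Y).card - 1) :=
          Finset.sum_le_sum_of_subset (Finset.subset_univ N)
      _ = clCost F := rfl
  omega
end

section
/- Let G = (V, B, R) be a correlation graph, S ⊆ V, and let F be an overlapping clustering of G of cost c. Then there is an overlapping clustering F' of G of cost at most c + 2|S| that contains a set X_S with S ⊆ X_S and contains the singleton set {v} for every v ∈ S. -/
/-- Any overlapping clustering of cost `c` can be turned into one of cost at most
`c + 2|S|` that contains a cluster including all of `S` as well as the singleton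
`{v}` for every `v ∈ S`. -/
theorem stmt16 (V : Type) [Fintype V] [DecidableEq V]
    (blue red : Finset (Sym2 V))
    (hdisj : Disjoint blue red) (hnd : ∀ e ∈ blue ∪ red, ¬ e.IsDiag)
    (hcomp : ∀ u v : V, u ≠ v → s(u,v) ∈ blue ∨ s(u,v) ∈ red)
    (S : Finset V) (F : Finset (Finset V)) (hF : OC blue red F)
    (c : ℕ) (hc : clCost F = c) :
    ∃ F' : Finset (Finset V), OC blue red F' ∧ clCost F' ≤ c + 2 * S.card ∧
      (∃ X ∈ F', S ⊆ X) ∧ ∀ v ∈ S, ({v} : Finset V) ∈ F' := by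
  classical
  obtain ⟨h1, h2, h3⟩ := hF
  set G : Finset (Finset V) := insert S (S.image fun v => ({v} : Finset V)) with hG
  refine ⟨F ∪ G, ⟨?_, ?_, ?_⟩, ?_, ⟨S, ?_, subset_rfl⟩, ?_⟩
  · intro v
    obtain ⟨X, hX, hv⟩ := h1 v
    exact ⟨X, Finset.mem_union_left _ hX, hv⟩
  · intro u v h
    obtain ⟨X, hX, hv⟩ := h2 u v h
    exact ⟨X, Finset.mem_union_left _ hX, hv⟩
  · intro u v h
    obtain ⟨X, hX, Y, hY, hxy⟩ := h3 u v h
    exact ⟨X, Finset.mem_union_left _ hX, Y, Finset.mem_union_left _ hY, hxy⟩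
  · subst hc
    unfold clCost
    have key : ∀ v : V, (((F ∪ G).filter fun X => v ∈ X).card - 1) ≤
        ((F.filter fun X => v ∈ X).card - 1) + (if v ∈ S then 2 else 0) := by
      intro v
      have ha : 1 ≤ (F.filter fun X => v ∈ X).card := by
        obtain ⟨X, hX, hv⟩ := h1 v
        exact Finset.card_pos.mpr ⟨X, Finset.mem_filter.mpr ⟨hX, hv⟩⟩
      have hb : (G.filter fun X => v ∈ X).card ≤ (if v ∈ S then 2 else 0) := by
        by_cases hv : v ∈ S
        · simp only [hv, if_true]
          have hsub : (G.filter fun X => v ∈ X) ⊆ {S, {v}} := by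
            intro X hX
            obtain ⟨hXG, hvX⟩ := Finset.mem_filter.mp hX
            rw [hG, Finset.mem_insert] at hXG
            rcases hXG with rfl | hXG
            · simp
            · obtain ⟨u, _, rfl⟩ := Finset.mem_image.mp hXG
              simp only [Finset.mem_singleton] at hvX
              subst hvX
              simp
          calc (G.filter fun X => v ∈ X).card ≤ ({S, {v}} : Finset (Finset V)).card :=
                Finset.card_le_card hsub
            _ ≤ 2 := Finset.card_insert_le _ _ |>.trans (by simp)
        · simp only [hv, if_false]
          rw [Nat.le_zero, Finset.card_eq_zero, Finset.filter_eq_empty_iff]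
          intro X hXG hvX
          rw [hG, Finset.mem_insert] at hXG
          rcases hXG with rfl | hXG
          · exact hv hvX
          · obtain ⟨u, hu, rfl⟩ := Finset.mem_image.mp hXG
            simp only [Finset.mem_singleton] at hvX
            subst hvX
            exact hv hu
      have hcard : ((F ∪ G).filter fun X => v ∈ X).card ≤
          (F.filter fun X => v ∈ X).card + (G.filter fun X => v ∈ X).card := by
        rw [Finset.filter_union]
        exact Finset.card_union_le _ _
      omega
    calc ∑ v : V, (((F ∪ G).filter fun X => v ∈ X).card - 1)
        ≤ ∑ v : V, (((F.filter fun X => v ∈ X).card - 1) + (if v ∈ S then 2 else 0)) :=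
          Finset.sum_le_sum fun v _ => key v
      _ = clCost F + 2 * S.card := by
          rw [Finset.sum_add_distrib]
          congr 1
          rw [Finset.sum_ite_mem, Finset.univ_inter, Finset.sum_const]
          ring
  · exact Finset.mem_union_right _ (Finset.mem_insert_self _ _)
  · intro v hv
    exact Finset.mem_union_right _ (Finset.mem_insert_of_mem
      (Finset.mem_image_of_mem _ hv))
end

section
/- Let G = (V, B, R) be a correlation graph and S ⊆ V such that V ∖ S is partitioned into blue cliques 𝒞 = {C_1, …, C_p} with all edges between distinct cliques red. Call an overlapping clustering of G a simple solution (with respect to S) if it contains a set X_S with S ⊆ X_S and contains the singleton {v} for every v ∈ S. If G admits a simple solution of cost c, then G admits a simple solution of cost at most c which contains, for each clique C ∈ 𝒞, a set X_C with C ⊆ X_C, and in which X_C ≠ X_{C'} whenever C and C' are distinct cliques of 𝒞. -/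
/-- A *simple solution* with respect to `S`: an overlapping clustering containing a
cluster that includes all of `S`, together with the singleton `{v}` for every `v ∈ S`. -/
def SimpleSol {V : Type*} (blue red : Finset (Sym2 V)) (S : Finset V)
    (F : Finset (Finset V)) : Prop :=
  OC blue red F ∧ (∃ X ∈ F, S ⊆ X) ∧ ∀ v ∈ S, ({v} : Finset V) ∈ F


open Finset

section Master
variable {V : Type} [Fintype V] [DecidableEq V]

theorem card_image_le_sub_one {α β : Type*} [DecidableEq α] [DecidableEq β]
    (s : Finset α) (f : α → β) (a b : α) (ha : a ∈ s) (hb : b ∈ s) (hab : a ≠ b)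
    (hf : f a = f b) : (s.image f).card + 1 ≤ s.card := by
  have h1 : s.image f = (s.erase a).image f := by
    apply le_antisymm
    · intro y hy
      simp only [Finset.mem_image] at hy ⊢
      obtain ⟨c, hc, hcy⟩ := hy
      by_cases hca : c = a
      · exact ⟨b, Finset.mem_erase.mpr ⟨fun h => hab h.symm, hb⟩, by rw [← hcy, hca, hf]⟩
      · exact ⟨c, Finset.mem_erase.mpr ⟨hca, hc⟩, hcy⟩
    · exact Finset.image_subset_image (Finset.erase_subset _ _)
  rw [h1]
  calc ((s.erase a).image f).card + 1 ≤ (s.erase a).card + 1 :=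
        Nat.add_le_add_right Finset.card_image_le 1
    _ ≤ s.card := by
        have := Finset.card_erase_of_mem ha
        have hpos : 1 ≤ s.card := Finset.card_pos.mpr ⟨a, ha⟩
        omega

theorem count_image_eq {V : Type} [DecidableEq V] {G : Finset (Finset V)}
    {ψ : Finset V → Finset V}
    (hinj : ∀ A ∈ G, ∀ B ∈ G, ψ A = ψ B → A = B) (p : Finset V → Prop) [DecidablePred p] :
    ((G.image ψ).filter p).card = (G.filter (fun A => p (ψ A))).card := by
  rw [Finset.filter_image]
  refine (Finset.card_image_of_injOn ?_)
  intro a ha b hb h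
  exact hinj a (mem_filter.mp ha).1 b (mem_filter.mp hb).1 h

theorem master (blue red : Finset (Sym2 V)) (S : Finset V)
    (hdisj : Disjoint blue red) (hnd : ∀ e ∈ blue ∪ red, ¬ e.IsDiag) :
    ∀ (n : ℕ) (V' : Finset V) (𝒞 F : Finset (Finset V)),
      (V' \ S).card = n → S ⊆ V' →
      (∀ C ∈ 𝒞, C.Nonempty) →
      (∀ C ∈ 𝒞, C ⊆ V') →
      (∀ C ∈ 𝒞, ∀ C' ∈ 𝒞, C ≠ C' → Disjoint C C') →
      (∀ v ∈ V', v ∉ S ↔ ∃ C ∈ 𝒞, v ∈ C) →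
      (∀ C ∈ 𝒞, ∀ x ∈ C, ∀ y ∈ C, x ≠ y → s(x,y) ∈ blue) →
      (∀ C ∈ 𝒞, ∀ C' ∈ 𝒞, C ≠ C' → ∀ x ∈ C, ∀ y ∈ C', s(x,y) ∈ red) →
      (∀ X ∈ F, X ⊆ V') →
      (∀ v ∈ V', ∃ X ∈ F, v ∈ X) →
      (∀ x ∈ V', ∀ y ∈ V', s(x,y) ∈ blue → ∃ X ∈ F, x ∈ X ∧ y ∈ X) →
      (∀ x ∈ V', ∀ y ∈ V', s(x,y) ∈ red → ∃ X ∈ F, ∃ Y ∈ F, X ≠ Y ∧ x ∈ X ∧ y ∈ Y) →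
      (∃ X ∈ F, S ⊆ X) →
      (∀ s ∈ S, ({s} : Finset V) ∈ F) →
      ∃ F' : Finset (Finset V),
        (∀ X ∈ F', X ⊆ V') ∧
        (∀ v ∈ V', ∃ X ∈ F', v ∈ X) ∧
        (∀ x ∈ V', ∀ y ∈ V', s(x,y) ∈ blue → ∃ X ∈ F', x ∈ X ∧ y ∈ X) ∧
        (∀ x ∈ V', ∀ y ∈ V', s(x,y) ∈ red → ∃ X ∈ F', ∃ Y ∈ F', X ≠ Y ∧ x ∈ X ∧ y ∈ Y) ∧
        (∃ X ∈ F', S ⊆ X) ∧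
        (∀ s ∈ S, ({s} : Finset V) ∈ F') ∧
        (∑ v ∈ V', ((F'.filter fun X => v ∈ X).card - 1)) ≤
          (∑ v ∈ V', ((F.filter fun X => v ∈ X).card - 1)) ∧
        ∃ g : Finset V → Finset V,
          (∀ C ∈ 𝒞, g C ∈ F' ∧ C ⊆ g C) ∧
          (∀ C ∈ 𝒞, ∀ C' ∈ 𝒞, C ≠ C' → g C ≠ g C') := by
  intro n
  induction n using Nat.strong_induction_on with
  | _ n IH =>
  intro V' 𝒞 F hn hSV hne hCV hdisjC hpart hclique hbetween hFV hcov hblue hred hScont hsing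
  classical
  by_cases hall : ∀ v ∈ V' \ S, (F.filter fun X => v ∈ X).card = 1
  · -- CASE B : all clique vertices have degree 1; F itself works
    have hmemVS : ∀ C ∈ 𝒞, ∀ v ∈ C, v ∈ V' \ S := by
      intro C hC v hv
      have hvV : v ∈ V' := hCV C hC hv
      exact mem_sdiff.mpr ⟨hvV, by
        have := (hpart v hvV).mpr ⟨C, hC, hv⟩
        exact this⟩
    have huniq : ∀ v ∈ V' \ S, ∀ A ∈ F, v ∈ A → ∀ B ∈ F, v ∈ B → A = B := by
      intro v hv A hA hvA B hB hvB
      have h1 := hall v hv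
      have hA' : A ∈ F.filter (fun X => v ∈ X) := mem_filter.mpr ⟨hA, hvA⟩
      have hB' : B ∈ F.filter (fun X => v ∈ X) := mem_filter.mpr ⟨hB, hvB⟩
      exact Finset.card_le_one.mp (le_of_eq h1) A hA' B hB'
    have hcont : ∀ C ∈ 𝒞, ∃ X ∈ F, C ⊆ X := by
      intro C hC
      obtain ⟨d, hd⟩ := hne C hC
      have hdV : d ∈ V' := hCV C hC hd
      obtain ⟨X, hX, hdX⟩ := hcov d hdV
      refine ⟨X, hX, ?_⟩
      intro d' hd'
      by_cases hdd : d' = d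
      · rwa [hdd]
      · have hblue' : s(d, d') ∈ blue :=
          hclique C hC d hd d' hd' (fun h => hdd h.symm)
        obtain ⟨X', hX', hdX', hd'X'⟩ := hblue d hdV d' (hCV C hC hd') hblue'
        have hXX : X' = X := huniq d (hmemVS C hC d hd) X' hX' hdX' X hX hdX
        rwa [← hXX]
    refine ⟨F, hFV, hcov, hblue, hred, hScont, hsing, le_refl _, ?_⟩
    have hgex : ∀ C : Finset V, ∃ X : Finset V, C ∈ 𝒞 → X ∈ F ∧ C ⊆ X := by
      intro C
      by_cases hC : C ∈ 𝒞
      · obtain ⟨X, hX, hCX⟩ := hcont C hC; exact ⟨X, fun _ => ⟨hX, hCX⟩⟩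
      · exact ⟨∅, fun h => absurd h hC⟩
    choose g hg using hgex
    refine ⟨g, fun C hC => hg C hC, ?_⟩
    intro C hC C' hC' hCC' heq
    obtain ⟨d, hd⟩ := hne C hC
    obtain ⟨d', hd'⟩ := hne C' hC'
    have hredp : s(d, d') ∈ red := hbetween C hC C' hC' hCC' d hd d' hd'
    obtain ⟨A, hA, B, hB, hAB, hdA, hd'B⟩ :=
      hred d (hCV C hC hd) d' (hCV C' hC' hd') hredp
    have h1 : A = g C :=
      huniq d (hmemVS C hC d hd) A hA hdA (g C) (hg C hC).1 ((hg C hC).2 hd)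
    have h2 : B = g C' :=
      huniq d' (hmemVS C' hC' d' hd') B hB hd'B (g C') (hg C' hC').1 ((hg C' hC').2 hd')
    rw [heq] at h1
    exact hAB (h1.trans h2.symm)
  · -- CASE A : some clique vertex u has degree ≥ 2; descend on u
    push_neg at hall
    obtain ⟨u, huVS, hcard⟩ := hall
    have huV : u ∈ V' := (mem_sdiff.mp huVS).1
    have huS : u ∉ S := (mem_sdiff.mp huVS).2
    have hdeg2 : 2 ≤ (F.filter fun X => u ∈ X).card := by
      obtain ⟨X, hX, huX⟩ := hcov u huV
      have h1 : 0 < (F.filter fun X => u ∈ X).card :=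
        card_pos.mpr ⟨X, mem_filter.mpr ⟨hX, huX⟩⟩
      omega
    obtain ⟨D, hD, huD⟩ := (hpart u huV).mp huS
    have hDV : D ⊆ V' := hCV D hD
    have hu_notC : ∀ C ∈ 𝒞, C ≠ D → u ∉ C := by
      intro C hC hCD hu
      exact (Finset.disjoint_left.mp (hdisjC C hC D hD hCD) hu) huD
    set V₂ := V'.erase u with hV₂def
    set R := (V₂ \ S).filter (fun x => ∃ Z ∈ F, x ∈ Z ∧ u ∉ Z ∧ insert u Z ∈ F) with hRdef
    set F₂ := (F.image fun X => X.erase u) ∪ R.image (fun x => ({x} : Finset V)) with hF₂def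
    set 𝒞₂ := if 2 ≤ D.card then insert (D.erase u) (𝒞.erase D) else 𝒞.erase D with h𝒞₂def
    have hVSerase : V₂ \ S = (V' \ S).erase u := by
      ext x; simp only [hV₂def, mem_sdiff, mem_erase]; tauto
    have hnpos : 1 ≤ n := by
      rw [← hn]; exact card_pos.mpr ⟨u, huVS⟩
    have hm : (V₂ \ S).card = n - 1 := by
      rw [hVSerase, Finset.card_erase_of_mem huVS, hn]
    have hmlt : n - 1 < n := by omega
    have hSV₂ : S ⊆ V₂ := by
      intro s hs
      exact mem_erase.mpr ⟨fun h => huS (h ▸ hs), hSV hs⟩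
    have hmem𝒞₂ : ∀ C ∈ 𝒞₂, (C = D.erase u ∧ 2 ≤ D.card) ∨ (C ∈ 𝒞 ∧ C ≠ D) := by
      intro C hC
      rw [h𝒞₂def] at hC
      by_cases h2 : 2 ≤ D.card
      · rw [if_pos h2] at hC
        rcases mem_insert.mp hC with h | h
        · exact Or.inl ⟨h, h2⟩
        · exact Or.inr ⟨(mem_erase.mp h).2, (mem_erase.mp h).1⟩
      · rw [if_neg h2] at hC
        exact Or.inr ⟨(mem_erase.mp hC).2, (mem_erase.mp hC).1⟩
    have hCmem𝒞₂ : ∀ C ∈ 𝒞, C ≠ D → C ∈ 𝒞₂ := by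
      intro C hC hCD
      rw [h𝒞₂def]
      by_cases h2 : 2 ≤ D.card
      · rw [if_pos h2]; exact mem_insert_of_mem (mem_erase.mpr ⟨hCD, hC⟩)
      · rw [if_neg h2]; exact mem_erase.mpr ⟨hCD, hC⟩
    have hne₂ : ∀ C ∈ 𝒞₂, C.Nonempty := by
      intro C hC
      rcases hmem𝒞₂ C hC with ⟨hCe, h2⟩ | ⟨hC', _⟩
      · rw [hCe]
        rw [← Finset.card_pos, Finset.card_erase_of_mem huD]; omega
      · exact hne C hC'
    have hCV₂ : ∀ C ∈ 𝒞₂, C ⊆ V₂ := by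
      intro C hC
      rcases hmem𝒞₂ C hC with ⟨hCe, _⟩ | ⟨hC', hCD⟩
      · rw [hCe]; exact Finset.erase_subset_erase u hDV
      · intro x hx
        exact mem_erase.mpr ⟨fun h => (hu_notC C hC' hCD) (h ▸ hx), hCV C hC' hx⟩
    have hdisjC₂ : ∀ C ∈ 𝒞₂, ∀ C' ∈ 𝒞₂, C ≠ C' → Disjoint C C' := by
      intro C hC C' hC' hCC'
      rcases hmem𝒞₂ C hC with ⟨hCe, _⟩ | ⟨hCm, hCD⟩ <;>
        rcases hmem𝒞₂ C' hC' with ⟨hC'e, _⟩ | ⟨hC'm, hC'D⟩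
      · exact absurd (hCe.trans hC'e.symm) hCC'
      · rw [hCe]
        exact Finset.disjoint_of_subset_left (Finset.erase_subset u D)
          (hdisjC D hD C' hC'm (fun h => hC'D h.symm))
      · rw [hC'e]
        exact Finset.disjoint_of_subset_right (Finset.erase_subset u D)
          (hdisjC C hCm D hD hCD)
      · exact hdisjC C hCm C' hC'm hCC'
    have hpart₂ : ∀ v ∈ V₂, (v ∉ S ↔ ∃ C ∈ 𝒞₂, v ∈ C) := by
      intro v hv
      have hvV : v ∈ V' := mem_of_mem_erase hv
      have hvu : v ≠ u := (mem_erase.mp hv).1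
      constructor
      · intro hvS
        obtain ⟨C, hC, hvC⟩ := (hpart v hvV).mp hvS
        by_cases hCD : C = D
        · have hvD : v ∈ D := hCD ▸ hvC
          have h2 : 2 ≤ D.card := Finset.one_lt_card.mpr ⟨u, huD, v, hvD, fun h => hvu h.symm⟩
          refine ⟨D.erase u, ?_, mem_erase.mpr ⟨hvu, hvD⟩⟩
          rw [h𝒞₂def, if_pos h2]; exact mem_insert_self _ _
        · exact ⟨C, hCmem𝒞₂ C hC hCD, hvC⟩
      · intro ⟨C, hC, hvC⟩
        rcases hmem𝒞₂ C hC with ⟨hCe, _⟩ | ⟨hCm, _⟩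
        · exact (hpart v hvV).mpr ⟨D, hD, mem_of_mem_erase (hCe ▸ hvC)⟩
        · exact (hpart v hvV).mpr ⟨C, hCm, hvC⟩
    have hclique₂ : ∀ C ∈ 𝒞₂, ∀ x ∈ C, ∀ y ∈ C, x ≠ y → s(x,y) ∈ blue := by
      intro C hC x hx y hy hxy
      rcases hmem𝒞₂ C hC with ⟨hCe, _⟩ | ⟨hCm, _⟩
      · exact hclique D hD x (mem_of_mem_erase (hCe ▸ hx)) y (mem_of_mem_erase (hCe ▸ hy)) hxy
      · exact hclique C hCm x hx y hy hxy
    have hDerase_ne : ∀ C ∈ 𝒞, C ≠ D → C ≠ D.erase u := by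
      intro C hC hCD h
      obtain ⟨c, hc⟩ := hne C hC
      have hcD : c ∈ D := mem_of_mem_erase (h ▸ hc)
      exact (Finset.disjoint_left.mp (hdisjC C hC D hD hCD) hc) hcD
    have hbetween₂ : ∀ C ∈ 𝒞₂, ∀ C' ∈ 𝒞₂, C ≠ C' → ∀ x ∈ C, ∀ y ∈ C', s(x,y) ∈ red := by
      intro C hC C' hC' hCC' x hx y hy
      rcases hmem𝒞₂ C hC with ⟨hCe, _⟩ | ⟨hCm, hCD⟩ <;>
        rcases hmem𝒞₂ C' hC' with ⟨hC'e, _⟩ | ⟨hC'm, hC'D⟩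
      · exact absurd (hCe.trans hC'e.symm) hCC'
      · exact hbetween D hD C' hC'm (fun h => hC'D h.symm) x (mem_of_mem_erase (hCe ▸ hx)) y hy
      · exact hbetween C hCm D hD hCD x hx y (mem_of_mem_erase (hC'e ▸ hy))
      · exact hbetween C hCm C' hC'm hCC' x hx y hy
    have hFV₂ : ∀ X ∈ F₂, X ⊆ V₂ := by
      intro X hX
      rcases mem_union.mp hX with h | h
      · obtain ⟨X₀, hX₀, rfl⟩ := mem_image.mp h
        exact Finset.erase_subset_erase u (hFV X₀ hX₀)
      · obtain ⟨x, hx, rfl⟩ := mem_image.mp h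
        rw [Finset.singleton_subset_iff]
        exact (mem_sdiff.mp (mem_filter.mp hx).1).1
    have hcov₂ : ∀ v ∈ V₂, ∃ X ∈ F₂, v ∈ X := by
      intro v hv
      obtain ⟨X, hX, hvX⟩ := hcov v (mem_of_mem_erase hv)
      exact ⟨X.erase u, mem_union_left _ (mem_image_of_mem _ hX),
        mem_erase.mpr ⟨(mem_erase.mp hv).1, hvX⟩⟩
    have hblue₂ : ∀ x ∈ V₂, ∀ y ∈ V₂, s(x,y) ∈ blue → ∃ X ∈ F₂, x ∈ X ∧ y ∈ X := by
      intro x hx y hy hxy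
      obtain ⟨X, hX, hxX, hyX⟩ := hblue x (mem_of_mem_erase hx) y (mem_of_mem_erase hy) hxy
      exact ⟨X.erase u, mem_union_left _ (mem_image_of_mem _ hX),
        mem_erase.mpr ⟨(mem_erase.mp hx).1, hxX⟩, mem_erase.mpr ⟨(mem_erase.mp hy).1, hyX⟩⟩
    have hred₂ : ∀ x ∈ V₂, ∀ y ∈ V₂, s(x,y) ∈ red →
        ∃ X ∈ F₂, ∃ Y ∈ F₂, X ≠ Y ∧ x ∈ X ∧ y ∈ Y := by
      intro x hx y hy hxy
      have hxV : x ∈ V' := mem_of_mem_erase hx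
      have hyV : y ∈ V' := mem_of_mem_erase hy
      have hxu : x ≠ u := (mem_erase.mp hx).1
      have hyu : y ≠ u := (mem_erase.mp hy).1
      have hxyne : x ≠ y := fun h =>
        hnd s(x,y) (mem_union_right _ hxy) (Sym2.mk_isDiag_iff.mpr h)
      obtain ⟨A, hA, B, hB, hAB, hxA, hyB⟩ := hred x hxV y hyV hxy
      by_cases h : A.erase u = B.erase u
      · -- chain case: A and B differ exactly in u
        have hwit : ∃ Z ∈ F, A.erase u = Z ∧ u ∉ Z ∧ insert u Z ∈ F := by
          by_cases huA : u ∈ A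
          · have huB : u ∉ B := by
              intro huB
              apply hAB
              calc A = insert u (A.erase u) := (Finset.insert_erase huA).symm
                _ = insert u (B.erase u) := by rw [h]
                _ = B := Finset.insert_erase huB
            have hBe : B.erase u = B := Finset.erase_eq_of_notMem huB
            refine ⟨B, hB, by rw [h, hBe], huB, ?_⟩
            have hins : insert u B = A := by
              rw [← hBe, ← h, Finset.insert_erase huA]
            rwa [hins]
          · have huB : u ∈ B := by
              by_contra huB
              apply hAB
              rw [← Finset.erase_eq_of_notMem huA, h, Finset.erase_eq_of_notMem huB]
            have hAe : A.erase u = A := Finset.erase_eq_of_notMem huA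
            refine ⟨A, hA, hAe, huA, ?_⟩
            have hins : insert u A = B := by
              rw [← hAe, h, Finset.insert_erase huB]
            rwa [hins]
        obtain ⟨Z, hZF, hZeq, huZ, hiZ⟩ := hwit
        have hxZ : x ∈ Z := hZeq ▸ mem_erase.mpr ⟨hxu, hxA⟩
        have hyZ : y ∈ Z := hZeq ▸ (h ▸ mem_erase.mpr ⟨hyu, hyB⟩)
        have hZF₂ : Z ∈ F₂ := by
          have hZe : Z.erase u = Z := Finset.erase_eq_of_notMem huZ
          exact mem_union_left _ (hZe ▸ mem_image_of_mem _ hZF)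
        by_cases hxS : x ∈ S
        · refine ⟨{x}, mem_union_left _ ?_, Z, hZF₂, ?_, mem_singleton_self x, hyZ⟩
          · have h1 : ({x} : Finset V).erase u = {x} := by
              apply Finset.erase_eq_of_notMem
              simp only [Finset.mem_singleton]
              exact fun hh => hxu hh.symm
            exact h1 ▸ mem_image_of_mem _ (hsing x hxS)
          · intro hh
            rw [← hh] at hyZ
            exact hxyne (mem_singleton.mp hyZ).symm
        · by_cases hyS : y ∈ S
          · refine ⟨Z, hZF₂, {y}, mem_union_left _ ?_, ?_, hxZ, mem_singleton_self y⟩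
            · have h1 : ({y} : Finset V).erase u = {y} := by
                apply Finset.erase_eq_of_notMem
                simp only [Finset.mem_singleton]
                exact fun hh => hyu hh.symm
              exact h1 ▸ mem_image_of_mem _ (hsing y hyS)
            · intro hh
              rw [hh] at hxZ
              exact hxyne (mem_singleton.mp hxZ)
          · have hxR : x ∈ R :=
              mem_filter.mpr ⟨mem_sdiff.mpr ⟨hx, hxS⟩, Z, hZF, hxZ, huZ, hiZ⟩
            have hyR : y ∈ R :=
              mem_filter.mpr ⟨mem_sdiff.mpr ⟨hy, hyS⟩, Z, hZF, hyZ, huZ, hiZ⟩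
            refine ⟨{x}, mem_union_right _ (mem_image_of_mem _ hxR),
              {y}, mem_union_right _ (mem_image_of_mem _ hyR), ?_,
              mem_singleton_self x, mem_singleton_self y⟩
            intro hh
            exact hxyne (Finset.singleton_injective hh)
      · exact ⟨A.erase u, mem_union_left _ (mem_image_of_mem _ hA),
          B.erase u, mem_union_left _ (mem_image_of_mem _ hB), h,
          mem_erase.mpr ⟨hxu, hxA⟩, mem_erase.mpr ⟨hyu, hyB⟩⟩
    have hScont₂ : ∃ X ∈ F₂, S ⊆ X := by
      obtain ⟨X, hX, hSX⟩ := hScont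
      refine ⟨X.erase u, mem_union_left _ (mem_image_of_mem _ hX), ?_⟩
      intro s hs
      exact mem_erase.mpr ⟨fun h => huS (h ▸ hs), hSX hs⟩
    have hsing₂ : ∀ s ∈ S, ({s} : Finset V) ∈ F₂ := by
      intro s hs
      have h1 : ({s} : Finset V).erase u = {s} := by
        apply Finset.erase_eq_of_notMem
        simp only [Finset.mem_singleton]
        intro h; exact huS (h ▸ hs)
      exact mem_union_left _ (h1 ▸ mem_image_of_mem _ (hsing s hs))
    have hcost₂ : (∑ v ∈ V₂, ((F₂.filter fun X => v ∈ X).card - 1)) + 1 ≤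
        (∑ v ∈ V', ((F.filter fun X => v ∈ X).card - 1)) := by
      have hpoint : ∀ v ∈ V₂,
          (F₂.filter fun X => v ∈ X).card ≤ (F.filter fun X => v ∈ X).card := by
        intro v hv
        have hvu : v ≠ u := (mem_erase.mp hv).1
        have hsplit : (F₂.filter fun X => v ∈ X) =
            ((F.image fun X => X.erase u).filter fun X => v ∈ X) ∪
            ((R.image fun x => ({x} : Finset V)).filter fun X => v ∈ X) := by
          rw [hF₂def, Finset.filter_union]
        have himg : ((F.image fun X => X.erase u).filter fun X => v ∈ X) =
            ((F.filter fun X => v ∈ X).image fun X => X.erase u) := by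
          ext Y
          simp only [mem_filter, mem_image]
          constructor
          · rintro ⟨⟨X, hX, rfl⟩, hvY⟩
            exact ⟨X, ⟨hX, mem_of_mem_erase hvY⟩, rfl⟩
          · rintro ⟨X, ⟨hX, hvX⟩, rfl⟩
            exact ⟨⟨X, hX, rfl⟩, mem_erase.mpr ⟨hvu, hvX⟩⟩
        have hrepcard : ((R.image fun x => ({x} : Finset V)).filter fun X => v ∈ X).card ≤
            (if v ∈ R then 1 else 0) := by
          by_cases hvR : v ∈ R
          · rw [if_pos hvR]
            rw [Finset.card_le_one]
            intro a ha b hb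
            obtain ⟨x, _, rfl⟩ := mem_image.mp (mem_filter.mp ha).1
            obtain ⟨x', _, rfl⟩ := mem_image.mp (mem_filter.mp hb).1
            have h1 : x = v := (mem_singleton.mp (mem_filter.mp ha).2).symm
            have h2 : x' = v := (mem_singleton.mp (mem_filter.mp hb).2).symm
            rw [h1, h2]
          · rw [if_neg hvR]
            simp only [Nat.le_zero, Finset.card_eq_zero]
            rw [Finset.filter_eq_empty_iff]
            intro Y hY
            obtain ⟨x, hx, rfl⟩ := mem_image.mp hY
            intro hvY
            exact hvR ((mem_singleton.mp hvY).symm ▸ hx)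
        have hcu : (F₂.filter fun X => v ∈ X).card ≤
            ((F.filter fun X => v ∈ X).image fun X => X.erase u).card +
            (if v ∈ R then 1 else 0) := by
          rw [hsplit, himg]
          exact le_trans (Finset.card_union_le _ _) (Nat.add_le_add_left hrepcard _)
        by_cases hvR : v ∈ R
        · rw [if_pos hvR] at hcu
          obtain ⟨-, Z, hZF, hvZ, huZ, hiZ⟩ := mem_filter.mp hvR
          have hcollapse :
              ((F.filter fun X => v ∈ X).image fun X => X.erase u).card + 1 ≤
              (F.filter fun X => v ∈ X).card := by
            apply card_image_le_sub_one _ _ Z (insert u Z)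
            · exact mem_filter.mpr ⟨hZF, hvZ⟩
            · exact mem_filter.mpr ⟨hiZ, mem_insert_of_mem hvZ⟩
            · intro hh
              exact huZ (hh ▸ mem_insert_self u Z)
            · rw [Finset.erase_insert huZ, Finset.erase_eq_of_notMem huZ]
          omega
        · rw [if_neg hvR] at hcu
          exact le_trans hcu (by simpa using Finset.card_image_le)
      have hsum : (∑ v ∈ V₂, ((F.filter fun X => v ∈ X).card - 1)) +
          ((F.filter fun X => u ∈ X).card - 1) =
          ∑ v ∈ V', ((F.filter fun X => v ∈ X).card - 1) :=
        Finset.sum_erase_add V' _ huV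
      have hstep : (∑ v ∈ V₂, ((F₂.filter fun X => v ∈ X).card - 1)) ≤
          (∑ v ∈ V₂, ((F.filter fun X => v ∈ X).card - 1)) := by
        apply Finset.sum_le_sum
        intro v hv
        exact Nat.sub_le_sub_right (hpoint v hv) 1
      omega
    obtain ⟨G, hGV, hGcov, hGblue, hGred, hGScont, hGsing, hGcost, g₂, hg₂, hg₂inj⟩ :=
      IH (n-1) hmlt V₂ 𝒞₂ F₂ hm hSV₂ hne₂ hCV₂ hdisjC₂ hpart₂ hclique₂ hbetween₂
        hFV₂ hcov₂ hblue₂ hred₂ hScont₂ hsing₂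
    -- LIFT
    have hGnotu : ∀ X ∈ G, u ∉ X := by
      intro X hX huX
      exact (mem_erase.mp (hGV X hX huX)).1 rfl
    obtain ⟨W, hWG, hSW⟩ := hGScont
    have huW : u ∉ W := hGnotu W hWG
    have hV₂V : V₂ ⊆ V' := Finset.erase_subset u V'
    have hbluey : ∀ y ∈ V₂, y ∉ S → s(u,y) ∈ blue → y ∈ D.erase u := by
      intro y hy hyS hb
      obtain ⟨C, hC, hyC⟩ := (hpart y (hV₂V hy)).mp hyS
      by_cases hCD : C = D
      · exact mem_erase.mpr ⟨(mem_erase.mp hy).1, hCD ▸ hyC⟩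
      · exfalso
        have hr : s(u,y) ∈ red := hbetween D hD C hC (fun h => hCD h.symm) u huD y hyC
        exact (Finset.disjoint_left.mp hdisj hb) hr
    have hredy : ∀ y ∈ V₂, y ∉ S → s(u,y) ∈ red → ∃ C ∈ 𝒞, C ≠ D ∧ y ∈ C := by
      intro y hy hyS hr
      obtain ⟨C, hC, hyC⟩ := (hpart y (hV₂V hy)).mp hyS
      refine ⟨C, hC, ?_, hyC⟩
      intro hCD
      have hyD : y ∈ D := hCD ▸ hyC
      have hb : s(u,y) ∈ blue := hclique D hD u huD y hyD (fun h => (mem_erase.mp hy).1 h.symm)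
      exact (Finset.disjoint_left.mp hdisj hb) hr
    have hsingne : ∀ y ∈ S, ∀ C ∈ 𝒞₂, ∀ Z, C ⊆ Z → ({y} : Finset V) ≠ Z := by
      intro y hyS C hC Z hCZ h
      obtain ⟨c, hc⟩ := hne₂ C hC
      have hcy : c = y := by
        have := hCZ hc
        rw [← h] at this
        exact mem_singleton.mp this
      have hcS : c ∉ S := by
        rcases hmem𝒞₂ C hC with ⟨hCe, _⟩ | ⟨hCm, _⟩
        · have hcD : c ∈ D := mem_of_mem_erase (hCe ▸ hc)
          exact (hpart c (hDV hcD)).mpr ⟨D, hD, hcD⟩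
        · exact (hpart c (hCV C hCm hc)).mpr ⟨C, hCm, hc⟩
      exact hcS (hcy ▸ hyS)
    have hnoudiag : ∀ e ∈ blue ∪ red, ¬ e.IsDiag := hnd
    by_cases hD2 : 2 ≤ D.card
    · -- |D| ≥ 2
      have hD'mem : D.erase u ∈ 𝒞₂ := by
        rw [h𝒞₂def, if_pos hD2]; exact mem_insert_self _ _
      set Y := g₂ (D.erase u) with hYdef
      have hYG : Y ∈ G := (hg₂ _ hD'mem).1
      have hD'Y : D.erase u ⊆ Y := (hg₂ _ hD'mem).2
      have huY : u ∉ Y := hGnotu Y hYG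
      have hgCY : ∀ C ∈ 𝒞, C ≠ D → g₂ C ≠ Y :=
        fun C hC hCD => hg₂inj C (hCmem𝒞₂ C hC hCD) (D.erase u) hD'mem (hDerase_ne C hC hCD)
      have hYnotsing : ∀ y ∈ S, ({y} : Finset V) ≠ Y :=
        fun y hy => hsingne y hy _ hD'mem Y hD'Y
      have hDsubuY : D ⊆ insert u Y := by
        intro d hd
        by_cases hdu : d = u
        · exact hdu ▸ mem_insert_self u Y
        · exact mem_insert_of_mem (hD'Y (mem_erase.mpr ⟨hdu, hd⟩))
      by_cases hWs : ∃ s ∈ S, W = {s}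
      · -- A2 : W = {s₀}, S = {s₀}
        obtain ⟨s₀, hs₀S, hWs₀⟩ := hWs
        have hSeq : S = {s₀} := by
          apply le_antisymm
          · rw [← hWs₀]; exact hSW
          · simp [hs₀S]
        have hs₀u : s₀ ≠ u := fun h => huS (h ▸ hs₀S)
        set ψ : Finset V → Finset V := fun A => if A = Y then insert u (insert s₀ Y) else A
          with hψdef
        have hψY : ψ Y = insert u (insert s₀ Y) := by simp [hψdef]
        have hψid : ∀ A, A ≠ Y → ψ A = A := by
          intro A h; simp [hψdef, h]
        have hψsub : ∀ A, A ⊆ ψ A := by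
          intro A
          by_cases h : A = Y
          · subst h; rw [hψY]
            exact (Finset.subset_insert _ _).trans (Finset.subset_insert _ _)
          · rw [hψid A h]
        have hψu : ∀ A ∈ G, u ∈ ψ A → A = Y := by
          intro A hA hu
          by_cases h : A = Y
          · exact h
          · rw [hψid A h] at hu; exact absurd hu (hGnotu A hA)
        have hψinj : ∀ A ∈ G, ∀ B ∈ G, ψ A = ψ B → A = B := by
          intro A hA B hB h
          by_cases hAY : A = Y <;> by_cases hBY : B = Y
          · rw [hAY, hBY]
          · exfalso
            rw [hAY, hψY, hψid B hBY] at h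
            exact hGnotu B hB (h ▸ mem_insert_self u _)
          · exfalso
            rw [hBY, hψY, hψid A hAY] at h
            exact hGnotu A hA (h.symm ▸ mem_insert_self u _)
          · rwa [hψid A hAY, hψid B hBY] at h
        have hψmem : ∀ v, v ≠ u → v ≠ s₀ → ∀ A, (v ∈ ψ A ↔ v ∈ A) := by
          intro v hvu hvs A
          by_cases h : A = Y
          · subst h; rw [hψY]; simp [hvu, hvs]
          · rw [hψid A h]
        set G' := G.image ψ with hG'def
        have hψmemG : ∀ A ∈ G, ψ A ∈ G' := fun A hA => mem_image_of_mem ψ hA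
        have hG'V : ∀ X ∈ G', X ⊆ V' := by
          intro X hX
          obtain ⟨A, hA, rfl⟩ := mem_image.mp hX
          by_cases h : A = Y
          · subst h; rw [hψY]
            intro x hx
            rcases mem_insert.mp hx with rfl | hx
            · exact huV
            · rcases mem_insert.mp hx with rfl | hx
              · exact hSV hs₀S
              · exact hV₂V (hGV _ hYG hx)
          · rw [hψid A h]; exact (hGV A hA).trans hV₂V
        have hG'cov : ∀ v ∈ V', ∃ X ∈ G', v ∈ X := by
          intro v hv
          by_cases hvu : v = u
          · exact ⟨ψ Y, hψmemG Y hYG, by rw [hψY, hvu]; exact mem_insert_self u _⟩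
          · obtain ⟨Z, hZ, hvZ⟩ := hGcov v (mem_erase.mpr ⟨hvu, hv⟩)
            exact ⟨ψ Z, hψmemG Z hZ, hψsub Z hvZ⟩
        have hG'blue : ∀ x ∈ V', ∀ y ∈ V', s(x,y) ∈ blue → ∃ X ∈ G', x ∈ X ∧ y ∈ X := by
          have key : ∀ y ∈ V', y ≠ u → s(u,y) ∈ blue → ∃ X ∈ G', u ∈ X ∧ y ∈ X := by
            intro y hy hyu hb
            have hy₂ : y ∈ V₂ := mem_erase.mpr ⟨hyu, hy⟩
            refine ⟨ψ Y, hψmemG Y hYG, by rw [hψY]; exact mem_insert_self u _, ?_⟩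
            by_cases hyS : y ∈ S
            · have : y = s₀ := by rw [hSeq] at hyS; exact mem_singleton.mp hyS
              rw [hψY, this]; exact mem_insert_of_mem (mem_insert_self _ _)
            · have hyD : y ∈ D.erase u := hbluey y hy₂ hyS hb
              rw [hψY]
              exact mem_insert_of_mem (mem_insert_of_mem (hD'Y hyD))
          intro x hx y hy hb
          by_cases hxu : x = u <;> by_cases hyu : y = u
          · exact absurd (Sym2.mk_isDiag_iff.mpr (hxu.trans hyu.symm))
              (hnd _ (mem_union_left _ hb))
          · subst hxu
            exact key y hy hyu hb
          · subst hyu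
            obtain ⟨X, hX, h1, h2⟩ := key x hx hxu (Sym2.eq_swap ▸ hb)
            exact ⟨X, hX, h2, h1⟩
          · obtain ⟨Z, hZ, hxZ, hyZ⟩ := hGblue x (mem_erase.mpr ⟨hxu, hx⟩) y
              (mem_erase.mpr ⟨hyu, hy⟩) hb
            exact ⟨ψ Z, hψmemG Z hZ, hψsub Z hxZ, hψsub Z hyZ⟩
        have hG'sing : ∀ s ∈ S, ({s} : Finset V) ∈ G' := by
          intro s hs
          have h1 : ψ {s} = {s} := hψid _ (hYnotsing s hs)
          exact h1 ▸ hψmemG _ (hGsing s hs)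
        have hG'red : ∀ x ∈ V', ∀ y ∈ V', s(x,y) ∈ red →
            ∃ X ∈ G', ∃ X' ∈ G', X ≠ X' ∧ x ∈ X ∧ y ∈ X' := by
          have key : ∀ y ∈ V', y ≠ u → s(u,y) ∈ red →
              ∃ X ∈ G', ∃ X' ∈ G', X ≠ X' ∧ u ∈ X ∧ y ∈ X' := by
            intro y hy hyu hr
            have hy₂ : y ∈ V₂ := mem_erase.mpr ⟨hyu, hy⟩
            by_cases hyS : y ∈ S
            · refine ⟨ψ Y, hψmemG Y hYG, {y}, hG'sing y hyS, ?_,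
                by rw [hψY]; exact mem_insert_self u _, mem_singleton_self y⟩
              intro h
              have : u ∈ ({y} : Finset V) := h ▸ (by rw [hψY]; exact mem_insert_self u _)
              exact hyu (mem_singleton.mp this).symm
            · obtain ⟨C, hC, hCD, hyC⟩ := hredy y hy₂ hyS hr
              have hZy : g₂ C ∈ G := (hg₂ C (hCmem𝒞₂ C hC hCD)).1
              refine ⟨ψ Y, hψmemG Y hYG, ψ (g₂ C), hψmemG _ hZy, ?_,
                by rw [hψY]; exact mem_insert_self u _,
                hψsub _ ((hg₂ C (hCmem𝒞₂ C hC hCD)).2 hyC)⟩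
              intro h
              exact hgCY C hC hCD (hψinj _ hZy _ hYG h.symm)
          intro x hx y hy hr
          by_cases hxu : x = u <;> by_cases hyu : y = u
          · exact absurd (Sym2.mk_isDiag_iff.mpr (hxu.trans hyu.symm))
              (hnd _ (mem_union_right _ hr))
          · subst hxu; exact key y hy hyu hr
          · subst hyu
            obtain ⟨X, hX, X', hX', hne', h1, h2⟩ := key x hx hxu (Sym2.eq_swap ▸ hr)
            exact ⟨X', hX', X, hX, hne'.symm, h2, h1⟩
          · obtain ⟨A, hA, B, hB, hAB, hxA, hyB⟩ := hGred x (mem_erase.mpr ⟨hxu, hx⟩) y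
              (mem_erase.mpr ⟨hyu, hy⟩) hr
            exact ⟨ψ A, hψmemG A hA, ψ B, hψmemG B hB,
              fun h => hAB (hψinj A hA B hB h), hψsub A hxA, hψsub B hyB⟩
        have hG'S : ∃ X ∈ G', S ⊆ X := by
          refine ⟨ψ Y, hψmemG Y hYG, ?_⟩
          rw [hSeq, hψY]
          intro z hz
          rw [mem_singleton.mp hz]
          exact mem_insert_of_mem (mem_insert_self _ _)
        have hG'cost : (∑ v ∈ V', ((G'.filter fun X => v ∈ X).card - 1)) ≤
            (∑ v ∈ V₂, ((G.filter fun X => v ∈ X).card - 1)) + 1 := by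
          have hsplit : (∑ v ∈ V', ((G'.filter fun X => v ∈ X).card - 1)) =
              (∑ v ∈ V₂, ((G'.filter fun X => v ∈ X).card - 1)) +
              ((G'.filter fun X => u ∈ X).card - 1) :=
            (Finset.sum_erase_add V' _ huV).symm
          have hcu : (G'.filter fun X => u ∈ X).card ≤ 1 := by
            rw [hG'def, count_image_eq hψinj]
            have hsub : (G.filter fun A => u ∈ ψ A) ⊆ {Y} := by
              intro A hA
              obtain ⟨hAG, hAu⟩ := mem_filter.mp hA
              simp [hψu A hAG hAu]
            exact le_trans (card_le_card hsub) (by simp)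
          have hs₀V₂ : s₀ ∈ V₂ := hSV₂ hs₀S
          have hsplit2 : ∀ (H : Finset (Finset V)),
              (∑ v ∈ V₂, ((H.filter fun X => v ∈ X).card - 1)) =
              (∑ v ∈ V₂.erase s₀, ((H.filter fun X => v ∈ X).card - 1)) +
              ((H.filter fun X => s₀ ∈ X).card - 1) :=
            fun H => (Finset.sum_erase_add V₂ _ hs₀V₂).symm
          have heq : ∀ v ∈ V₂.erase s₀,
              (G'.filter fun X => v ∈ X).card = (G.filter fun X => v ∈ X).card := by
            intro v hv
            have hvs : v ≠ s₀ := (mem_erase.mp hv).1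
            have hvu : v ≠ u := (mem_erase.mp (mem_of_mem_erase hv)).1
            rw [hG'def, count_image_eq hψinj]
            congr 1
            apply Finset.filter_congr
            intro A _
            simp [hψmem v hvu hvs A]
          have hs₀count : (G'.filter fun X => s₀ ∈ X).card ≤
              (G.filter fun X => s₀ ∈ X).card + 1 := by
            rw [hG'def, count_image_eq hψinj]
            have hsub : (G.filter fun A => s₀ ∈ ψ A) ⊆
                insert Y (G.filter fun A => s₀ ∈ A) := by
              intro A hA
              obtain ⟨hAG, hAs⟩ := mem_filter.mp hA
              by_cases h : A = Y
              · rw [h]; exact mem_insert_self _ _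
              · rw [hψid A h] at hAs
                exact mem_insert_of_mem (mem_filter.mpr ⟨hAG, hAs⟩)
            exact le_trans (card_le_card hsub) (card_insert_le _ _)
          have e1 := hsplit2 G'
          have e2 := hsplit2 G
          have e3 : (∑ v ∈ V₂.erase s₀, ((G'.filter fun X => v ∈ X).card - 1)) =
              (∑ v ∈ V₂.erase s₀, ((G.filter fun X => v ∈ X).card - 1)) :=
            Finset.sum_congr rfl (fun v hv => by rw [heq v hv])
          omega
        set g' : Finset V → Finset V := fun C => if C = D then ψ Y else ψ (g₂ C) with hg'def
        have hg'D : g' D = ψ Y := by simp [hg'def]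
        have hg'C : ∀ C, C ≠ D → g' C = ψ (g₂ C) := by
          intro C h; simp [hg'def, h]
        refine ⟨G', hG'V, hG'cov, hG'blue, hG'red, hG'S, hG'sing, ?_, g', ?_, ?_⟩
        · calc (∑ v ∈ V', ((G'.filter fun X => v ∈ X).card - 1)) ≤
              (∑ v ∈ V₂, ((G.filter fun X => v ∈ X).card - 1)) + 1 := hG'cost
            _ ≤ (∑ v ∈ V₂, ((F₂.filter fun X => v ∈ X).card - 1)) + 1 :=
              Nat.add_le_add_right hGcost 1
            _ ≤ ∑ v ∈ V', ((F.filter fun X => v ∈ X).card - 1) := hcost₂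
        · intro C hC
          by_cases hCD : C = D
          · subst hCD
            refine ⟨hg'D ▸ hψmemG Y hYG, ?_⟩
            rw [hg'D, hψY]
            exact hDsubuY.trans (Finset.insert_subset_insert u (Finset.subset_insert s₀ Y))
          · rw [hg'C C hCD]
            exact ⟨hψmemG _ (hg₂ C (hCmem𝒞₂ C hC hCD)).1,
              ((hg₂ C (hCmem𝒞₂ C hC hCD)).2).trans (hψsub _)⟩
        · intro C hC C' hC' hCC'
          by_cases h1 : C = D <;> by_cases h2 : C' = D
          · exact absurd (h1.trans h2.symm) hCC'
          · subst h1
            rw [hg'D, hg'C C' h2]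
            intro h
            exact hgCY C' hC' h2 (hψinj _ (hg₂ C' (hCmem𝒞₂ C' hC' h2)).1 _ hYG h.symm)
          · subst h2
            rw [hg'D, hg'C C h1]
            intro h
            exact hgCY C hC h1 (hψinj _ (hg₂ C (hCmem𝒞₂ C hC h1)).1 _ hYG h)
          · rw [hg'C C h1, hg'C C' h2]
            intro h
            exact hg₂inj C (hCmem𝒞₂ C hC h1) C' (hCmem𝒞₂ C' hC' h2) hCC'
              (hψinj _ (hg₂ C (hCmem𝒞₂ C hC h1)).1 _ (hg₂ C' (hCmem𝒞₂ C' hC' h2)).1 h)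
      · -- A1 : W not an S-singleton
        set ψ : Finset V → Finset V :=
          fun A => if A = W then insert u W else if A = Y then insert u Y else A with hψdef
        have hψW : ψ W = insert u W := by simp [hψdef]
        have hψY : ψ Y = insert u Y := by
          by_cases h : Y = W
          · simp [hψdef, h]
          · simp [hψdef, h]
        have hψid : ∀ A, A ≠ W → A ≠ Y → ψ A = A := by
          intro A h1 h2; simp [hψdef, h1, h2]
        have hψsub : ∀ A, A ⊆ ψ A := by
          intro A
          by_cases h1 : A = W
          · subst h1; rw [hψW]; exact Finset.subset_insert _ _
          · by_cases h2 : A = Y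
            · subst h2; rw [hψY]; exact Finset.subset_insert _ _
            · rw [hψid A h1 h2]
        have hψerase : ∀ A ∈ G, (ψ A).erase u = A := by
          intro A hA
          by_cases h1 : A = W
          · subst h1; rw [hψW, Finset.erase_insert huW]
          · by_cases h2 : A = Y
            · subst h2; rw [hψY, Finset.erase_insert huY]
            · rw [hψid A h1 h2]; exact Finset.erase_eq_of_notMem (hGnotu A hA)
        have hψinj : ∀ A ∈ G, ∀ B ∈ G, ψ A = ψ B → A = B := by
          intro A hA B hB h
          rw [← hψerase A hA, h, hψerase B hB]
        have hψu : ∀ A ∈ G, u ∈ ψ A → A = W ∨ A = Y := by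
          intro A hA hu
          by_cases h1 : A = W
          · exact Or.inl h1
          · by_cases h2 : A = Y
            · exact Or.inr h2
            · rw [hψid A h1 h2] at hu; exact absurd hu (hGnotu A hA)
        have hψmem : ∀ v, v ≠ u → ∀ A, (v ∈ ψ A ↔ v ∈ A) := by
          intro v hvu A
          by_cases h1 : A = W
          · subst h1; rw [hψW]; simp [hvu]
          · by_cases h2 : A = Y
            · subst h2; rw [hψY]; simp [hvu]
            · rw [hψid A h1 h2]
        set G' := G.image ψ with hG'def
        have hψmemG : ∀ A ∈ G, ψ A ∈ G' := fun A hA => mem_image_of_mem ψ hA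
        have hWne : ∀ y ∈ S, ({y} : Finset V) ≠ W := by
          intro y hy h
          exact hWs ⟨y, hy, h.symm⟩
        have hG'V : ∀ X ∈ G', X ⊆ V' := by
          intro X hX
          obtain ⟨A, hA, rfl⟩ := mem_image.mp hX
          intro x hx
          by_cases hxu : x = u
          · exact hxu ▸ huV
          · exact hV₂V (hGV A hA ((hψmem x hxu A).mp hx))
        have hG'cov : ∀ v ∈ V', ∃ X ∈ G', v ∈ X := by
          intro v hv
          by_cases hvu : v = u
          · exact ⟨ψ W, hψmemG W hWG, by rw [hψW, hvu]; exact mem_insert_self u _⟩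
          · obtain ⟨Z, hZ, hvZ⟩ := hGcov v (mem_erase.mpr ⟨hvu, hv⟩)
            exact ⟨ψ Z, hψmemG Z hZ, hψsub Z hvZ⟩
        have hG'blue : ∀ x ∈ V', ∀ y ∈ V', s(x,y) ∈ blue → ∃ X ∈ G', x ∈ X ∧ y ∈ X := by
          have key : ∀ y ∈ V', y ≠ u → s(u,y) ∈ blue → ∃ X ∈ G', u ∈ X ∧ y ∈ X := by
            intro y hy hyu hb
            have hy₂ : y ∈ V₂ := mem_erase.mpr ⟨hyu, hy⟩
            by_cases hyS : y ∈ S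
            · exact ⟨ψ W, hψmemG W hWG, by rw [hψW]; exact mem_insert_self u _,
                by rw [hψW]; exact mem_insert_of_mem (hSW hyS)⟩
            · have hyD : y ∈ D.erase u := hbluey y hy₂ hyS hb
              exact ⟨ψ Y, hψmemG Y hYG, by rw [hψY]; exact mem_insert_self u _,
                by rw [hψY]; exact mem_insert_of_mem (hD'Y hyD)⟩
          intro x hx y hy hb
          by_cases hxu : x = u <;> by_cases hyu : y = u
          · exact absurd (Sym2.mk_isDiag_iff.mpr (hxu.trans hyu.symm))
              (hnd _ (mem_union_left _ hb))
          · subst hxu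
            exact key y hy hyu hb
          · subst hyu
            obtain ⟨X, hX, h1, h2⟩ := key x hx hxu (Sym2.eq_swap ▸ hb)
            exact ⟨X, hX, h2, h1⟩
          · obtain ⟨Z, hZ, hxZ, hyZ⟩ := hGblue x (mem_erase.mpr ⟨hxu, hx⟩) y
              (mem_erase.mpr ⟨hyu, hy⟩) hb
            exact ⟨ψ Z, hψmemG Z hZ, hψsub Z hxZ, hψsub Z hyZ⟩
        have hG'sing : ∀ s ∈ S, ({s} : Finset V) ∈ G' := by
          intro s hs
          have h1 : ψ {s} = {s} := hψid _ (hWne s hs) (hYnotsing s hs)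
          exact h1 ▸ hψmemG _ (hGsing s hs)
        have hG'red : ∀ x ∈ V', ∀ y ∈ V', s(x,y) ∈ red →
            ∃ X ∈ G', ∃ X' ∈ G', X ≠ X' ∧ x ∈ X ∧ y ∈ X' := by
          have key : ∀ y ∈ V', y ≠ u → s(u,y) ∈ red →
              ∃ X ∈ G', ∃ X' ∈ G', X ≠ X' ∧ u ∈ X ∧ y ∈ X' := by
            intro y hy hyu hr
            have hy₂ : y ∈ V₂ := mem_erase.mpr ⟨hyu, hy⟩
            by_cases hyS : y ∈ S
            · refine ⟨ψ Y, hψmemG Y hYG, {y}, hG'sing y hyS, ?_,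
                by rw [hψY]; exact mem_insert_self u _, mem_singleton_self y⟩
              intro h
              have hu : u ∈ ({y} : Finset V) := h ▸ (by rw [hψY]; exact mem_insert_self u _)
              exact huS ((mem_singleton.mp hu) ▸ hyS)
            · obtain ⟨C, hC, hCD, hyC⟩ := hredy y hy₂ hyS hr
              have hZy : g₂ C ∈ G := (hg₂ C (hCmem𝒞₂ C hC hCD)).1
              refine ⟨ψ Y, hψmemG Y hYG, ψ (g₂ C), hψmemG _ hZy, ?_,
                by rw [hψY]; exact mem_insert_self u _,
                hψsub _ ((hg₂ C (hCmem𝒞₂ C hC hCD)).2 hyC)⟩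
              intro h
              exact hgCY C hC hCD (hψinj _ hZy _ hYG h.symm)
          intro x hx y hy hr
          by_cases hxu : x = u <;> by_cases hyu : y = u
          · exact absurd (Sym2.mk_isDiag_iff.mpr (hxu.trans hyu.symm))
              (hnd _ (mem_union_right _ hr))
          · subst hxu; exact key y hy hyu hr
          · subst hyu
            obtain ⟨X, hX, X', hX', hne', h1, h2⟩ := key x hx hxu (Sym2.eq_swap ▸ hr)
            exact ⟨X', hX', X, hX, hne'.symm, h2, h1⟩
          · obtain ⟨A, hA, B, hB, hAB, hxA, hyB⟩ := hGred x (mem_erase.mpr ⟨hxu, hx⟩) y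
              (mem_erase.mpr ⟨hyu, hy⟩) hr
            exact ⟨ψ A, hψmemG A hA, ψ B, hψmemG B hB,
              fun h => hAB (hψinj A hA B hB h), hψsub A hxA, hψsub B hyB⟩
        have hG'S : ∃ X ∈ G', S ⊆ X := by
          refine ⟨ψ W, hψmemG W hWG, ?_⟩
          rw [hψW]
          exact hSW.trans (Finset.subset_insert u W)
        have hG'cost : (∑ v ∈ V', ((G'.filter fun X => v ∈ X).card - 1)) ≤
            (∑ v ∈ V₂, ((G.filter fun X => v ∈ X).card - 1)) + 1 := by
          have e1 : (∑ v ∈ V₂, ((G'.filter fun X => v ∈ X).card - 1)) +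
              ((G'.filter fun X => u ∈ X).card - 1) =
              ∑ v ∈ V', ((G'.filter fun X => v ∈ X).card - 1) :=
            Finset.sum_erase_add V' _ huV
          have hcu : (G'.filter fun X => u ∈ X).card ≤ 2 := by
            rw [hG'def, count_image_eq hψinj]
            have hsub : (G.filter fun A => u ∈ ψ A) ⊆ {W, Y} := by
              intro A hA
              obtain ⟨hAG, hAu⟩ := mem_filter.mp hA
              rcases hψu A hAG hAu with h | h
              · rw [h]; exact mem_insert_self _ _
              · rw [h]; exact mem_insert_of_mem (mem_singleton_self Y)
            refine le_trans (card_le_card hsub) ?_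
            exact le_trans (card_insert_le _ _) (by simp)
          have e3 : (∑ v ∈ V₂, ((G'.filter fun X => v ∈ X).card - 1)) =
              (∑ v ∈ V₂, ((G.filter fun X => v ∈ X).card - 1)) := by
            apply Finset.sum_congr rfl
            intro v hv
            rw [hG'def, count_image_eq hψinj]
            congr 2
            apply Finset.filter_congr
            intro A _
            simp [hψmem v (mem_erase.mp hv).1 A]
          omega
        set g' : Finset V → Finset V := fun C => if C = D then ψ Y else ψ (g₂ C) with hg'def
        have hg'D : g' D = ψ Y := by simp [hg'def]
        have hg'C : ∀ C, C ≠ D → g' C = ψ (g₂ C) := by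
          intro C h; simp [hg'def, h]
        refine ⟨G', hG'V, hG'cov, hG'blue, hG'red, hG'S, hG'sing, ?_, g', ?_, ?_⟩
        · calc (∑ v ∈ V', ((G'.filter fun X => v ∈ X).card - 1)) ≤
              (∑ v ∈ V₂, ((G.filter fun X => v ∈ X).card - 1)) + 1 := hG'cost
            _ ≤ (∑ v ∈ V₂, ((F₂.filter fun X => v ∈ X).card - 1)) + 1 :=
              Nat.add_le_add_right hGcost 1
            _ ≤ ∑ v ∈ V', ((F.filter fun X => v ∈ X).card - 1) := hcost₂
        · intro C hC
          by_cases hCD : C = D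
          · subst hCD
            refine ⟨hg'D ▸ hψmemG Y hYG, ?_⟩
            rw [hg'D, hψY]
            exact hDsubuY
          · rw [hg'C C hCD]
            exact ⟨hψmemG _ (hg₂ C (hCmem𝒞₂ C hC hCD)).1,
              ((hg₂ C (hCmem𝒞₂ C hC hCD)).2).trans (hψsub _)⟩
        · intro C hC C' hC' hCC'
          by_cases h1 : C = D <;> by_cases h2 : C' = D
          · exact absurd (h1.trans h2.symm) hCC'
          · subst h1
            rw [hg'D, hg'C C' h2]
            intro h
            exact hgCY C' hC' h2 (hψinj _ (hg₂ C' (hCmem𝒞₂ C' hC' h2)).1 _ hYG h.symm)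
          · subst h2
            rw [hg'D, hg'C C h1]
            intro h
            exact hgCY C hC h1 (hψinj _ (hg₂ C (hCmem𝒞₂ C hC h1)).1 _ hYG h)
          · rw [hg'C C h1, hg'C C' h2]
            intro h
            exact hg₂inj C (hCmem𝒞₂ C hC h1) C' (hCmem𝒞₂ C' hC' h2) hCC'
              (hψinj _ (hg₂ C (hCmem𝒞₂ C hC h1)).1 _ (hg₂ C' (hCmem𝒞₂ C' hC' h2)).1 h)
    · -- D = {u}
      have hDeq : D = {u} := by
        have h1 : D.card ≤ 1 := by omega
        have h2 : D.card = 1 := le_antisymm h1 (card_pos.mpr ⟨u, huD⟩)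
        obtain ⟨a, ha⟩ := Finset.card_eq_one.mp h2
        rw [ha] at huD ⊢
        rw [mem_singleton.mp huD]
      have hDerase_empty : D.erase u = ∅ := by rw [hDeq]; simp
      by_cases hWs : ∃ s ∈ S, W = {s}
      · -- B2 : W = {s₀}
        obtain ⟨s₀, hs₀S, hWs₀⟩ := hWs
        have hSeq : S = {s₀} := by
          apply le_antisymm
          · rw [← hWs₀]; exact hSW
          · simp [hs₀S]
        have hs₀u : s₀ ≠ u := fun h => huS (h ▸ hs₀S)
        set K : Finset V := insert u {s₀} with hKdef
        have hKnotG : K ∉ G := fun h => hGnotu K h (mem_insert_self u _)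
        set G' := insert K G with hG'def
        have hGsubG' : ∀ A ∈ G, A ∈ G' := fun A hA => mem_insert_of_mem hA
        have hKG' : K ∈ G' := mem_insert_self K G
        have hG'V : ∀ X ∈ G', X ⊆ V' := by
          intro X hX
          rcases mem_insert.mp hX with rfl | hX
          · intro x hx
            rcases mem_insert.mp hx with rfl | hx
            · exact huV
            · rw [mem_singleton.mp hx]; exact hSV hs₀S
          · exact (hGV X hX).trans hV₂V
        have hG'cov : ∀ v ∈ V', ∃ X ∈ G', v ∈ X := by
          intro v hv
          by_cases hvu : v = u
          · exact ⟨K, hKG', hvu ▸ mem_insert_self u _⟩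
          · obtain ⟨Z, hZ, hvZ⟩ := hGcov v (mem_erase.mpr ⟨hvu, hv⟩)
            exact ⟨Z, hGsubG' Z hZ, hvZ⟩
        have hG'blue : ∀ x ∈ V', ∀ y ∈ V', s(x,y) ∈ blue → ∃ X ∈ G', x ∈ X ∧ y ∈ X := by
          have key : ∀ y ∈ V', y ≠ u → s(u,y) ∈ blue → ∃ X ∈ G', u ∈ X ∧ y ∈ X := by
            intro y hy hyu hb
            have hy₂ : y ∈ V₂ := mem_erase.mpr ⟨hyu, hy⟩
            by_cases hyS : y ∈ S
            · have hys : y = s₀ := by rw [hSeq] at hyS; exact mem_singleton.mp hyS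
              exact ⟨K, hKG', mem_insert_self u _,
                by rw [hys]; exact mem_insert_of_mem (mem_singleton_self s₀)⟩
            · exact absurd (hbluey y hy₂ hyS hb) (by rw [hDerase_empty]; simp)
          intro x hx y hy hb
          by_cases hxu : x = u <;> by_cases hyu : y = u
          · exact absurd (Sym2.mk_isDiag_iff.mpr (hxu.trans hyu.symm))
              (hnd _ (mem_union_left _ hb))
          · subst hxu; exact key y hy hyu hb
          · subst hyu
            obtain ⟨X, hX, h1, h2⟩ := key x hx hxu (Sym2.eq_swap ▸ hb)
            exact ⟨X, hX, h2, h1⟩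
          · obtain ⟨Z, hZ, hxZ, hyZ⟩ := hGblue x (mem_erase.mpr ⟨hxu, hx⟩) y
              (mem_erase.mpr ⟨hyu, hy⟩) hb
            exact ⟨Z, hGsubG' Z hZ, hxZ, hyZ⟩
        have hG'sing : ∀ s ∈ S, ({s} : Finset V) ∈ G' := fun s hs => hGsubG' _ (hGsing s hs)
        have hG'red : ∀ x ∈ V', ∀ y ∈ V', s(x,y) ∈ red →
            ∃ X ∈ G', ∃ X' ∈ G', X ≠ X' ∧ x ∈ X ∧ y ∈ X' := by
          have key : ∀ y ∈ V', y ≠ u → s(u,y) ∈ red →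
              ∃ X ∈ G', ∃ X' ∈ G', X ≠ X' ∧ u ∈ X ∧ y ∈ X' := by
            intro y hy hyu hr
            have hy₂ : y ∈ V₂ := mem_erase.mpr ⟨hyu, hy⟩
            by_cases hyS : y ∈ S
            · refine ⟨K, hKG', {y}, hG'sing y hyS, ?_, mem_insert_self u _, mem_singleton_self y⟩
              intro h
              have hu : u ∈ ({y} : Finset V) := h ▸ mem_insert_self u _
              exact hyu (mem_singleton.mp hu).symm
            · obtain ⟨C, hC, hCD, hyC⟩ := hredy y hy₂ hyS hr
              have hC₂ : C ∈ 𝒞₂ := hCmem𝒞₂ C hC hCD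
              refine ⟨K, hKG', g₂ C, hGsubG' _ (hg₂ C hC₂).1, ?_,
                mem_insert_self u _, (hg₂ C hC₂).2 hyC⟩
              intro h
              exact hGnotu _ (hg₂ C hC₂).1 (h ▸ mem_insert_self u _)
          intro x hx y hy hr
          by_cases hxu : x = u <;> by_cases hyu : y = u
          · exact absurd (Sym2.mk_isDiag_iff.mpr (hxu.trans hyu.symm))
              (hnd _ (mem_union_right _ hr))
          · subst hxu; exact key y hy hyu hr
          · subst hyu
            obtain ⟨X, hX, X', hX', hne', h1, h2⟩ := key x hx hxu (Sym2.eq_swap ▸ hr)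
            exact ⟨X', hX', X, hX, hne'.symm, h2, h1⟩
          · obtain ⟨A, hA, B, hB, hAB, hxA, hyB⟩ := hGred x (mem_erase.mpr ⟨hxu, hx⟩) y
              (mem_erase.mpr ⟨hyu, hy⟩) hr
            exact ⟨A, hGsubG' A hA, B, hGsubG' B hB, hAB, hxA, hyB⟩
        have hG'S : ∃ X ∈ G', S ⊆ X := ⟨W, hGsubG' W hWG, hSW⟩
        have hG'cost : (∑ v ∈ V', ((G'.filter fun X => v ∈ X).card - 1)) ≤
            (∑ v ∈ V₂, ((G.filter fun X => v ∈ X).card - 1)) + 1 := by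
          have hfilt : ∀ v, (G'.filter fun X => v ∈ X) =
              if v ∈ K then insert K (G.filter fun X => v ∈ X)
              else (G.filter fun X => v ∈ X) := by
            intro v
            rw [hG'def, Finset.filter_insert]
          have e1 : (∑ v ∈ V₂, ((G'.filter fun X => v ∈ X).card - 1)) +
              ((G'.filter fun X => u ∈ X).card - 1) =
              ∑ v ∈ V', ((G'.filter fun X => v ∈ X).card - 1) :=
            Finset.sum_erase_add V' _ huV
          have hcu : (G'.filter fun X => u ∈ X).card ≤ 1 := by
            rw [hfilt u, if_pos (mem_insert_self u _)]
            have hempty : (G.filter fun X => u ∈ X) = ∅ := by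
              rw [Finset.filter_eq_empty_iff]
              exact fun X hX => hGnotu X hX
            rw [hempty]
            simp
          have hs₀V₂ : s₀ ∈ V₂ := hSV₂ hs₀S
          have hsplit2 : ∀ (H : Finset (Finset V)),
              (∑ v ∈ V₂, ((H.filter fun X => v ∈ X).card - 1)) =
              (∑ v ∈ V₂.erase s₀, ((H.filter fun X => v ∈ X).card - 1)) +
              ((H.filter fun X => s₀ ∈ X).card - 1) :=
            fun H => (Finset.sum_erase_add V₂ _ hs₀V₂).symm
          have heq : ∀ v ∈ V₂.erase s₀,
              (G'.filter fun X => v ∈ X).card = (G.filter fun X => v ∈ X).card := by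
            intro v hv
            have hvs : v ≠ s₀ := (mem_erase.mp hv).1
            have hvu : v ≠ u := (mem_erase.mp (mem_of_mem_erase hv)).1
            rw [hfilt v, if_neg]
            intro hvK
            rcases mem_insert.mp hvK with h | h
            · exact hvu h
            · exact hvs (mem_singleton.mp h)
          have hs₀count : (G'.filter fun X => s₀ ∈ X).card ≤
              (G.filter fun X => s₀ ∈ X).card + 1 := by
            rw [hfilt s₀, if_pos (mem_insert_of_mem (mem_singleton_self s₀))]
            exact card_insert_le _ _
          have e2 := hsplit2 G'
          have e3 := hsplit2 G
          have e4 : (∑ v ∈ V₂.erase s₀, ((G'.filter fun X => v ∈ X).card - 1)) =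
              (∑ v ∈ V₂.erase s₀, ((G.filter fun X => v ∈ X).card - 1)) :=
            Finset.sum_congr rfl (fun v hv => by rw [heq v hv])
          omega
        set g' : Finset V → Finset V := fun C => if C = D then K else g₂ C with hg'def
        have hg'D : g' D = K := by simp [hg'def]
        have hg'C : ∀ C, C ≠ D → g' C = g₂ C := by intro C h; simp [hg'def, h]
        refine ⟨G', hG'V, hG'cov, hG'blue, hG'red, hG'S, hG'sing, ?_, g', ?_, ?_⟩
        · calc (∑ v ∈ V', ((G'.filter fun X => v ∈ X).card - 1)) ≤
              (∑ v ∈ V₂, ((G.filter fun X => v ∈ X).card - 1)) + 1 := hG'cost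
            _ ≤ (∑ v ∈ V₂, ((F₂.filter fun X => v ∈ X).card - 1)) + 1 :=
              Nat.add_le_add_right hGcost 1
            _ ≤ ∑ v ∈ V', ((F.filter fun X => v ∈ X).card - 1) := hcost₂
        · intro C hC
          by_cases hCD : C = D
          · subst hCD
            refine ⟨hg'D ▸ hKG', ?_⟩
            rw [hg'D, hDeq]
            simp [hKdef]
          · rw [hg'C C hCD]
            exact ⟨hGsubG' _ (hg₂ C (hCmem𝒞₂ C hC hCD)).1, (hg₂ C (hCmem𝒞₂ C hC hCD)).2⟩
        · intro C hC C' hC' hCC'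
          by_cases h1 : C = D <;> by_cases h2 : C' = D
          · exact absurd (h1.trans h2.symm) hCC'
          · subst h1
            rw [hg'D, hg'C C' h2]
            intro h
            exact hGnotu _ (hg₂ C' (hCmem𝒞₂ C' hC' h2)).1 (h ▸ mem_insert_self u _)
          · subst h2
            rw [hg'D, hg'C C h1]
            intro h
            exact hGnotu _ (hg₂ C (hCmem𝒞₂ C hC h1)).1 (h.symm ▸ mem_insert_self u _)
          · rw [hg'C C h1, hg'C C' h2]
            exact hg₂inj C (hCmem𝒞₂ C hC h1) C' (hCmem𝒞₂ C' hC' h2) hCC'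
      · -- B1 : W not an S-singleton
        set ψ : Finset V → Finset V := fun A => if A = W then insert u W else A with hψdef
        have hψW : ψ W = insert u W := by simp [hψdef]
        have hψid : ∀ A, A ≠ W → ψ A = A := by intro A h; simp [hψdef, h]
        have hψsub : ∀ A, A ⊆ ψ A := by
          intro A
          by_cases h : A = W
          · subst h; rw [hψW]; exact Finset.subset_insert _ _
          · rw [hψid A h]
        have hψerase : ∀ A ∈ G, (ψ A).erase u = A := by
          intro A hA
          by_cases h : A = W
          · subst h; rw [hψW, Finset.erase_insert huW]
          · rw [hψid A h]; exact Finset.erase_eq_of_notMem (hGnotu A hA)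
        have hψinj : ∀ A ∈ G, ∀ B ∈ G, ψ A = ψ B → A = B := by
          intro A hA B hB h
          rw [← hψerase A hA, h, hψerase B hB]
        have hψu : ∀ A ∈ G, u ∈ ψ A → A = W := by
          intro A hA hu
          by_cases h : A = W
          · exact h
          · rw [hψid A h] at hu; exact absurd hu (hGnotu A hA)
        have hψmem : ∀ v, v ≠ u → ∀ A, (v ∈ ψ A ↔ v ∈ A) := by
          intro v hvu A
          by_cases h : A = W
          · subst h; rw [hψW]; simp [hvu]
          · rw [hψid A h]
        set G' := insert {u} (G.image ψ) with hG'def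
        have hψmemG : ∀ A ∈ G, ψ A ∈ G' := fun A hA =>
          mem_insert_of_mem (mem_image_of_mem ψ hA)
        have huG' : ({u} : Finset V) ∈ G' := mem_insert_self _ _
        have hWne : ∀ y ∈ S, ({y} : Finset V) ≠ W := by
          intro y hy h
          exact hWs ⟨y, hy, h.symm⟩
        have hG'V : ∀ X ∈ G', X ⊆ V' := by
          intro X hX
          rcases mem_insert.mp hX with rfl | hX
          · simpa using huV
          · obtain ⟨A, hA, rfl⟩ := mem_image.mp hX
            intro x hx
            by_cases hxu : x = u
            · exact hxu ▸ huV
            · exact hV₂V (hGV A hA ((hψmem x hxu A).mp hx))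
        have hG'cov : ∀ v ∈ V', ∃ X ∈ G', v ∈ X := by
          intro v hv
          by_cases hvu : v = u
          · exact ⟨{u}, huG', by simp [hvu]⟩
          · obtain ⟨Z, hZ, hvZ⟩ := hGcov v (mem_erase.mpr ⟨hvu, hv⟩)
            exact ⟨ψ Z, hψmemG Z hZ, hψsub Z hvZ⟩
        have hG'blue : ∀ x ∈ V', ∀ y ∈ V', s(x,y) ∈ blue → ∃ X ∈ G', x ∈ X ∧ y ∈ X := by
          have key : ∀ y ∈ V', y ≠ u → s(u,y) ∈ blue → ∃ X ∈ G', u ∈ X ∧ y ∈ X := by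
            intro y hy hyu hb
            have hy₂ : y ∈ V₂ := mem_erase.mpr ⟨hyu, hy⟩
            by_cases hyS : y ∈ S
            · exact ⟨ψ W, hψmemG W hWG, by rw [hψW]; exact mem_insert_self u _,
                by rw [hψW]; exact mem_insert_of_mem (hSW hyS)⟩
            · exact absurd (hbluey y hy₂ hyS hb) (by rw [hDerase_empty]; simp)
          intro x hx y hy hb
          by_cases hxu : x = u <;> by_cases hyu : y = u
          · exact absurd (Sym2.mk_isDiag_iff.mpr (hxu.trans hyu.symm))
              (hnd _ (mem_union_left _ hb))
          · subst hxu; exact key y hy hyu hb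
          · subst hyu
            obtain ⟨X, hX, h1, h2⟩ := key x hx hxu (Sym2.eq_swap ▸ hb)
            exact ⟨X, hX, h2, h1⟩
          · obtain ⟨Z, hZ, hxZ, hyZ⟩ := hGblue x (mem_erase.mpr ⟨hxu, hx⟩) y
              (mem_erase.mpr ⟨hyu, hy⟩) hb
            exact ⟨ψ Z, hψmemG Z hZ, hψsub Z hxZ, hψsub Z hyZ⟩
        have hG'sing : ∀ s ∈ S, ({s} : Finset V) ∈ G' := by
          intro s hs
          have h1 : ψ {s} = {s} := hψid _ (hWne s hs)
          exact h1 ▸ hψmemG _ (hGsing s hs)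
        have hG'red : ∀ x ∈ V', ∀ y ∈ V', s(x,y) ∈ red →
            ∃ X ∈ G', ∃ X' ∈ G', X ≠ X' ∧ x ∈ X ∧ y ∈ X' := by
          have key : ∀ y ∈ V', y ≠ u → s(u,y) ∈ red →
              ∃ X ∈ G', ∃ X' ∈ G', X ≠ X' ∧ u ∈ X ∧ y ∈ X' := by
            intro y hy hyu hr
            have hy₂ : y ∈ V₂ := mem_erase.mpr ⟨hyu, hy⟩
            by_cases hyS : y ∈ S
            · refine ⟨{u}, huG', {y}, hG'sing y hyS, ?_, mem_singleton_self u,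
                mem_singleton_self y⟩
              intro h
              exact hyu (Finset.singleton_injective h).symm
            · obtain ⟨C, hC, hCD, hyC⟩ := hredy y hy₂ hyS hr
              have hC₂ : C ∈ 𝒞₂ := hCmem𝒞₂ C hC hCD
              refine ⟨{u}, huG', ψ (g₂ C), hψmemG _ (hg₂ C hC₂).1, ?_,
                mem_singleton_self u, hψsub _ ((hg₂ C hC₂).2 hyC)⟩
              intro h
              have hy' : y ∈ ({u} : Finset V) := h ▸ hψsub _ ((hg₂ C hC₂).2 hyC)
              exact hyu (mem_singleton.mp hy')
          intro x hx y hy hr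
          by_cases hxu : x = u <;> by_cases hyu : y = u
          · exact absurd (Sym2.mk_isDiag_iff.mpr (hxu.trans hyu.symm))
              (hnd _ (mem_union_right _ hr))
          · subst hxu; exact key y hy hyu hr
          · subst hyu
            obtain ⟨X, hX, X', hX', hne', h1, h2⟩ := key x hx hxu (Sym2.eq_swap ▸ hr)
            exact ⟨X', hX', X, hX, hne'.symm, h2, h1⟩
          · obtain ⟨A, hA, B, hB, hAB, hxA, hyB⟩ := hGred x (mem_erase.mpr ⟨hxu, hx⟩) y
              (mem_erase.mpr ⟨hyu, hy⟩) hr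
            exact ⟨ψ A, hψmemG A hA, ψ B, hψmemG B hB,
              fun h => hAB (hψinj A hA B hB h), hψsub A hxA, hψsub B hyB⟩
        have hG'S : ∃ X ∈ G', S ⊆ X := by
          refine ⟨ψ W, hψmemG W hWG, ?_⟩
          rw [hψW]
          exact hSW.trans (Finset.subset_insert u W)
        have hG'cost : (∑ v ∈ V', ((G'.filter fun X => v ∈ X).card - 1)) ≤
            (∑ v ∈ V₂, ((G.filter fun X => v ∈ X).card - 1)) + 1 := by
          have hfilt : ∀ v, (G'.filter fun X => v ∈ X) =
              if v ∈ ({u} : Finset V) then insert {u} ((G.image ψ).filter fun X => v ∈ X)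
              else ((G.image ψ).filter fun X => v ∈ X) := by
            intro v
            rw [hG'def, Finset.filter_insert]
          have e1 : (∑ v ∈ V₂, ((G'.filter fun X => v ∈ X).card - 1)) +
              ((G'.filter fun X => u ∈ X).card - 1) =
              ∑ v ∈ V', ((G'.filter fun X => v ∈ X).card - 1) :=
            Finset.sum_erase_add V' _ huV
          have hcu : (G'.filter fun X => u ∈ X).card ≤ 2 := by
            rw [hfilt u, if_pos (mem_singleton_self u)]
            refine le_trans (card_insert_le _ _) ?_
            have h2 : ((G.image ψ).filter fun X => u ∈ X).card ≤ 1 := by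
              rw [count_image_eq hψinj]
              have hsub : (G.filter fun A => u ∈ ψ A) ⊆ {W} := by
                intro A hA
                obtain ⟨hAG, hAu⟩ := mem_filter.mp hA
                simp [hψu A hAG hAu]
              exact le_trans (card_le_card hsub) (by simp)
            omega
          have e3 : (∑ v ∈ V₂, ((G'.filter fun X => v ∈ X).card - 1)) =
              (∑ v ∈ V₂, ((G.filter fun X => v ∈ X).card - 1)) := by
            apply Finset.sum_congr rfl
            intro v hv
            have hvu : v ≠ u := (mem_erase.mp hv).1
            rw [hfilt v, if_neg (by simp [hvu]), count_image_eq hψinj]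
            congr 2
            apply Finset.filter_congr
            intro A _
            simp [hψmem v hvu A]
          omega
        set g' : Finset V → Finset V := fun C => if C = D then {u} else ψ (g₂ C) with hg'def
        have hg'D : g' D = {u} := by simp [hg'def]
        have hg'C : ∀ C, C ≠ D → g' C = ψ (g₂ C) := by intro C h; simp [hg'def, h]
        have hg'mem : ∀ C ∈ 𝒞, C ≠ D → (ψ (g₂ C) ∈ G' ∧ C ⊆ ψ (g₂ C)) := by
          intro C hC hCD
          exact ⟨hψmemG _ (hg₂ C (hCmem𝒞₂ C hC hCD)).1,
            ((hg₂ C (hCmem𝒞₂ C hC hCD)).2).trans (hψsub _)⟩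
        have hg'ne : ∀ C ∈ 𝒞, C ≠ D → ({u} : Finset V) ≠ ψ (g₂ C) := by
          intro C hC hCD h
          obtain ⟨c, hc⟩ := hne C hC
          have hcu : c ≠ u := fun hcu => hu_notC C hC hCD (hcu ▸ hc)
          have hcmem : c ∈ ψ (g₂ C) := hψsub _ ((hg₂ C (hCmem𝒞₂ C hC hCD)).2 hc)
          rw [← h] at hcmem
          exact hcu (mem_singleton.mp hcmem)
        refine ⟨G', hG'V, hG'cov, hG'blue, hG'red, hG'S, hG'sing, ?_, g', ?_, ?_⟩
        · calc (∑ v ∈ V', ((G'.filter fun X => v ∈ X).card - 1)) ≤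
              (∑ v ∈ V₂, ((G.filter fun X => v ∈ X).card - 1)) + 1 := hG'cost
            _ ≤ (∑ v ∈ V₂, ((F₂.filter fun X => v ∈ X).card - 1)) + 1 :=
              Nat.add_le_add_right hGcost 1
            _ ≤ ∑ v ∈ V', ((F.filter fun X => v ∈ X).card - 1) := hcost₂
        · intro C hC
          by_cases hCD : C = D
          · subst hCD
            exact ⟨hg'D ▸ huG', by rw [hg'D, hDeq]⟩
          · rw [hg'C C hCD]
            exact hg'mem C hC hCD
        · intro C hC C' hC' hCC'
          by_cases h1 : C = D <;> by_cases h2 : C' = D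
          · exact absurd (h1.trans h2.symm) hCC'
          · subst h1
            rw [hg'D, hg'C C' h2]
            exact hg'ne C' hC' h2
          · subst h2
            rw [hg'D, hg'C C h1]
            exact fun h => hg'ne C hC h1 h.symm
          · rw [hg'C C h1, hg'C C' h2]
            intro h
            exact hg₂inj C (hCmem𝒞₂ C hC h1) C' (hCmem𝒞₂ C' hC' h2) hCC'
              (hψinj _ (hg₂ C (hCmem𝒞₂ C hC h1)).1 _ (hg₂ C' (hCmem𝒞₂ C' hC' h2)).1 h)

end Master


/-- If `V ∖ S` is partitioned into blue cliques `𝒞` with all edges between distinct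
cliques red, then any simple solution of cost `c` can be replaced by a simple solution
of cost at most `c` containing, for each clique `C ∈ 𝒞`, a cluster `X_C ⊇ C`, with
distinct cliques receiving distinct clusters. -/
theorem stmt17 (V : Type) [Fintype V] [DecidableEq V]
    (blue red : Finset (Sym2 V))
    (hdisj : Disjoint blue red) (hnd : ∀ e ∈ blue ∪ red, ¬ e.IsDiag)
    (hcomp : ∀ u v : V, u ≠ v → s(u,v) ∈ blue ∨ s(u,v) ∈ red)
    (S : Finset V) (𝒞 : Finset (Finset V))
    (hne : ∀ C ∈ 𝒞, C.Nonempty)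
    (hdisjC : ∀ C ∈ 𝒞, ∀ C' ∈ 𝒞, C ≠ C' → Disjoint C C')
    (hpart : ∀ v : V, v ∉ S ↔ ∃ C ∈ 𝒞, v ∈ C)
    (hclique : ∀ C ∈ 𝒞, ∀ u ∈ C, ∀ v ∈ C, u ≠ v → s(u,v) ∈ blue)
    (hbetween : ∀ C ∈ 𝒞, ∀ C' ∈ 𝒞, C ≠ C' → ∀ u ∈ C, ∀ v ∈ C', s(u,v) ∈ red)
    (c : ℕ) (F : Finset (Finset V)) (hF : SimpleSol blue red S F) (hc : clCost F = c) :
    ∃ F' : Finset (Finset V), SimpleSol blue red S F' ∧ clCost F' ≤ c ∧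
      ∃ g : Finset V → Finset V,
        (∀ C ∈ 𝒞, g C ∈ F' ∧ C ⊆ g C) ∧
        ∀ C ∈ 𝒞, ∀ C' ∈ 𝒞, C ≠ C' → g C ≠ g C' := by
  classical
  obtain ⟨⟨hcov, hblue, hred⟩, hScont, hsing⟩ := hF
  obtain ⟨F', hF'V, hF'cov, hF'blue, hF'red, hF'S, hF'sing, hF'cost, g, hg, hginj⟩ :=
    master blue red S hdisj hnd ((Finset.univ \ S).card) Finset.univ 𝒞 F rfl
      (Finset.subset_univ S) hne (fun C _ => Finset.subset_univ C) hdisjC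
      (fun v _ => hpart v) hclique hbetween (fun X _ => Finset.subset_univ X)
      (fun v _ => hcov v) (fun x _ y _ => hblue x y) (fun x _ y _ => hred x y)
      hScont hsing
  refine ⟨F', ⟨⟨fun v => hF'cov v (Finset.mem_univ v),
    fun x y hb => hF'blue x (Finset.mem_univ x) y (Finset.mem_univ y) hb,
    fun x y hr => hF'red x (Finset.mem_univ x) y (Finset.mem_univ y) hr⟩,
    hF'S, hF'sing⟩, ?_, g, hg, hginj⟩
  rw [← hc]
  exact hF'cost
end
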